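/- arXiv:math/0401102 — 12 statements merged into one kernel-verified Lean document; each statement's English description precedes it below -/
import Mathlib

section
/- If X is a set of infinite regular cardinality and f : X^n → X, then f is almost unary if and only if there exists a subset of {1,...,n} with n−1 elements which is not f-wild (for n ≥ 2). -/
/-!
An `(n-1)`-element set of coordinates is the complement `{k}ᶜ` of a single coordinate, and
fixing everything outside it just fixes `x k = c`. So `{k}ᶜ` fails to be wild exactly when every
image `f '' {x | x k = c}` is small, and these images are the least possible choice of `F` in
the definition of almost unary through `k`.
-/

open Cardinal

/-- `A` is `(f,a)`-wild: fixing the coordinates outside `A` according to `a`,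
the set of values of `f` has cardinality `|X|`. -/
def WildFor {X : Type*} {n : ℕ} (f : (Fin n → X) → X) (A : Set (Fin n)) (a : Fin n → X) : Prop :=
  #{y : X | ∃ x : Fin n → X, (∀ i, i ∉ A → x i = a i) ∧ f x = y} = #X

/-- `A` is `f`-wild: `(f,a)`-wild for some `a`. -/
def Wild {X : Type*} {n : ℕ} (f : (Fin n → X) → X) (A : Set (Fin n)) : Prop :=
  ∃ a : Fin n → X, WildFor f A a

theorem exists_small_bound_iff_forall_image_small {ι X : Type*} (f : (ι → X) → X) (k : ι) :
    (∃ F : X → Set X, (∀ x : X, #(F x) < #X) ∧ ∀ x : ι → X, f x ∈ F (x k)) ↔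
      ∀ c : X, #(f '' {x | x k = c}) < #X := by
  constructor
  · rintro ⟨F, hF, hfF⟩ c
    refine lt_of_le_of_lt (mk_le_mk_of_subset ?_) (hF c)
    rintro _ ⟨x, rfl, rfl⟩
    exact hfF x
  · exact fun h => ⟨fun c => f '' {x | x k = c}, h, fun x => ⟨x, rfl, rfl⟩⟩

theorem wildFor_iff {X : Type*} {n : ℕ} (f : (Fin n → X) → X) (A : Set (Fin n))
    (a : Fin n → X) : WildFor f A a ↔ #(f '' {x | ∀ i ∉ A, x i = a i}) = #X :=
  Iff.rfl

theorem wild_compl_singleton_iff {X : Type*} {n : ℕ} (f : (Fin n → X) → X) (k : Fin n) :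
    Wild f {k}ᶜ ↔ ∃ c : X, #(f '' {x | x k = c}) = #X := by
  simp only [Wild, wildFor_iff, Set.mem_compl_iff, Set.mem_singleton_iff, not_not, forall_eq]
  exact ⟨fun ⟨a, ha⟩ => ⟨a k, ha⟩, fun ⟨c, hc⟩ => ⟨fun _ => c, hc⟩⟩

theorem not_wild_compl_singleton_iff {X : Type*} {n : ℕ} (f : (Fin n → X) → X) (k : Fin n) :
    ¬ Wild f {k}ᶜ ↔ ∀ c : X, #(f '' {x | x k = c}) < #X := by
  simp only [wild_compl_singleton_iff, not_exists, (mk_set_le _).lt_iff_ne]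

theorem Finset.exists_coe_eq_compl_singleton_of_card_eq_pred {α : Type*} [Fintype α]
    [DecidableEq α] (hα : 1 ≤ Fintype.card α) {A : Finset α}
    (hA : A.card = Fintype.card α - 1) : ∃ k, (A : Set α) = {k}ᶜ := by
  obtain ⟨k, hk⟩ : ∃ k, Aᶜ = {k} := Finset.card_eq_one.mp (by rw [Finset.card_compl]; omega)
  exact ⟨k, by rw [← compl_compl A, hk, Finset.coe_compl, Finset.coe_singleton]⟩

theorem almostUnary_iff_exists_not_wild_general {X : Type*} {n : ℕ} (hn : 2 ≤ n)
    (f : (Fin n → X) → X) :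
    (∃ k : Fin n, ∃ F : X → Set X, (∀ x : X, #(F x) < #X) ∧
        ∀ x : Fin n → X, f x ∈ F (x k)) ↔
    (∃ A : Finset (Fin n), A.card = n - 1 ∧ ¬ Wild f (A : Set (Fin n))) := by
  simp only [exists_small_bound_iff_forall_image_small]
  constructor
  · rintro ⟨k, hk⟩
    refine ⟨{k}ᶜ, by simp [Finset.card_compl], ?_⟩
    rw [Finset.coe_compl, Finset.coe_singleton]
    exact (not_wild_compl_singleton_iff f k).mpr hk
  · rintro ⟨A, hA, hW⟩
    obtain ⟨k, hAk⟩ := Finset.exists_coe_eq_compl_singleton_of_card_eq_pred (A := A)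
      (by rw [Fintype.card_fin]; omega) (by rwa [Fintype.card_fin])
    rw [hAk] at hW
    exact ⟨k, (not_wild_compl_singleton_iff f k).mp hW⟩

/-- A function on a set of infinite regular cardinality is almost unary iff some
`(n-1)`-element set of coordinates is not `f`-wild. -/
theorem almostUnary_iff_exists_not_wild {X : Type*} {n : ℕ} (hn : 2 ≤ n)
    (hreg : (#X).IsRegular) (f : (Fin n → X) → X) :
    (∃ k : Fin n, ∃ F : X → Set X, (∀ x : X, #(F x) < #X) ∧
        ∀ x : Fin n → X, f x ∈ F (x k)) ↔
    (∃ A : Finset (Fin n), A.card = n - 1 ∧ ¬ Wild f (A : Set (Fin n))) :=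
  almostUnary_iff_exists_not_wild_general hn f
end

section
/- If f : X^n → X and every pair of f-wild subsets of {1,...,n} has nonempty intersection, then f preserves T_1, i.e., for all binary almost unary functions g_1,...,g_n, the composite f(g_1,...,g_n) is almost unary. -/
open Cardinal

/-- `f` is almost unary: bounded by a unary function of one fixed coordinate. -/
def AlmostUnary {X : Type*} [LT X] {n : ℕ} (f : (Fin n → X) → X) : Prop :=
  ∃ k : Fin n, ∃ F : X → X, ∀ x : Fin n → X, f x < F (x k)

/-!
Write `g i x < F i (x (k i))` with `k i ∈ {0, 1}`. Fixing the coordinate `x j = c` bounds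
every `g i` with `k i = j` by `u := max_i F i c`, so the values `f (g x)` with `x j = c` lie in
fewer than `|X|` slices of `f` in which only the coordinates of `{i | k i = j}ᶜ` vary. By
regularity they form a small, hence bounded, set unless `{i | k i = j}ᶜ` is wild. The sets
`{i | k i = 0}ᶜ` and `{i | k i = 1}ᶜ` are disjoint, so one of them is not wild, and the
corresponding `j` witnesses that `f (g_1, …, g_n)` is almost unary.
-/

theorem Cardinal.power_nat_lt_of_lt {a κ : Cardinal} (hκ : ℵ₀ ≤ κ) (ha : a < κ) (n : ℕ) :
    a ^ (n : Cardinal) < κ := by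
  induction n with
  | zero => simpa using one_lt_aleph0.trans_le hκ
  | succ m ih =>
    rw [Nat.cast_succ, power_add, power_one]
    exact mul_lt_of_lt hκ ih ha

theorem exists_forall_lt_of_mk_lt {X : Type*} [LinearOrder X]
    (hbdd : ∀ s : Set X, BddAbove s ↔ #s < #X) {s : Set X} (hs : #s < #X) :
    ∃ v, ∀ y ∈ s, y < v := by
  obtain ⟨u, hu⟩ := (hbdd s).mpr hs
  obtain ⟨v, hv⟩ : ∃ v, v ∉ Set.Iic u := by
    by_contra! h
    have hsmall := (hbdd (Set.Iic u)).mp bddAbove_Iic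
    rw [Set.eq_univ_of_forall h, mk_univ] at hsmall
    exact hsmall.false
  exact ⟨v, fun y hy => (hu hy).trans_lt (not_le.mp hv)⟩

section Wild

variable {X : Type*} {n : ℕ} {f : (Fin n → X) → X} {A : Set (Fin n)}

theorem mk_image_lt_of_not_wild (hreg : (#X).IsRegular) (hA : ¬ Wild f A) {S : Set X}
    (hS : #S < #X) (hne : S.Nonempty) :
    #{y | ∃ x : Fin n → X, (∀ i ∉ A, x i ∈ S) ∧ f x = y} < #X := by
  classical
  obtain ⟨s₀, hs₀⟩ := hne
  have hslice : ∀ a : Fin n → X,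
      #{y | ∃ x : Fin n → X, (∀ i, i ∉ A → x i = a i) ∧ f x = y} < #X :=
    fun a => (mk_set_le _).lt_of_ne fun h => hA ⟨a, h⟩
  have hindex : #(Fin n → S) < #X := by
    simpa using power_nat_lt_of_lt hreg.aleph0_le hS n
  have hcover : {y | ∃ x : Fin n → X, (∀ i ∉ A, x i ∈ S) ∧ f x = y} ⊆
      ⋃ t : Fin n → S, {y | ∃ x : Fin n → X, (∀ i, i ∉ A → x i = t i) ∧ f x = y} := by
    rintro y ⟨x, hxS, rfl⟩
    refine Set.mem_iUnion.mpr
      ⟨fun i => if hi : i ∈ A then ⟨s₀, hs₀⟩ else ⟨x i, hxS i hi⟩, x, fun i hi => ?_, rfl⟩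
    simp [hi]
  exact (mk_le_mk_of_subset hcover).trans_lt
    ((card_iUnion_lt_iff_forall_of_isRegular hreg hindex).mpr fun t => hslice _)

theorem exists_not_wild_compl_fiber
    (hwild : ∀ A B : Set (Fin n), Wild f A → Wild f B → (A ∩ B).Nonempty) (k : Fin n → Fin 2) :
    ∃ j, ¬ Wild f {i | k i = j}ᶜ := by
  by_contra! h
  obtain ⟨i, hi0, hi1⟩ := hwild _ _ (h 0) (h 1)
  have : k i ≠ 0 ∧ k i ≠ 1 := ⟨hi0, hi1⟩
  omega

end Wild

theorem mk_image_comp_lt_of_not_wild {X : Type*} [LinearOrder X] (hreg : (#X).IsRegular)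
    (hbdd : ∀ s : Set X, BddAbove s ↔ #s < #X) {n m : ℕ} {f : (Fin n → X) → X}
    {g : Fin n → (Fin m → X) → X} {k : Fin n → Fin m} {F : Fin n → X → X}
    (hg : ∀ i x, g i x < F i (x (k i))) {j : Fin m} (hj : ¬ Wild f {i | k i = j}ᶜ) (c : X) :
    #{y | ∃ x : Fin m → X, x j = c ∧ f (fun i => g i x) = y} < #X := by
  have : Nonempty X := ⟨c⟩
  obtain ⟨u, hu⟩ : BddAbove (Set.range fun i => F i c) := (Set.finite_range _).bddAbove
  refine lt_of_le_of_lt (mk_le_mk_of_subset ?_) (mk_image_lt_of_not_wild hreg hj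
    ((hbdd _).mp bddAbove_Iic) (Set.nonempty_Iic (a := u)))
  rintro y ⟨x, rfl, rfl⟩
  refine ⟨fun i => g i x, fun i hi => ?_, rfl⟩
  have hki : k i = j := not_not.mp hi
  exact ((hki ▸ hg i x).trans_le (hu ⟨i, rfl⟩)).le

theorem preserves_T1_of_wild_intersect_general {X : Type*} [LinearOrder X]
    (hreg : (#X).IsRegular) (hbdd : ∀ s : Set X, BddAbove s ↔ #s < #X)
    {n : ℕ} (f : (Fin n → X) → X)
    (hwild : ∀ A B : Set (Fin n), Wild f A → Wild f B → (A ∩ B).Nonempty) :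
    ∀ g : Fin n → ((Fin 2 → X) → X), (∀ i, AlmostUnary (g i)) →
      AlmostUnary (fun x : Fin 2 → X => f (fun i => g i x)) := by
  intro g hg
  choose k F hkF using hg
  obtain ⟨j, hj⟩ := exists_not_wild_compl_fiber hwild k
  choose G hG using fun c =>
    exists_forall_lt_of_mk_lt hbdd (mk_image_comp_lt_of_not_wild hreg hbdd hkF hj c)
  exact ⟨j, G, fun x => hG (x j) _ ⟨x, rfl, rfl⟩⟩

/-- If every pair of `f`-wild sets meets, then `f` preserves `T₁`: composing `f` with
binary almost unary functions yields a binary almost unary function. -/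
theorem preserves_T1_of_wild_intersect {X : Type*} [LinearOrder X] [WellFoundedLT X]
    (hreg : (#X).IsRegular) (hbdd : ∀ s : Set X, BddAbove s ↔ #s < #X)
    {n : ℕ} (f : (Fin n → X) → X)
    (hwild : ∀ A B : Set (Fin n), Wild f A → Wild f B → (A ∩ B).Nonempty) :
    ∀ g : Fin n → ((Fin 2 → X) → X), (∀ i, AlmostUnary (g i)) →
      AlmostUnary (fun x : Fin 2 → X => f (fun i => g i x)) :=
  preserves_T1_of_wild_intersect_general hreg hbdd f hwild
end

section
/- If f : X^n → X preserves T_1 (i.e., composing f with any n binary almost unary functions yields a binary almost unary function), then any two f-wild subsets of {1,...,n} intersect. -/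
/-!
Suppose `A` and `B` are disjoint. Wild slices are unbounded, so there are `u s` in the `A`-slice
through `a` with `s < f (u s)` and `v t` in the `B`-slice through `b` with `t < f (v t)`. Feed `f`
the binary tuple that follows `v (x 1)` on the line `x 0 = c` and `u (x 0)` on the line `x 1 = c`.
As `A` and `B` are disjoint, each coordinate is bounded by a function of a single variable, so it
is almost unary; but the composite is unbounded along both lines, so it is bounded by a function of
neither variable.
-/

open Cardinal

section

variable {X : Type*} [LinearOrder X] {n : ℕ}

theorem AlmostUnary.of_le [NoMaxOrder X] {m : ℕ} {g : (Fin m → X) → X} (k : Fin m)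
    (F : X → X) (h : ∀ x, g x ≤ F (x k)) : AlmostUnary g := by
  choose G hG using fun y : X => exists_gt y
  exact ⟨k, G ∘ F, fun x => (h x).trans_lt (hG _)⟩

theorem WildFor.exists_lt_apply (hbdd : ∀ s : Set X, BddAbove s → #s < #X)
    {f : (Fin n → X) → X} {A : Set (Fin n)} {a : Fin n → X} (h : WildFor f A a) (y : X) :
    ∃ x : Fin n → X, (∀ i, i ∉ A → x i = a i) ∧ y < f x := by
  have hunbdd : ¬BddAbove {y : X | ∃ x : Fin n → X, (∀ i, i ∉ A → x i = a i) ∧ f x = y} :=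
    fun hb => (hbdd _ hb).ne h
  obtain ⟨_, ⟨x, hx, rfl⟩, hy⟩ := not_bddAbove_iff.mp hunbdd y
  exact ⟨x, hx, hy⟩

def crossGlue (u v : X → Fin n → X) (a : Fin n → X) (c : X) (x : Fin 2 → X) : Fin n → X :=
  if x 0 = c then v (x 1) else if x 1 = c then u (x 0) else a

theorem almostUnary_crossGlue_apply [NoMaxOrder X] {A B : Set (Fin n)} (hAB : Disjoint A B)
    {u v : X → Fin n → X} {a b : Fin n → X} (huA : ∀ s i, i ∉ A → u s i = a i)
    (hvB : ∀ t i, i ∉ B → v t i = b i) (c : X) (i : Fin n) :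
    AlmostUnary fun x => crossGlue u v a c x i := by
  by_cases hiB : i ∈ B
  · have hiA : i ∉ A := Set.disjoint_right.mp hAB hiB
    refine AlmostUnary.of_le 1 (fun t => max (v t i) (a i)) fun x => ?_
    unfold crossGlue
    split_ifs <;> simp [huA _ _ hiA]
  · refine AlmostUnary.of_le 0 (fun s => max (u s i) (max (a i) (b i))) fun x => ?_
    unfold crossGlue
    split_ifs <;> simp [hvB _ _ hiB]

theorem crossGlue_vertical (u v : X → Fin n → X) (a : Fin n → X) (c t : X) :
    crossGlue u v a c ![c, t] = v t := by
  simp [crossGlue]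

theorem crossGlue_horizontal (u v : X → Fin n → X) (a : Fin n → X) {c s : X} (hs : s ≠ c) :
    crossGlue u v a c ![s, c] = u s := by
  simp [crossGlue, hs]

theorem not_almostUnary_comp_crossGlue [NoMaxOrder X] (f : (Fin n → X) → X)
    {u v : X → Fin n → X} (hfu : ∀ s, s < f (u s)) (hfv : ∀ t, t < f (v t)) (a : Fin n → X)
    (c : X) : ¬AlmostUnary fun x => f (crossGlue u v a c x) := by
  rintro ⟨k, F, hF⟩
  fin_cases k
  · have hvert : f (crossGlue u v a c ![c, F c]) < F c := hF ![c, F c]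
    rw [crossGlue_vertical] at hvert
    exact (hfv _).not_gt hvert
  · obtain ⟨s, hs⟩ := exists_gt (max (F c) c)
    rw [max_lt_iff] at hs
    have hhor : f (crossGlue u v a c ![s, c]) < F c := hF ![s, c]
    rw [crossGlue_horizontal u v a hs.2.ne'] at hhor
    exact (hfu s).not_gt (hhor.trans hs.1)

end

theorem wild_intersect_of_preserves_T1_general {X : Type*} [LinearOrder X]
    (hbdd : ∀ s : Set X, BddAbove s ↔ #s < #X)
    {n : ℕ} (f : (Fin n → X) → X)
    (hpol : ∀ g : Fin n → ((Fin 2 → X) → X), (∀ i, AlmostUnary (g i)) →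
      AlmostUnary (fun x : Fin 2 → X => f (fun i => g i x))) :
    ∀ A B : Set (Fin n), Wild f A → Wild f B → (A ∩ B).Nonempty := by
  rintro A B ⟨a, hA⟩ ⟨b, hB⟩
  rw [← Set.not_disjoint_iff_nonempty_inter]
  intro hAB
  choose u huA hfu using hA.exists_lt_apply fun s => (hbdd s).1
  choose v hvB hfv using hB.exists_lt_apply fun s => (hbdd s).1
  have : NoMaxOrder X := ⟨fun s => ⟨f (u s), hfu s⟩⟩
  exact not_almostUnary_comp_crossGlue f hfu hfv a (f a)
    (hpol _ (almostUnary_crossGlue_apply hAB huA hvB (f a)))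

/-- If `f` preserves `T₁` then any two `f`-wild subsets of `{1,...,n}` intersect. -/
theorem wild_intersect_of_preserves_T1 {X : Type*} [LinearOrder X] [WellFoundedLT X]
    (hreg : (#X).IsRegular) (hbdd : ∀ s : Set X, BddAbove s ↔ #s < #X)
    {n : ℕ} (f : (Fin n → X) → X)
    (hpol : ∀ g : Fin n → ((Fin 2 → X) → X), (∀ i, AlmostUnary (g i)) →
      AlmostUnary (fun x : Fin 2 → X => f (fun i => g i x))) :
    ∀ A B : Set (Fin n), Wild f A → Wild f B → (A ∩ B).Nonempty :=
  wild_intersect_of_preserves_T1_general hbdd f hpol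
end

section
/- For every g : X^n → X there exists a monotone g'' : X^n → X with g ≤ g'' pointwise, such that g'' lies in the clone generated by g together with all almost unary functions. -/
open Cardinal

/-- A clone: a family of sets of finitary operations containing all projections
and closed under composition. -/
structure IsClone {X : Type*} (C : ∀ m : ℕ, Set ((Fin m → X) → X)) : Prop where
  proj : ∀ (m : ℕ) (i : Fin m), (fun x => x i) ∈ C m
  comp : ∀ (m k : ℕ) (f : (Fin m → X) → X) (g : Fin m → ((Fin k → X) → X)),
    f ∈ C m → (∀ i, g i ∈ C k) → (fun x => f (fun i => g i x)) ∈ C k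

/-- Membership in the clone generated by `g` together with all almost unary functions. -/
def InCloneWithU {X : Type*} [LT X] {n k : ℕ} (g : (Fin n → X) → X)
    (f : (Fin k → X) → X) : Prop :=
  ∀ C : ∀ m : ℕ, Set ((Fin m → X) → X), IsClone C →
    (∀ (m : ℕ) (h : (Fin m → X) → X), AlmostUnary h → h ∈ C m) → g ∈ C n → f ∈ C k

section Helpers

variable {X : Type*} [LinearOrder X] [WellFoundedLT X]

open Classical in
/-- Least upper bound via well-foundedness. -/
noncomputable def lubX [Nonempty X] (s : Set X) : X :=
  if h : BddAbove s then
    (IsWellFounded.wf (r := ((· < ·) : X → X → Prop))).min (upperBounds s) h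
  else Classical.arbitrary X

lemma lubX_mem_ub [Nonempty X] {s : Set X} (h : BddAbove s) : lubX s ∈ upperBounds s := by
  rw [lubX, dif_pos h]
  exact WellFounded.min_mem _ _ h

lemma lubX_ub [Nonempty X] {s : Set X} (h : BddAbove s) {w : X} (hw : w ∈ s) : w ≤ lubX s :=
  lubX_mem_ub h hw

lemma lubX_le [Nonempty X] {s : Set X} {b : X} (hb : b ∈ upperBounds s) : lubX s ≤ b := by
  have h : BddAbove s := ⟨b, hb⟩
  rw [lubX, dif_pos h]
  exact le_of_not_gt (WellFounded.not_lt_min _ _ hb)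

lemma lubX_mono [Nonempty X] {s t : Set X} (hst : s ⊆ t) (ht : BddAbove t) :
    lubX s ≤ lubX t :=
  lubX_le (fun w hw => lubX_ub ht (hst hw))

lemma bddAbove_iUnion_fin [Nonempty X] {ι : Type*} [Fintype ι] {f : ι → Set X}
    (h : ∀ i, BddAbove (f i)) : BddAbove (⋃ i, f i) := by
  classical
  have key : ∀ s : Finset ι, BddAbove (⋃ i ∈ s, f i) := by
    intro s
    induction s using Finset.induction_on with
    | empty => simpa using (bddAbove_empty (α := X))
    | insert _ _ ha ih =>
        rw [Finset.set_biUnion_insert]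
        exact (h _).union ih
  have h2 := key Finset.univ
  have : (⋃ i, f i) = ⋃ i ∈ Finset.univ, f i := by
    ext w; simp
  rwa [this]

end Helpers

section CloneAux

variable {X : Type*} [LinearOrder X] [WellFoundedLT X] {n : ℕ}

/-- `S`-bounded slices of `g` have bounded image. -/
def SbddC (g : (Fin n → X) → X) (S : Finset (Fin n)) : Prop :=
  ∀ u : X, BddAbove (g '' {e | ∀ j ∈ S, e j ≤ u})

/-- All `g`-values achievable with some bounded-slice set capped at `v`. -/
def WsetC (g : (Fin n → X) → X) (v : X) : Set X :=
  {w | ∃ S : Finset (Fin n), SbddC g S ∧ ∃ e : Fin n → X, (∀ j ∈ S, e j ≤ v) ∧ w = g e}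

noncomputable def BhatC [Nonempty X] (g : (Fin n → X) → X) (v : X) : X :=
  lubX (WsetC g v)

lemma bddAbove_WsetC [Nonempty X] (g : (Fin n → X) → X) (v : X) :
    BddAbove (WsetC g v) := by
  classical
  have : WsetC g v =
      ⋃ S : Finset (Fin n),
        {w | SbddC g S ∧ ∃ e : Fin n → X, (∀ j ∈ S, e j ≤ v) ∧ w = g e} := by
    ext w
    simp only [WsetC, Set.mem_setOf_eq, Set.mem_iUnion]
  rw [this]
  apply bddAbove_iUnion_fin
  intro S
  by_cases hS : SbddC g S
  · have hsub : {w | SbddC g S ∧ ∃ e : Fin n → X, (∀ j ∈ S, e j ≤ v) ∧ w = g e}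
        ⊆ g '' {e | ∀ j ∈ S, e j ≤ v} := by
      rintro w ⟨-, e, he, rfl⟩
      exact ⟨e, he, rfl⟩
    exact (hS v).mono hsub
  · have : {w | SbddC g S ∧ ∃ e : Fin n → X, (∀ j ∈ S, e j ≤ v) ∧ w = g e} = ∅ := by
      ext w; simp only [Set.mem_setOf_eq, Set.mem_empty_iff_false, iff_false]
      rintro ⟨h, -⟩; exact hS h
    rw [this]; exact bddAbove_empty

lemma BhatC_mono [Nonempty X] (g : (Fin n → X) → X) {v v' : X} (h : v ≤ v') :
    BhatC g v ≤ BhatC g v' := by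
  apply lubX_mono _ (bddAbove_WsetC g v')
  rintro w ⟨S, hS, e, he, rfl⟩
  exact ⟨S, hS, e, fun j hj => (he j hj).trans h, rfl⟩

lemma le_BhatC [Nonempty X] (g : (Fin n → X) → X) {v : X} {w : X} (hw : w ∈ WsetC g v) :
    w ≤ BhatC g v :=
  lubX_ub (bddAbove_WsetC g v) hw

/-- minimum of `x` over a finset of coordinates (junk value if empty). -/
noncomputable def minLC [Nonempty X] (L : Finset (Fin n)) (x : Fin n → X) : X :=
  if h : L.Nonempty then L.inf' h x else Classical.arbitrary X

/-- The outer almost-unary "sup below a value-cap" operation. -/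
noncomputable def OfunC [Nonempty X] (g : (Fin n → X) → X) : (Fin (n + 1) → X) → X :=
  fun s => lubX {w | (∃ y : Fin n → X, (∀ j : Fin n, y j ≤ s j.succ) ∧ w = g y)
      ∧ w ≤ BhatC g (s 0)}

end CloneAux

/-- Every `g` is dominated by a monotone function in the clone generated by `g` and
all almost unary functions. -/
theorem exists_monotone_dominating {X : Type*} [LinearOrder X] [WellFoundedLT X]
    (hreg : (#X).IsRegular) (hbdd : ∀ s : Set X, BddAbove s ↔ #s < #X)
    {n : ℕ} (g : (Fin n → X) → X) :
    ∃ g'' : (Fin n → X) → X, InCloneWithU g g'' ∧ Monotone g'' ∧ ∀ x, g x ≤ g'' x := by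
  classical
  haveI : Nonempty X := by
    refine Cardinal.mk_ne_zero_iff.mp ?_
    exact (Cardinal.aleph0_pos.trans_le hreg.aleph0_le).ne'
  -- successor function
  have hsucc : ∀ a : X, ∃ b : X, a < b := by
    intro a
    by_contra hcon
    push_neg at hcon
    have : BddAbove (Set.univ : Set X) := ⟨a, fun w _ => hcon w⟩
    rw [hbdd] at this
    simp only [Cardinal.mk_univ] at this
    exact lt_irrefl _ this
  choose sc hsc using hsucc
  -- cardinality of products of small sets
  have pi_small : ∀ (m : ℕ) (S : Fin m → Set X), (∀ j, #(S j) < #X) →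
      #(∀ j, S j) < #X := by
    intro m
    induction m with
    | zero =>
        intro S _
        have h1 : #(∀ j : Fin 0, S j) = 1 := Cardinal.mk_eq_one _
        rw [h1]
        exact Cardinal.one_lt_aleph0.trans_le hreg.aleph0_le
    | succ m ih =>
        intro S hS
        have e := (Fin.insertNthEquiv (fun j => S j) 0).symm
        have h1 : #(∀ j, S j) = #(S 0) * #(∀ j : Fin m, S ((0 : Fin (m+1)).succAbove j)) := by
          rw [Cardinal.mk_congr e, Cardinal.mk_prod, Cardinal.lift_id, Cardinal.lift_id]
        rw [h1]
        exact Cardinal.mul_lt_of_lt hreg.aleph0_le (hS 0) (ih _ (fun j => hS _))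
  have Iic_small : ∀ c : X, #(Set.Iic c) < #X := by
    intro c
    exact (hbdd _).mp ⟨c, fun w hw => hw⟩
  -- downsets in the product are small
  have down_small : ∀ x : Fin n → X, #({y : Fin n → X | ∀ j, y j ≤ x j}) < #X := by
    intro x
    have hinj : Function.Injective
        (fun (y : {y : Fin n → X // ∀ j, y j ≤ x j}) => (fun j => ⟨y.1 j, y.2 j⟩ :
          ∀ j : Fin n, Set.Iic (x j))) := by
      rintro ⟨y, hy⟩ ⟨y', hy'⟩ h
      ext j
      have := congrFun h j
      simpa using congrArg Subtype.val this
    exact (Cardinal.mk_le_of_injective hinj).trans_lt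
      (pi_small n (fun j => Set.Iic (x j)) (fun j => Iic_small (x j)))
  have bdd_down : ∀ x : Fin n → X, BddAbove (g '' {y | ∀ j, y j ≤ x j}) := by
    intro x
    exact (hbdd _).mpr ((Cardinal.mk_image_le).trans_lt (down_small x))
  -- the monotonization
  set gpp : (Fin n → X) → X := fun x => lubX (g '' {y | ∀ j, y j ≤ x j}) with hgpp
  have gpp_mono : Monotone gpp := by
    intro a b hab
    apply lubX_mono _ (bdd_down b)
    apply Set.image_mono
    intro y hy j
    exact (hy j).trans (hab j)
  have gpp_dom : ∀ x, g x ≤ gpp x := by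
    intro x
    exact lubX_ub (bdd_down x) ⟨x, fun j => le_refl _, rfl⟩
  rcases Nat.eq_zero_or_pos n with hn0 | hn
  · -- n = 0 : g is constant, take g itself
    subst hn0
    refine ⟨g, fun C _ _ hg => hg, ?_, fun x => le_refl _⟩
    intro a b _
    have : a = b := funext fun j => j.elim0
    rw [this]
  by_cases hR : BddAbove (Set.range g)
  · -- bounded range: a constant dominates
    set c : X := lubX (Set.range g) with hc
    refine ⟨fun _ => c, ?_, fun _ _ _ => le_refl _, fun x => lubX_ub hR ⟨x, rfl⟩⟩
    intro C _ hU _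
    exact hU n _ ⟨⟨0, hn⟩, fun _ => sc c, fun x => hsc c⟩
  -- MAIN CASE
  -- Sbdd univ always holds
  have Sbdd_univ : SbddC g Finset.univ := by
    intro u
    have : {e : Fin n → X | ∀ j ∈ Finset.univ, e j ≤ u} =
        {y : Fin n → X | ∀ j, y j ≤ (fun _ => u) j} := by
      ext e; simp
    rw [this]
    exact bdd_down (fun _ => u)
  -- witness families
  have hwit : ∀ L : Finset (Fin n), ∃ (uL : X) (zL : X → (Fin n → X)),
      (L.Nonempty ∧ ¬ SbddC g Lᶜ) →
        ∀ v : X, (∀ j, j ∉ L → zL v j ≤ uL) ∧ v ≤ g (zL v) := by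
    intro L
    by_cases hL : L.Nonempty ∧ ¬ SbddC g Lᶜ
    · have h2 : ¬ (∀ u : X, BddAbove (g '' {e | ∀ j ∈ Lᶜ, e j ≤ u})) := hL.2
      push_neg at h2
      obtain ⟨u0, hu0⟩ := h2
      have hv : ∀ v : X, ∃ e : Fin n → X, (∀ j ∈ Lᶜ, e j ≤ u0) ∧ v ≤ g e := by
        intro v
        by_contra hcon
        push_neg at hcon
        apply hu0
        refine ⟨v, ?_⟩
        rintro w ⟨e, he, rfl⟩
        rcases hcon e he with h
        exact le_of_lt h
      choose zL hz1 hz2 using hv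
      exact ⟨u0, zL, fun _ v => ⟨fun j hj => hz1 v j (Finset.mem_compl.mpr hj), hz2 v⟩⟩
    · exact ⟨Classical.arbitrary X, fun _ _ => Classical.arbitrary X,
        fun h => absurd h hL⟩
  choose u z hz using hwit
  -- the finset of "unbounded complement" sets
  set Tset : Finset (Finset (Fin n)) :=
    Finset.univ.filter (fun L => L.Nonempty ∧ ¬ SbddC g Lᶜ) with hTset
  have mem_Tset : ∀ L, L ∈ Tset ↔ (L.Nonempty ∧ ¬ SbddC g Lᶜ) := by
    intro L
    simp [hTset]
  haveI : Nonempty (Fin n) := ⟨⟨0, hn⟩⟩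
  have hTne : Tset.Nonempty := by
    refine ⟨Finset.univ, (mem_Tset _).mpr ⟨Finset.univ_nonempty (α := Fin n), ?_⟩⟩
    · rw [Finset.compl_univ]
      intro hS
      apply hR
      have := hS (Classical.arbitrary X)
      have he : {e : Fin n → X | ∀ j ∈ (∅ : Finset (Fin n)), e j ≤ Classical.arbitrary X}
          = Set.univ := by
        ext e; simp
      rwa [he, Set.image_univ] at this
  -- M and the argmax Λ
  set M : (Fin n → X) → X := fun x => Tset.sup' hTne (fun L => minLC L x) with hM
  have hLam : ∀ x : Fin n → X, ∃ L, L ∈ Tset ∧ minLC L x = M x := by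
    intro x
    obtain ⟨L, hL, hEq⟩ := Finset.exists_mem_eq_sup' hTne (fun L => minLC L x)
    exact ⟨L, hL, hEq.symm⟩
  choose Lam hLamT hLamEq using hLam
  -- properties of minLC over members of Tset
  have minLC_le : ∀ (L : Finset (Fin n)) (hL : L.Nonempty) (x : Fin n → X) (j : Fin n),
      j ∈ L → minLC L x ≤ x j := by
    intro L hL x j hj
    rw [minLC, dif_pos hL]
    exact Finset.inf'_le _ hj
  have le_minLC : ∀ (L : Finset (Fin n)) (hL : L.Nonempty) (x : Fin n → X) (a : X),
      (∀ j ∈ L, a ≤ x j) → a ≤ minLC L x := by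
    intro L hL x a h
    rw [minLC, dif_pos hL]
    exact Finset.le_inf' hL _ h
  have minLC_mono : ∀ (L : Finset (Fin n)) (hL : L.Nonempty) {x y : Fin n → X},
      (∀ j, y j ≤ x j) → minLC L y ≤ minLC L x := by
    intro L hL x y hyx
    refine le_minLC L hL x _ (fun j hj => ?_)
    exact (minLC_le L hL y j hj).trans (hyx j)
  -- KEY LEMMA : every value of g is bounded by Bhat of some tracked minimum
  have hkey : ∀ y : Fin n → X, ∃ L, L ∈ Tset ∧ g y ≤ BhatC g (minLC L y) := by
    intro y
    set P : Finset (Fin n) → Prop :=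
      fun L => (∀ i, i ∉ L → ∀ m ∈ L, y i ≤ y m) ∧ ¬ SbddC g Lᶜ with hP
    have hPuniv : P Finset.univ := by
      constructor
      · intro i hi; exact absurd (Finset.mem_univ i) hi
      · rw [Finset.compl_univ]
        intro hS
        apply hR
        have := hS (Classical.arbitrary X)
        have he : {e : Fin n → X | ∀ j ∈ (∅ : Finset (Fin n)), e j ≤ Classical.arbitrary X}
            = Set.univ := by
          ext e; simp
        rwa [he, Set.image_univ] at this
    set Pfin : Finset (Finset (Fin n)) := Finset.univ.filter P with hPfin
    have hPne : Pfin.Nonempty :=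
      ⟨Finset.univ, by
        simp only [hPfin, Finset.mem_filter]
        exact ⟨Finset.mem_univ _, hPuniv⟩⟩
    obtain ⟨Lstar, hLstarMem, hLstarMin⟩ := Finset.exists_min_image Pfin Finset.card hPne
    have hPstar : P Lstar := by
      have := hLstarMem
      simp only [hPfin, Finset.mem_filter] at this
      exact this.2
    have hne : Lstar.Nonempty := by
      by_contra hcon
      rw [Finset.not_nonempty_iff_eq_empty] at hcon
      apply hPstar.2
      rw [hcon, Finset.compl_empty]
      exact Sbdd_univ
    obtain ⟨m0, hm0, hm0min⟩ := Finset.exists_min_image Lstar y hne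
    set L' : Finset (Fin n) := Lstar.erase m0 with hL'
    have hcard : L'.card < Lstar.card := Finset.card_erase_lt_of_mem hm0
    have hP1' : ∀ i, i ∉ L' → ∀ m ∈ L', y i ≤ y m := by
      intro i hi m hm
      by_cases hieq : i = m0
      · subst hieq
        exact hm0min m (Finset.mem_of_mem_erase hm)
      · have hiL : i ∉ Lstar := by
          intro hiL
          exact hi (Finset.mem_erase.mpr ⟨hieq, hiL⟩)
        exact hPstar.1 i hiL m (Finset.mem_of_mem_erase hm)
    have hSbddL' : SbddC g L'ᶜ := by
      by_contra hcon
      have hPL' : P L' := ⟨hP1', hcon⟩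
      have : L' ∈ Pfin := by
        simp only [hPfin, Finset.mem_filter]
        exact ⟨Finset.mem_univ _, hPL'⟩
      have := hLstarMin L' this
      omega
    -- g y is in Wset (y m0)
    have hmem : g y ∈ WsetC g (y m0) := by
      refine ⟨L'ᶜ, hSbddL', y, ?_, rfl⟩
      intro j hj
      rw [Finset.mem_compl] at hj
      by_cases hjeq : j = m0
      · subst hjeq; exact le_refl _
      · have hjL : j ∉ Lstar := by
          intro hjL
          exact hj (Finset.mem_erase.mpr ⟨hjeq, hjL⟩)
        exact hPstar.1 j hjL m0 hm0
    have h1 : g y ≤ BhatC g (y m0) := le_BhatC g hmem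
    have h2 : y m0 ≤ minLC Lstar y := le_minLC Lstar hne y _ (fun m hm => hm0min m hm)
    refine ⟨Lstar, (mem_Tset _).mpr ⟨hne, hPstar.2⟩, h1.trans (BhatC_mono g h2)⟩
  -- main bound : all g-values in the downset of x are ≤ Bhat (M x)
  have hmain : ∀ (x y : Fin n → X), (∀ j, y j ≤ x j) → g y ≤ BhatC g (M x) := by
    intro x y hyx
    obtain ⟨L, hLT, hb⟩ := hkey y
    have hLne : L.Nonempty := ((mem_Tset L).mp hLT).1
    have h1 : minLC L y ≤ minLC L x := minLC_mono L hLne hyx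
    have h2 : minLC L x ≤ M x := Finset.le_sup' (fun L => minLC L x) hLT
    exact hb.trans ((BhatC_mono g h1).trans (BhatC_mono g h2))
  -- the tracker term
  set Tfun : (Fin n → X) → X := fun x => g (fun i => z (Lam x) (M x) i) with hTfun
  have hz' : ∀ x : Fin n → X,
      (∀ j, j ∉ Lam x → z (Lam x) (M x) j ≤ u (Lam x)) ∧ M x ≤ g (z (Lam x) (M x)) := by
    intro x
    exact hz (Lam x) ((mem_Tset _).mp (hLamT x)) (M x)
  have hT_ge : ∀ x, M x ≤ Tfun x := fun x => (hz' x).2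
  -- each coordinate function of the tracker is almost unary
  have hau : ∀ j : Fin n, AlmostUnary (fun x : Fin n → X => z (Lam x) (M x) j) := by
    intro j
    set AUX : X → Set X := fun c =>
      (⋃ L : Finset (Fin n), (fun w => z L w j) '' Set.Iic c) ∪ Set.range u with hAUX
    have hbddAUX : ∀ c, BddAbove (AUX c) := by
      intro c
      apply BddAbove.union
      · apply bddAbove_iUnion_fin
        intro L
        exact (hbdd _).mpr ((Cardinal.mk_image_le).trans_lt (Iic_small c))
      · exact (Set.finite_range u).bddAbove
    refine ⟨j, fun c => sc (lubX (AUX c)), ?_⟩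
    intro x
    have hfin : z (Lam x) (M x) j ≤ lubX (AUX (x j)) := by
      by_cases hj : j ∈ Lam x
      · apply lubX_ub (hbddAUX (x j))
        apply Set.mem_union_left
        refine Set.mem_iUnion.mpr ⟨Lam x, ⟨M x, ?_, rfl⟩⟩
        have hLne : (Lam x).Nonempty := ((mem_Tset _).mp (hLamT x)).1
        have : M x ≤ x j := by
          rw [← hLamEq x]
          exact minLC_le (Lam x) hLne x j hj
        simpa using this
      · have h1 : z (Lam x) (M x) j ≤ u (Lam x) := (hz' x).1 j hj
        have h2 : u (Lam x) ≤ lubX (AUX (x j)) := by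
          apply lubX_ub (hbddAUX (x j))
          exact Set.mem_union_right _ ⟨Lam x, rfl⟩
        exact h1.trans h2
    exact lt_of_le_of_lt hfin (hsc _)
  -- Ofun is almost unary
  have hauO : AlmostUnary (OfunC g) := by
    refine ⟨0, fun t => sc (BhatC g t), ?_⟩
    intro s
    have : OfunC g s ≤ BhatC g (s 0) := by
      apply lubX_le
      rintro w ⟨-, hw⟩
      exact hw
    exact lt_of_le_of_lt this (hsc _)
  -- the composite equals gpp
  set args : Fin (n + 1) → ((Fin n → X) → X) :=
    Fin.cons (α := fun _ => (Fin n → X) → X) Tfun (fun (i : Fin n) (x : Fin n → X) => x i)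
    with hargsdef
  have hcompeq : ∀ x : Fin n → X,
      OfunC g (fun i => args i x) = gpp x := by
    intro x
    have hvec : (fun i => args i x) =
        Fin.cons (α := fun _ => X) (Tfun x) x := by
      funext i
      refine Fin.cases ?_ ?_ i
      · simp [hargsdef]
      · intro i; simp [hargsdef]
    rw [hvec]
    have hset : {w | (∃ y : Fin n → X,
        (∀ j : Fin n, y j ≤ Fin.cons (α := fun _ => X) (Tfun x) x j.succ)
        ∧ w = g y) ∧ w ≤ BhatC g (Fin.cons (α := fun _ => X) (Tfun x) x 0)} =
        g '' {y : Fin n → X | ∀ j, y j ≤ x j} := by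
      ext w
      simp only [Fin.cons_succ, Fin.cons_zero, Set.mem_setOf_eq, Set.mem_image]
      constructor
      · rintro ⟨⟨y, hy, rfl⟩, -⟩
        exact ⟨y, hy, rfl⟩
      · rintro ⟨y, hy, rfl⟩
        refine ⟨⟨y, hy, rfl⟩, ?_⟩
        exact (hmain x y hy).trans (BhatC_mono g (hT_ge x))
    rw [OfunC, hset]
  -- conclusion
  refine ⟨gpp, ?_, gpp_mono, gpp_dom⟩
  intro C hC hU hg
  have hw : ∀ j : Fin n, (fun x : Fin n → X => z (Lam x) (M x) j) ∈ C n :=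
    fun j => hU n _ (hau j)
  have hT : Tfun ∈ C n := hC.comp n n g (fun j x => z (Lam x) (M x) j) hg hw
  have hO : OfunC g ∈ C (n + 1) := hU (n + 1) _ hauO
  have hargs : ∀ i : Fin (n + 1), args i ∈ C n := by
    intro i
    refine Fin.cases ?_ ?_ i
    · simpa [hargsdef] using hT
    · intro i
      simpa [hargsdef] using hC.proj n i
  have hcomp := hC.comp (n + 1) n (OfunC g) args hO hargs
  have heq : (fun x => OfunC g (fun i => args i x)) = gpp := funext hcompeq
  rwa [heq] at hcomp
end

section
/- For every g : X^n → X there exists g'' in the clone generated by g and all almost unary functions such that g'' is monotone and every g-wild subset of {1,...,n} is g''-insane. -/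
open Cardinal

/-- `A` is `f`-insane: `(f,a)`-wild for every `a`. -/
def Insane {X : Type*} {n : ℕ} (f : (Fin n → X) → X) (A : Set (Fin n)) : Prop :=
  ∀ a : Fin n → X, WildFor f A a
set_option linter.unusedSectionVars false

namespace GSProof

variable {X : Type*} [LinearOrder X] [WellFoundedLT X]

section

variable [Nonempty X]

open Classical in
/-- Least strict upper bound (via well-foundedness); junk if none exists. -/
noncomputable def subb (s : Set X) : X :=
  if h : {u : X | ∀ y ∈ s, y < u}.Nonempty then wellFounded_lt.min _ h
  else Classical.arbitrary X

theorem exists_gt (hbdd : ∀ s : Set X, BddAbove s ↔ #s < #X) (x : X) : ∃ y, x < y := by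
  have h1 : ¬ BddAbove (Set.univ : Set X) := by
    intro h
    rw [hbdd] at h
    simp only [Cardinal.mk_univ] at h
    exact absurd h (lt_irrefl _)
  obtain ⟨y, -, hy⟩ := not_bddAbove_iff.mp h1 x
  exact ⟨y, hy⟩

theorem subb_spec (hbdd : ∀ s : Set X, BddAbove s ↔ #s < #X)
    {s : Set X} (hs : BddAbove s) : ∀ y ∈ s, y < subb s := by
  obtain ⟨u, hu⟩ := hs
  obtain ⟨v, hv⟩ := exists_gt hbdd u
  have hne : {w : X | ∀ y ∈ s, y < w}.Nonempty := ⟨v, fun y hy => lt_of_le_of_lt (hu hy) hv⟩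
  intro y hy
  rw [subb, dif_pos hne]
  exact wellFounded_lt.min_mem _ hne y hy

theorem card_of_bddAbove (hbdd : ∀ s : Set X, BddAbove s ↔ #s < #X)
    {s : Set X} (u : X) (hu : ∀ y ∈ s, y ≤ u) : #s < #X :=
  (hbdd s).mp ⟨u, hu⟩

variable {n : ℕ} (g : (Fin n → X) → X)

open Classical in
/-- A choice of a witness `a` for each wild set. -/
noncomputable def aA (A : Set (Fin n)) : Fin n → X :=
  if h : Wild g A then h.choose else Classical.arbitrary _

theorem aA_spec {A : Set (Fin n)} (h : Wild g A) : WildFor g A (aA g A) := by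
  rw [aA, dif_pos h]
  exact h.choose_spec

open Classical in
/-- A witness tuple agreeing with `aA g A` off `A` whose `g`-value exceeds `c`. -/
noncomputable def wit (A : Set (Fin n)) (c : X) : Fin n → X :=
  if h : ∃ x : Fin n → X, (∀ i, i ∉ A → x i = aA g A i) ∧ c < g x then h.choose
  else Classical.arbitrary _

theorem wit_spec (hbdd : ∀ s : Set X, BddAbove s ↔ #s < #X)
    {A : Set (Fin n)} (hA : Wild g A) (c : X) :
    (∀ i, i ∉ A → wit g A c i = aA g A i) ∧ c < g (wit g A c) := by
  have hwf : #{y : X | ∃ x : Fin n → X, (∀ i, i ∉ A → x i = aA g A i) ∧ g x = y} = #X :=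
    aA_spec g hA
  have hS : ¬ BddAbove {y : X | ∃ x : Fin n → X, (∀ i, i ∉ A → x i = aA g A i) ∧ g x = y} := by
    intro hb
    rw [hbdd, hwf] at hb
    exact absurd hb (lt_irrefl _)
  obtain ⟨y, hyS, hcy⟩ := not_bddAbove_iff.mp hS c
  obtain ⟨x, hx1, hx2⟩ := hyS
  have hex : ∃ x : Fin n → X, (∀ i, i ∉ A → x i = aA g A i) ∧ c < g x :=
    ⟨x, hx1, by rw [hx2]; exact hcy⟩
  rw [wit, dif_pos hex]
  exact hex.choose_spec

open Classical in
/-- The block-separating function, defined by well-founded recursion. -/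
noncomputable def Lfun : X → X :=
  WellFoundedLT.fix fun γ prev =>
    subb {y : X | y = subb {z : X | (∃ γ', ∃ h : γ' < γ, z = prev γ' h) ∨ z = γ} ∨
      ∃ A : Set (Fin n), Wild g A ∧
        y = g (wit g A (subb {z : X | (∃ γ', ∃ h : γ' < γ, z = prev γ' h) ∨ z = γ}))}

open Classical in
/-- The "base" of the `γ`-th block. -/
noncomputable def bfun (γ : X) : X :=
  subb {z : X | (∃ γ', ∃ _ : γ' < γ, z = Lfun g γ') ∨ z = γ}

theorem Lfun_eq (γ : X) :
    Lfun g γ = subb {y : X | y = bfun g γ ∨ ∃ A : Set (Fin n), Wild g A ∧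
       y = g (wit g A (bfun g γ))} := by
  unfold Lfun bfun
  rw [WellFoundedLT.fix_eq]
  rfl

theorem bset_bdd (hreg : (#X).IsRegular) (hbdd : ∀ s : Set X, BddAbove s ↔ #s < #X) (γ : X) :
    BddAbove {z : X | (∃ γ', ∃ _ : γ' < γ, z = Lfun g γ') ∨ z = γ} := by
  apply (hbdd _).mpr
  have hsub : {z : X | (∃ γ', ∃ _ : γ' < γ, z = Lfun g γ') ∨ z = γ} ⊆
      (Lfun g '' Set.Iio γ) ∪ {γ} := by
    rintro z (⟨γ', hlt, rfl⟩ | rfl)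
    · exact Or.inl ⟨γ', hlt, rfl⟩
    · exact Or.inr rfl
  refine lt_of_le_of_lt ((Cardinal.mk_le_mk_of_subset hsub).trans (Cardinal.mk_union_le _ _)) ?_
  apply Cardinal.add_lt_of_lt hreg.aleph0_le
  · exact lt_of_le_of_lt Cardinal.mk_image_le
      (card_of_bddAbove hbdd γ (fun y hy => le_of_lt hy))
  · rw [Cardinal.mk_singleton]
    exact lt_of_lt_of_le Cardinal.one_lt_aleph0 hreg.aleph0_le

theorem self_lt_bfun (hreg : (#X).IsRegular) (hbdd : ∀ s : Set X, BddAbove s ↔ #s < #X)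
    (γ : X) : γ < bfun g γ :=
  subb_spec hbdd (bset_bdd g hreg hbdd γ) γ (Or.inr rfl)

theorem Lfun_lt_bfun (hreg : (#X).IsRegular) (hbdd : ∀ s : Set X, BddAbove s ↔ #s < #X)
    {γ' γ : X} (h : γ' < γ) : Lfun g γ' < bfun g γ :=
  subb_spec hbdd (bset_bdd g hreg hbdd γ) _ (Or.inl ⟨γ', h, rfl⟩)

theorem Lset_bdd (hreg : (#X).IsRegular) (hbdd : ∀ s : Set X, BddAbove s ↔ #s < #X) (γ : X) :
    BddAbove {y : X | y = bfun g γ ∨ ∃ A : Set (Fin n), Wild g A ∧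
       y = g (wit g A (bfun g γ))} := by
  classical
  have hsub : {y : X | y = bfun g γ ∨ ∃ A : Set (Fin n), Wild g A ∧
      y = g (wit g A (bfun g γ))} ⊆
      ({bfun g γ} : Set X) ∪ ((fun A : Set (Fin n) => g (wit g A (bfun g γ))) '' Set.univ) := by
    rintro y (rfl | ⟨A, -, rfl⟩)
    · exact Or.inl rfl
    · exact Or.inr ⟨A, Set.mem_univ _, rfl⟩
  exact Set.Finite.bddAbove (Set.Finite.subset
    ((Set.finite_singleton _).union ((Set.finite_univ).image _)) hsub)

theorem bfun_lt_Lfun (hreg : (#X).IsRegular) (hbdd : ∀ s : Set X, BddAbove s ↔ #s < #X)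
    (γ : X) : bfun g γ < Lfun g γ := by
  rw [Lfun_eq]
  exact subb_spec hbdd (Lset_bdd g hreg hbdd γ) _ (Or.inl rfl)

theorem wit_lt_Lfun (hreg : (#X).IsRegular) (hbdd : ∀ s : Set X, BddAbove s ↔ #s < #X)
    {A : Set (Fin n)} (hA : Wild g A) (γ : X) : g (wit g A (bfun g γ)) < Lfun g γ := by
  rw [Lfun_eq]
  exact subb_spec hbdd (Lset_bdd g hreg hbdd γ) _ (Or.inr ⟨A, hA, rfl⟩)

open Classical in
/-- The block-index function. -/
noncomputable def betaf (ξ : X) : X :=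
  if h : {δ : X | ξ < Lfun g δ}.Nonempty then wellFounded_lt.min _ h
  else Classical.arbitrary X

theorem betaf_eq (hreg : (#X).IsRegular) (hbdd : ∀ s : Set X, BddAbove s ↔ #s < #X)
    {A : Set (Fin n)} (hA : Wild g A) (γ : X) :
    betaf g (g (wit g A (bfun g γ))) = γ := by
  set ξ := g (wit g A (bfun g γ)) with hξ
  have hbξ : bfun g γ < ξ := (wit_spec g hbdd hA (bfun g γ)).2
  have hξγ : ξ < Lfun g γ := wit_lt_Lfun g hreg hbdd hA γ
  have hne : {δ : X | ξ < Lfun g δ}.Nonempty := ⟨γ, hξγ⟩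
  rw [betaf, dif_pos hne]
  have h1 : ξ < Lfun g (wellFounded_lt.min _ hne) := wellFounded_lt.min_mem _ hne
  have h2 : ¬ γ < wellFounded_lt.min _ hne := wellFounded_lt.not_lt_min {δ : X | ξ < Lfun g δ} (x := γ) hξγ
  rcases lt_trichotomy (wellFounded_lt.min {δ : X | ξ < Lfun g δ} hne) γ with hlt | heq | hgt
  · exact absurd (lt_trans h1 (lt_trans (Lfun_lt_bfun g hreg hbdd hlt) hbξ)) (lt_irrefl _)
  · exact heq
  · exact absurd hgt h2

/-- The finset of wild sets. -/
noncomputable def Wfinset : Finset (Set (Fin n)) :=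
  @Finset.filter _ (Wild g) (Classical.decPred _) Finset.univ

theorem mem_Wfinset {A : Set (Fin n)} : A ∈ Wfinset g ↔ Wild g A := by
  rw [Wfinset, @Finset.mem_filter _ _ (Classical.decPred _)]
  simp

/-- `A` as a finset. -/
noncomputable def AFin (A : Set (Fin n)) : Finset (Fin n) :=
  @Finset.filter _ (· ∈ A) (Classical.decPred _) Finset.univ

theorem mem_AFin {A : Set (Fin n)} {i : Fin n} : i ∈ AFin (n := n) A ↔ i ∈ A := by
  rw [AFin, @Finset.mem_filter _ _ (Classical.decPred _)]
  simp

open Classical in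
/-- minimum of the coordinates of `x` lying in `A` (junk if `A` is empty). -/
noncomputable def infA (A : Set (Fin n)) (x : Fin n → X) : X :=
  if h : (AFin (n := n) A).Nonempty then (AFin (n := n) A).inf' h x
  else Classical.arbitrary X

theorem infA_le {A : Set (Fin n)} {i : Fin n} (hi : i ∈ A) (x : Fin n → X) :
    infA A x ≤ x i := by
  have hne : (AFin (n := n) A).Nonempty := ⟨i, mem_AFin.mpr hi⟩
  rw [infA, dif_pos hne]
  exact Finset.inf'_le x (mem_AFin.mpr hi)

theorem le_infA {A : Set (Fin n)} (hA : A.Nonempty) {c : X} {x : Fin n → X}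
    (h : ∀ i ∈ A, c ≤ x i) : c ≤ infA A x := by
  obtain ⟨i, hi⟩ := hA
  have hne : (AFin (n := n) A).Nonempty := ⟨i, mem_AFin.mpr hi⟩
  rw [infA, dif_pos hne]
  exact Finset.le_inf' hne x (fun j hj => h j (mem_AFin.mp hj))

theorem infA_mono (A : Set (Fin n)) : Monotone (infA (X := X) A) := by
  intro x y hxy
  by_cases hne : (AFin (n := n) A).Nonempty
  · rw [infA, dif_pos hne, infA, dif_pos hne]
    apply Finset.le_inf' hne
    intro i hi
    exact le_trans (Finset.inf'_le x hi) (hxy i)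
  · rw [infA, dif_neg hne, infA, dif_neg hne]

theorem wild_nonempty (hreg : (#X).IsRegular) {A : Set (Fin n)} (hA : Wild g A) :
    A.Nonempty := by
  by_contra hne
  rw [Set.not_nonempty_iff_eq_empty] at hne
  subst hne
  obtain ⟨a, ha⟩ := hA
  have ha' : #{y : X | ∃ x : Fin n → X, (∀ i, i ∉ (∅ : Set (Fin n)) → x i = a i) ∧ g x = y}
      = #X := ha
  have heq : {y : X | ∃ x : Fin n → X, (∀ i, i ∉ (∅ : Set (Fin n)) → x i = a i) ∧ g x = y}
      = {g a} := by
    ext y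
    constructor
    · rintro ⟨x, hx, rfl⟩
      have : x = a := funext fun i => hx i (Set.notMem_empty i)
      rw [this]
      rfl
    · rintro rfl
      exact ⟨a, fun i _ => rfl, rfl⟩
  rw [heq, Cardinal.mk_singleton] at ha'
  exact absurd ha'.symm
    (ne_of_gt (lt_of_lt_of_le Cardinal.one_lt_aleph0 hreg.aleph0_le))

open Classical in
/-- `mW g x` is the maximum over wild sets `A` of the minimum of `x` over `A`. -/
noncomputable def mW (x : Fin n → X) : X :=
  if h : (Wfinset g).Nonempty then (Wfinset g).sup' h (fun A => infA A x)
  else Classical.arbitrary X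

theorem mW_mono : Monotone (mW g) := by
  intro x y hxy
  by_cases h : (Wfinset g).Nonempty
  · rw [mW, dif_pos h, mW, dif_pos h]
    apply Finset.sup'_le
    intro A hA
    exact le_trans (infA_mono A hxy) (Finset.le_sup' (fun A => infA A y) hA)
  · rw [mW, dif_neg h, mW, dif_neg h]

theorem le_mW {A : Set (Fin n)} (hA : A ∈ Wfinset g) (x : Fin n → X) :
    infA A x ≤ mW g x := by
  rw [mW, dif_pos ⟨A, hA⟩]
  exact Finset.le_sup' (fun A => infA A x) hA

open Classical in
/-- A wild set on which the max-min is attained. -/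
noncomputable def Astar (x : Fin n → X) : Set (Fin n) :=
  if h : ∃ A, A ∈ Wfinset g ∧ mW g x = infA A x then h.choose else Classical.arbitrary _

theorem Astar_spec (hW : (Wfinset g).Nonempty) (x : Fin n → X) :
    Astar g x ∈ Wfinset g ∧ mW g x = infA (Astar g x) x := by
  have hex : ∃ A, A ∈ Wfinset g ∧ mW g x = infA A x := by
    obtain ⟨A, hA, hEq⟩ := Finset.exists_mem_eq_sup' hW (fun A => infA A x)
    exact ⟨A, hA, by rw [mW, dif_pos hW]; exact hEq⟩
  rw [Astar, dif_pos hex]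
  exact hex.choose_spec

/-- The almost unary coordinate functions out of which `g''` is composed. -/
noncomputable def sfun (i : Fin n) (x : Fin n → X) : X :=
  wit g (Astar g x) (bfun g (mW g x)) i

/-- The final monotone function. -/
noncomputable def gpp (x : Fin n → X) : X :=
  betaf g (g (fun i => sfun g i x))

theorem gpp_eq (hreg : (#X).IsRegular) (hbdd : ∀ s : Set X, BddAbove s ↔ #s < #X)
    (hW : (Wfinset g).Nonempty) (x : Fin n → X) : gpp g x = mW g x := by
  have hA : Wild g (Astar g x) := (mem_Wfinset g).mp (Astar_spec g hW x).1
  have hfe : (fun i => sfun g i x) = wit g (Astar g x) (bfun g (mW g x)) := rfl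
  rw [gpp, hfe]
  exact betaf_eq g hreg hbdd hA (mW g x)

theorem bddAbove_of_finite_iUnion {ι : Type*} [Finite ι] {f : ι → Set X}
    (h : ∀ j, BddAbove (f j)) : BddAbove (⋃ j, f j) := by
  have : (⋃ j, f j) = ⋃ j ∈ (Set.univ : Set ι), f j := by simp
  rw [this]
  exact (Set.Finite.bddAbove_biUnion Set.finite_univ).mpr (fun j _ => h j)

theorem sfun_AU (hreg : (#X).IsRegular) (hbdd : ∀ s : Set X, BddAbove s ↔ #s < #X)
    (hW : (Wfinset g).Nonempty) (i : Fin n) : AlmostUnary (sfun g i) := by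
  classical
  set D : X → Set X := fun t => {y : X | ∃ A : Set (Fin n), Wild g A ∧
    ((∃ γ, γ ≤ t ∧ y = wit g A (bfun g γ) i) ∨ y = aA g A i)} with hD
  have hDbdd : ∀ t, BddAbove (D t) := by
    intro t
    have hsub : D t ⊆ ⋃ A : Set (Fin n),
        (((fun γ => wit g A (bfun g γ) i) '' Set.Iic t) ∪ {aA g A i}) := by
      rintro y ⟨A, -, (⟨γ, hγ, rfl⟩ | rfl)⟩
      · exact Set.mem_iUnion.mpr ⟨A, Or.inl ⟨γ, hγ, rfl⟩⟩
      · exact Set.mem_iUnion.mpr ⟨A, Or.inr rfl⟩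
    refine BddAbove.mono hsub (bddAbove_of_finite_iUnion ?_)
    intro A
    apply BddAbove.union
    · apply (hbdd _).mpr
      exact lt_of_le_of_lt Cardinal.mk_image_le
        (card_of_bddAbove hbdd t (fun y hy => hy))
    · exact bddAbove_singleton
  refine ⟨i, fun t => subb (D t), ?_⟩
  intro x
  have hmem : sfun g i x ∈ D (x i) := by
    have hAst := Astar_spec g hW x
    have hA : Wild g (Astar g x) := (mem_Wfinset g).mp hAst.1
    by_cases hi : i ∈ Astar g x
    · refine ⟨Astar g x, hA, Or.inl ⟨mW g x, ?_, rfl⟩⟩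
      rw [hAst.2]
      exact infA_le hi x
    · exact ⟨Astar g x, hA, Or.inr ((wit_spec g hbdd hA _).1 i hi)⟩
  exact subb_spec hbdd (hDbdd (x i)) _ hmem

end

end GSProof

open GSProof in
/-- There is a monotone `g''` in the clone generated by `g` and the almost unary
functions, making every `g`-wild set `g''`-insane. -/
theorem exists_monotone_insane {X : Type*} [LinearOrder X] [WellFoundedLT X]
    (hreg : (#X).IsRegular) (hbdd : ∀ s : Set X, BddAbove s ↔ #s < #X)
    {n : ℕ} (g : (Fin n → X) → X) :
    ∃ g'' : (Fin n → X) → X, InCloneWithU g g'' ∧ Monotone g'' ∧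
      ∀ A : Set (Fin n), Wild g A → Insane g'' A := by
  classical
  have hXne : Nonempty X := by
    rw [← Cardinal.mk_ne_zero_iff]
    exact (lt_of_lt_of_le Cardinal.aleph0_pos hreg.aleph0_le).ne'
  by_cases hW : ∃ A : Set (Fin n), Wild g A
  · -- main case: there is a wild set
    have hWne : (Wfinset g).Nonempty := ⟨hW.choose, (mem_Wfinset g).mpr hW.choose_spec⟩
    refine ⟨gpp g, ?_, ?_, ?_⟩
    · -- clone membership
      intro C hC hAU hg
      have hs : ∀ i, sfun g i ∈ C n := fun i => hAU n _ (sfun_AU g hreg hbdd hWne i)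
      have h2 : (fun x => g (fun i => sfun g i x)) ∈ C n := hC.comp n n g (sfun g) hg hs
      have hBau : AlmostUnary (fun y : Fin 1 → X => betaf g (y 0)) := by
        have hgt : ∀ t : X, ∃ u, betaf g t < u := fun t => exists_gt hbdd _
        choose F hF using hgt
        exact ⟨0, F, fun y => hF (y 0)⟩
      have h3 := hC.comp 1 n (fun y : Fin 1 → X => betaf g (y 0))
        (fun _ => fun x => g (fun i => sfun g i x)) (hAU 1 _ hBau) (fun _ => h2)
      exact h3
    · -- monotonicity
      intro x y hxy
      rw [show gpp g x = mW g x from gpp_eq g hreg hbdd hWne x,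
        show gpp g y = mW g y from gpp_eq g hreg hbdd hWne y]
      exact mW_mono g hxy
    · -- insanity
      intro A hA a
      show #{y : X | ∃ x : Fin n → X, (∀ i, i ∉ A → x i = a i) ∧ gpp g x = y} = #X
      set T : Set X := {y : X | ∃ x : Fin n → X, (∀ i, i ∉ A → x i = a i) ∧ gpp g x = y}
        with hT
      have hub : ¬ BddAbove T := by
        rintro ⟨u, hu⟩
        obtain ⟨t, ht⟩ := exists_gt hbdd u
        set xt : Fin n → X := fun i => if i ∈ A then t else a i with hxt
        have hyT : gpp g xt ∈ T := ⟨xt, fun i hi => if_neg hi, rfl⟩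
        have h1 : gpp g xt ≤ u := hu hyT
        have h2 : t ≤ gpp g xt := by
          rw [gpp_eq g hreg hbdd hWne xt]
          refine le_trans (le_infA (wild_nonempty g hreg hA) ?_)
            (le_mW g ((mem_Wfinset g).mpr hA) xt)
          intro i hi
          exact (if_pos hi).symm.le
        exact absurd (le_trans h2 h1) (not_le.mpr ht)
      have hle : #T ≤ #X := Cardinal.mk_set_le T
      have hge : #X ≤ #T := by
        by_contra hcon
        rw [not_le] at hcon
        exact hub ((hbdd T).mpr hcon)
      exact le_antisymm hle hge
  · -- no wild sets: use a projection (or `g` itself if `n = 0`)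
    revert g
    cases n with
    | zero =>
      intro g hW
      refine ⟨g, fun C _ _ hg => hg, ?_, ?_⟩
      · intro x y _
        have hxy : x = y := funext fun i => i.elim0
        rw [hxy]
      · intro A hA
        exact absurd ⟨A, hA⟩ hW
    | succ m =>
      intro g hW
      refine ⟨fun x => x 0, fun C hC _ _ => hC.proj (m + 1) 0, fun x y hxy => hxy 0, ?_⟩
      intro A hA
      exact absurd ⟨A, hA⟩ hW
end

section
/- If f, g : X^n → X and f ≤_W g (g is at least as wild as f), then there exists h in the clone generated by g and all almost unary functions with f ≤ h pointwise. -/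
/-!
Given `x`, pick a threshold `p` such that the coordinates `≥ p` form an `f`-wild set `U` while
the coordinates `> p` form a set `V` that is not `f`-wild. Since `X` is regular, a function is
bounded on every box whose sides outside a non-wild set are bounded, so `f x ≤ M V p`. As `π '' U`
is `g`-wild, some input `u x` that agrees with a fixed tuple outside `π '' U` has `g (u x) ≥ M V p`.
Each coordinate `i ∈ π '' U` of `u x` depends only on `p ≤ x (π⁻¹ i)` and on finitely many choices
of `U` and `V`, so every `u i` is almost unary and `f ≤ g ∘ u`. If `Set.univ` itself is not
`f`-wild, then `f` is bounded and a constant composed with `g` dominates it.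
-/

open Cardinal

/-- `g` is at least as wild as `f`. -/
def LeqW {X : Type*} {n : ℕ} (f g : (Fin n → X) → X) : Prop :=
  ∃ π : Equiv.Perm (Fin n), ∀ A : Set (Fin n), Wild f A → Wild g (π '' A)

open Set

theorem Cardinal.pow_lt_of_lt_of_aleph0_le {a c : Cardinal} (hc : ℵ₀ ≤ c) (ha : a < c) :
    ∀ n : ℕ, a ^ n < c
  | 0 => by simpa using one_lt_aleph0.trans_le hc
  | n + 1 => by
    rw [pow_succ]
    exact mul_lt_of_lt hc (pow_lt_of_lt_of_aleph0_le hc ha n) ha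

theorem exists_threshold {ι α : Type*} [Finite ι] [LinearOrder α] (x : ι → α)
    {W : Set ι → Prop} (hW : Monotone W) (huniv : W univ) (hempty : ¬ W ∅) :
    ∃ p, W {i | p ≤ x i} ∧ ¬ W {i | p < x i} := by
  have hne : ∀ s : Set ι, W s → s.Nonempty := fun s hs =>
    nonempty_iff_ne_empty.2 fun h => hempty (h ▸ hs)
  obtain ⟨j₀, -, hj₀⟩ := exists_min_image univ x (toFinite _) (hne _ huniv)
  obtain ⟨j, hj, hjmax⟩ := exists_max_image {j | W {i | x j ≤ x i}} x (toFinite _)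
    ⟨j₀, hW (fun i _ => hj₀ i trivial) huniv⟩
  refine ⟨x j, hj, fun hV => ?_⟩
  obtain ⟨k, hjk, hkmin⟩ := exists_min_image _ x (toFinite _) (hne _ hV)
  have hk : W {i | x k ≤ x i} := hW hkmin hV
  exact (hjmax k hk).not_gt hjk

section Wild

variable {X : Type*} {n : ℕ} {f : (Fin n → X) → X}

theorem WildFor.mono {A A' : Set (Fin n)} {a : Fin n → X} (hAA' : A ⊆ A') (h : WildFor f A a) :
    WildFor f A' a :=
  le_antisymm (mk_set_le _) <| h.symm.le.trans <| mk_le_mk_of_subset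
    fun _ ⟨x, hx, hfx⟩ => ⟨x, fun i hi => hx i fun hiA => hi (hAA' hiA), hfx⟩

theorem Wild.mono {A A' : Set (Fin n)} (hAA' : A ⊆ A') : Wild f A → Wild f A' :=
  Exists.imp fun _ => WildFor.mono hAA'

theorem not_wild_empty (hX : 1 < #X) : ¬ Wild f ∅ := by
  rintro ⟨a, ha⟩
  have hsub :
      {y | ∃ x : Fin n → X, (∀ i, i ∉ (∅ : Set (Fin n)) → x i = a i) ∧ f x = y} ⊆ {f a} := by
    rintro _ ⟨x, hx, rfl⟩
    rw [funext fun i => hx i (notMem_empty i), mem_singleton_iff]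
  exact hX.not_ge (ha ▸ (mk_le_mk_of_subset hsub).trans_eq (mk_singleton _))

end Wild

section Clone

variable {X : Type*} [LT X] {n : ℕ} {g : (Fin n → X) → X}

theorem inCloneWithU_self : InCloneWithU g g := fun _ _ _ hg => hg

theorem AlmostUnary.inCloneWithU {k : ℕ} {h : (Fin k → X) → X} (hh : AlmostUnary h) :
    InCloneWithU g h :=
  fun _ _ hU _ => hU k h hh

theorem InCloneWithU.comp {m k : ℕ} {φ : (Fin m → X) → X} {u : Fin m → (Fin k → X) → X}
    (hφ : InCloneWithU g φ) (hu : ∀ i, InCloneWithU g (u i)) :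
    InCloneWithU g fun x => φ fun i => u i x :=
  fun C hC hU hg => hC.comp m k φ u (hφ C hC hU hg) fun i => hu i C hC hU hg

end Clone

section AlmostUnary

variable {X : Type*} {n : ℕ} {u : (Fin n → X) → X}

theorem almostUnary_of_le [Preorder X] [NoMaxOrder X] (k : Fin n) (F : X → X)
    (h : ∀ x, u x ≤ F (x k)) : AlmostUnary u := by
  choose G hG using fun t => exists_gt (F t)
  exact ⟨k, G, fun x => (h x).trans_lt (hG _)⟩

theorem almostUnary_of_forall_exists_le [LinearOrder X] [NoMaxOrder X] {J : Type*} [Finite J]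
    (k : Fin n) (φ : J → X → X) (h : ∀ x, ∃ j, u x ≤ φ j (x k)) : AlmostUnary u := by
  choose F hF using fun t =>
    have : Nonempty X := ⟨t⟩
    (finite_range fun j => φ j t).bddAbove
  exact almostUnary_of_le k F fun x =>
    let ⟨j, hj⟩ := h x
    hj.trans (hF _ ⟨j, rfl⟩)

end AlmostUnary

section SmallIsBounded

variable {X : Type*} [LinearOrder X] (hbdd : ∀ s : Set X, BddAbove s ↔ #s < #X)
include hbdd

theorem noMaxOrder_of_forall_bddAbove_iff : NoMaxOrder X := by
  refine ⟨fun a => ?_⟩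
  by_contra! h
  exact (lt_irrefl #X) (mk_univ (α := X) ▸ (hbdd univ).1 ⟨a, fun b _ => h b⟩)

theorem exists_majorant_on_Iic (φ : X → X) : ∃ ψ : X → X, ∀ s t, s ≤ t → φ s ≤ ψ t := by
  choose ψ hψ using fun t => (hbdd (φ '' Iic t)).2 (mk_image_le.trans_lt ((hbdd _).1 bddAbove_Iic))
  exact ⟨ψ, fun s t hst => hψ t (mem_image_of_mem φ hst)⟩

variable {n : ℕ} {f : (Fin n → X) → X}

theorem WildFor.exists_lt {A : Set (Fin n)} {a : Fin n → X} (h : WildFor f A a) (v : X) :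
    ∃ x, (∀ i ∉ A, x i = a i) ∧ v < f x := by
  by_contra! hv
  have hnb : ¬ BddAbove {y | ∃ x : Fin n → X, (∀ i, i ∉ A → x i = a i) ∧ f x = y} := by
    rw [hbdd, h]
    exact lt_irrefl _
  exact hnb ⟨v, by rintro _ ⟨x, hx, rfl⟩; exact hv x hx⟩

theorem exists_bound_of_not_wild (hreg : (#X).IsRegular) {B : Set (Fin n)} (hB : ¬ Wild f B)
    (t : X) : ∃ m, ∀ x, (∀ i ∉ B, x i ≤ t) → f x ≤ m := by
  let S := ⋃ a : Fin n → Iic t, {y | ∃ x : Fin n → X, (∀ i, i ∉ B → x i = a i) ∧ f x = y}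
  have hS : #S < #X := by
    refine (card_iUnion_lt_iff_forall_of_isRegular hreg ?_).2 fun a =>
      (mk_set_le _).lt_of_ne fun h => hB ⟨_, h⟩
    simpa using pow_lt_of_lt_of_aleph0_le hreg.aleph0_le ((hbdd _).1 bddAbove_Iic) n
  obtain ⟨m, hm⟩ := (hbdd S).2 hS
  exact ⟨m, fun x hx => hm <| mem_iUnion.2
    ⟨fun i => ⟨min (x i) t, min_le_right _ _⟩, x, fun i hi => (min_eq_left (hx i hi)).symm, rfl⟩⟩

theorem exists_almostUnary_dominating_of_wild_univ (hreg : (#X).IsRegular)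
    {g : (Fin n → X) → X} {π : Equiv.Perm (Fin n)} (hπ : ∀ A, Wild f A → Wild g (π '' A))
    (hf : Wild f univ) :
    ∃ u : Fin n → (Fin n → X) → X, (∀ i, AlmostUnary (u i)) ∧ ∀ x, f x ≤ g fun i => u i x := by
  have := noMaxOrder_of_forall_bddAbove_iff hbdd
  choose p hpU hpV using fun x : Fin n → X => exists_threshold x (fun _ _ => Wild.mono) hf
    (not_wild_empty (one_lt_aleph0.trans_le hreg.aleph0_le))
  choose M hM using fun (B : {B // ¬ Wild f B}) t => exists_bound_of_not_wild hbdd hreg B.2 t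
  choose a T hT using fun A : {A // Wild g A} => A.2.imp fun _ ha => ha.exists_lt hbdd
  let U (x : Fin n → X) : {A // Wild g A} := ⟨π '' {i | p x ≤ x i}, hπ _ (hpU x)⟩
  let V (x : Fin n → X) : {B // ¬ Wild f B} := ⟨{i | p x < x i}, hpV x⟩
  refine ⟨fun i x => T (U x) (M (V x) (p x)) i, fun i => ?_, fun x => ?_⟩
  · choose ψ hψ using fun AB : {A // Wild g A} × {B // ¬ Wild f B} =>
      exists_majorant_on_Iic hbdd fun s => T AB.1 (M AB.2 s) i
    refine almostUnary_of_forall_exists_le (π.symm i) (fun AB t => max (ψ AB t) (a AB.1 i))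
      fun x => ⟨(U x, V x), ?_⟩
    by_cases hi : i ∈ (U x).1
    · obtain ⟨j, hj, rfl⟩ := hi
      have hpj : p x ≤ x (π.symm (π j)) := by rwa [π.symm_apply_apply]
      exact le_max_of_le_left (hψ (U x, V x) _ _ hpj)
    · exact le_max_of_le_right ((hT _ _).1 i hi).le
  · exact (hM (V x) (p x) x fun i hi => not_lt.1 hi).trans (hT _ _).2.le

end SmallIsBounded

theorem exists_dominating_of_leqW_general {X : Type*} [LinearOrder X]
    (hreg : (#X).IsRegular) (hbdd : ∀ s : Set X, BddAbove s ↔ #s < #X)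
    {n : ℕ} (f g : (Fin n → X) → X) (hfg : LeqW f g) :
    ∃ h : (Fin n → X) → X, InCloneWithU g h ∧ ∀ x, f x ≤ h x := by
  obtain ⟨π, hπ⟩ := hfg
  by_cases hf : Wild f univ
  · obtain ⟨u, hu, hfu⟩ := exists_almostUnary_dominating_of_wild_univ hbdd hreg hπ hf
    exact ⟨_, inCloneWithU_self.comp fun i => (hu i).inCloneWithU, hfu⟩
  · have := noMaxOrder_of_forall_bddAbove_iff hbdd
    obtain ⟨t⟩ : Nonempty X := mk_ne_zero_iff.1 (aleph0_pos.trans_le hreg.aleph0_le).ne'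
    obtain ⟨m, hm⟩ := exists_bound_of_not_wild hbdd hreg hf t
    refine ⟨fun _ => m, ?_, fun x => hm x fun i hi => (hi (mem_univ i)).elim⟩
    -- no `0`-ary function is almost unary, so for `n = 0` the constant must be fed through `g`
    have hm_const : AlmostUnary fun _ : Fin 1 → X => m :=
      almostUnary_of_le 0 (fun _ => m) fun _ => le_rfl
    exact hm_const.inCloneWithU.comp (u := fun _ => g) fun _ => inCloneWithU_self

/-- If `f ≤_W g` then `f` is dominated pointwise by some member of the clone generated
by `g` and all almost unary functions. -/
theorem exists_dominating_of_leqW {X : Type*} [LinearOrder X] [WellFoundedLT X]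
    (hreg : (#X).IsRegular) (hbdd : ∀ s : Set X, BddAbove s ↔ #s < #X)
    {n : ℕ} (f g : (Fin n → X) → X) (hfg : LeqW f g) :
    ∃ h : (Fin n → X) → X, InCloneWithU g h ∧ ∀ x, f x ≤ h x :=
  exists_dominating_of_leqW_general hreg hbdd f g hfg
end

section
/- Every clone containing all binary almost unary functions is downward closed: if f belongs to the clone and g ≤ f pointwise, then g belongs to the clone. -/
open Cardinal

section Aux

variable {X : Type*} [LinearOrder X] (e : X ≃ X × X × Bool) (d0 : X)

/-- payload of a code -/
def pkf : X → X := fun c => (e c).1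
/-- previous code / base of a code -/
def bsf : X → X := fun c => (e c).2.1
/-- flag of a code -/
def flf : X → Bool := fun c => (e c).2.2

omit [LinearOrder X] in
@[simp] lemma pkf_symm (p q : X) (t : Bool) : pkf e (e.symm (p, q, t)) = p := by simp [pkf]
omit [LinearOrder X] in
@[simp] lemma bsf_symm (p q : X) (t : Bool) : bsf e (e.symm (p, q, t)) = q := by simp [bsf]
omit [LinearOrder X] in
@[simp] lemma flf_symm (p q : X) (t : Bool) : flf e (e.symm (p, q, t)) = t := by simp [flf]

/-- one encoding step: pack `a` onto code `b` if `a` is below the threshold `G b` -/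
noncomputable def stp (G : X → X) (a b : X) : X :=
  if a ≤ G b then e.symm (a, b, true) else e.symm (d0, b, false)

lemma bsf_stp (G : X → X) (a b : X) : bsf e (stp e d0 G a b) = b := by
  unfold stp; split_ifs <;> simp

lemma pkf_stp_pos {G : X → X} {a b : X} (h : a ≤ G b) : pkf e (stp e d0 G a b) = a := by
  simp [stp, h]

lemma flf_stp {G : X → X} (a b : X) : flf e (stp e d0 G a b) = decide (a ≤ G b) := by
  unfold stp; split_ifs with h <;> simp [h]

/-- chain encoding of a list onto a base -/
noncomputable def enc (G : X → X) : List X → X → X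
  | [] => fun b => b
  | a :: l => fun b => stp e d0 (fun c => G ((bsf e)^[l.length] c)) a (enc G l b)

lemma enc_cons (G : X → X) (a : X) (l : List X) (b : X) :
    enc e d0 G (a :: l) b = stp e d0 (fun c => G ((bsf e)^[l.length] c)) a (enc e d0 G l b) :=
  rfl

lemma bsf_iter_enc (G : X → X) (l : List X) (b : X) :
    (bsf e)^[l.length] (enc e d0 G l b) = b := by
  induction l with
  | nil => rfl
  | cons a l ih =>
      rw [List.length_cons, enc_cons, Function.iterate_succ_apply, bsf_stp, ih]

lemma bsf_iter_enc_drop (G : X → X) (l : List X) (b : X) :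
    ∀ i, i ≤ l.length → (bsf e)^[i] (enc e d0 G l b) = enc e d0 G (l.drop i) b := by
  induction l with
  | nil =>
      intro i hi
      have : i = 0 := Nat.le_zero.mp hi
      subst this; rfl
  | cons a l ih =>
      intro i hi
      cases i with
      | zero => rfl
      | succ j =>
          rw [enc_cons, Function.iterate_succ_apply, bsf_stp, List.drop_succ_cons]
          exact ih j (Nat.succ_le_succ_iff.mp hi)

lemma enc_decode (G : X → X) (l : List X) (b : X) (i : ℕ) (hi : i < l.length) :
    (bsf e)^[i] (enc e d0 G l b) =
      stp e d0 (fun c => G ((bsf e)^[(l.drop (i + 1)).length] c)) l[i]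
        (enc e d0 G (l.drop (i + 1)) b) := by
  rw [bsf_iter_enc_drop e d0 G l b i hi.le]
  have h : l.drop i = l[i] :: l.drop (i + 1) := List.drop_eq_getElem_cons hi
  rw [h, enc_cons]

lemma pkf_enc (G : X → X) (l : List X) (b : X) (i : ℕ) (hi : i < l.length)
    (hc : l[i] ≤ G b) : pkf e ((bsf e)^[i] (enc e d0 G l b)) = l[i] := by
  rw [enc_decode e d0 G l b i hi]
  exact pkf_stp_pos e d0 (by rw [bsf_iter_enc]; exact hc)

lemma flf_enc (G : X → X) (l : List X) (b : X) (i : ℕ) (hi : i < l.length) :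
    flf e ((bsf e)^[i] (enc e d0 G l b)) = decide (l[i] ≤ G b) := by
  rw [enc_decode e d0 G l b i hi, flf_stp, bsf_iter_enc]

/-- the minimal-index-argmax predicate -/
def Qpred {n : ℕ} (x : Fin n → X) (m : Fin n) : Prop :=
  (∀ j, x j ≤ x m) ∧ ∀ i, (∀ j, x j ≤ x i) → m ≤ i

/-- decoding a code into a tuple -/
noncomputable def reconf (n : ℕ) (c : X) : Fin n → X := fun i => pkf e ((bsf e)^[(i : ℕ)] c)

/-- the first chain: encode the whole tuple through coordinate `m` -/
noncomputable def chain1 {n : ℕ} (m : Fin n) (x : Fin n → X) : X :=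
  enc e d0 id ((List.finRange n).map (fun i => x i)) (x m)

open Classical in
/-- the candidate producer for coordinate `m` -/
noncomputable def umf {n : ℕ} (h : (Fin n → X) → X) (m : Fin n) (c : X) : X :=
  if (∀ i : Fin n, flf e ((bsf e)^[(i : ℕ)] c) = true) ∧ Qpred (reconf e n c) m
  then e.symm (h (reconf e n c), d0, true) else e.symm (d0, d0, false)

/-- the candidate function for coordinate `m` -/
noncomputable def vmf {n : ℕ} (h : (Fin n → X) → X) (m : Fin n) (x : Fin n → X) : X :=
  umf e d0 h m (chain1 e d0 m x)

/-- the second chain: encode all candidates through coordinate `k` -/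
noncomputable def chain2 {n : ℕ} (BB : X → X) (h : (Fin n → X) → X) (k : Fin n)
    (x : Fin n → X) : X :=
  enc e d0 BB ((List.finRange n).map (fun m => vmf e d0 h m x)) (x k)

open Classical in
/-- the final selector -/
noncomputable def Uf (n : ℕ) (c : X) : X :=
  if hE : ∃ i : Fin n, flf e (pkf e ((bsf e)^[(i : ℕ)] c)) = true
  then pkf e (pkf e ((bsf e)^[((hE.choose : Fin n) : ℕ)] c)) else d0

end Aux

section CloneAux

variable {X : Type*} [LinearOrder X]

lemma exists_sub (hbdd : ∀ s : Set X, BddAbove s ↔ #s < #X)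
    (s : Set X) (hs : #s < #X) : ∃ c : X, ∀ a ∈ s, a < c := by
  obtain ⟨b, hb⟩ := (hbdd s).2 hs
  have hu : ¬ BddAbove (Set.univ : Set X) := by
    intro H
    have := (hbdd Set.univ).1 H
    simp at this
  obtain ⟨y, -, hy⟩ := not_bddAbove_iff.mp hu b
  exact ⟨y, fun a ha => lt_of_le_of_lt (hb ha) hy⟩

lemma small_Iic (hbdd : ∀ s : Set X, BddAbove s ↔ #s < #X) (c : X) :
    #(Set.Iic c) < #X :=
  (hbdd _).1 ⟨c, fun a ha => ha⟩

lemma small_union_images (hreg : (#X).IsRegular)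
    (s : Set X) (hs : #s < #X) (φ ψ : X → X) :
    #(↥(φ '' s ∪ ψ '' s)) < #X :=
  lt_of_le_of_lt (Cardinal.mk_union_le _ _)
    (Cardinal.add_lt_of_lt hreg.aleph0_le
      (lt_of_le_of_lt Cardinal.mk_image_le hs) (lt_of_le_of_lt Cardinal.mk_image_le hs))

lemma comp2 {C : ∀ m : ℕ, Set ((Fin m → X) → X)} (hC : IsClone C)
    {n : ℕ} {F2 : (Fin 2 → X) → X} {u v : (Fin n → X) → X}
    (hF : F2 ∈ C 2) (hu : u ∈ C n) (hv : v ∈ C n) :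
    (fun x => F2 ![u x, v x]) ∈ C n := by
  have h := hC.comp 2 n F2 ![u, v] hF (by
    intro i; fin_cases i <;> simpa)
  have heq : (fun x => F2 (fun i => ![u, v] i x)) = fun x => F2 ![u x, v x] := by
    funext x; congr 1; funext i; fin_cases i <;> rfl
  rwa [heq] at h

lemma comp1 (hbdd : ∀ s : Set X, BddAbove s ↔ #s < #X)
    {C : ∀ m : ℕ, Set ((Fin m → X) → X)} (hC : IsClone C)
    (hT1 : ∀ h : (Fin 2 → X) → X, AlmostUnary h → h ∈ C 2)
    {n : ℕ} (u : X → X) {v : (Fin n → X) → X} (hv : v ∈ C n) :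
    (fun x => u (v x)) ∈ C n := by
  have hex : ∀ a : X, ∃ c : X, u a < c := by
    intro a
    obtain ⟨c, hc⟩ := exists_sub hbdd (Set.Iic (u a)) (small_Iic hbdd (u a))
    exact ⟨c, hc _ le_rfl⟩
  choose F hF using hex
  have hmem : (fun y : Fin 2 → X => u (y 0)) ∈ C 2 := hT1 _ ⟨0, F, fun y => hF (y 0)⟩
  exact comp2 hC hmem hv hv

lemma stp_mem (hreg : (#X).IsRegular) (hbdd : ∀ s : Set X, BddAbove s ↔ #s < #X)
    {C : ∀ m : ℕ, Set ((Fin m → X) → X)}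
    (hT1 : ∀ h : (Fin 2 → X) → X, AlmostUnary h → h ∈ C 2)
    (e : X ≃ X × X × Bool) (d0 : X) (G : X → X) :
    (fun v : Fin 2 → X => stp e d0 G (v 0) (v 1)) ∈ C 2 := by
  have hex : ∀ b : X, ∃ cb : X, ∀ a : X, stp e d0 G a b < cb := by
    intro b
    obtain ⟨cb, hcb⟩ := exists_sub hbdd
      ((fun a => e.symm (a, b, true)) '' Set.Iic (max (G b) d0) ∪
        (fun a => e.symm (a, b, false)) '' Set.Iic (max (G b) d0))
      (small_union_images hreg _ (small_Iic hbdd _) _ _)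
    refine ⟨cb, fun a => hcb _ ?_⟩
    unfold stp
    split_ifs with h
    · exact Or.inl ⟨a, le_trans h (le_max_left _ _), rfl⟩
    · exact Or.inr ⟨d0, le_max_right _ _, rfl⟩
  choose F hF using hex
  exact hT1 _ ⟨1, F, fun v => hF (v 1) (v 0)⟩

lemma enc_mem (hreg : (#X).IsRegular) (hbdd : ∀ s : Set X, BddAbove s ↔ #s < #X)
    {C : ∀ m : ℕ, Set ((Fin m → X) → X)} (hC : IsClone C)
    (hT1 : ∀ h : (Fin 2 → X) → X, AlmostUnary h → h ∈ C 2)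
    (e : X ≃ X × X × Bool) (d0 : X) (G : X → X) {n : ℕ}
    (ws : List ((Fin n → X) → X)) (hws : ∀ w ∈ ws, w ∈ C n)
    {b : (Fin n → X) → X} (hb : b ∈ C n) :
    (fun x => enc e d0 G (ws.map (fun w => w x)) (b x)) ∈ C n := by
  induction ws with
  | nil => simpa [enc] using hb
  | cons w ws ih =>
      have h1 := comp2 hC (stp_mem hreg hbdd hT1 e d0 (fun c => G ((bsf e)^[ws.length] c)))
        (hws w List.mem_cons_self) (ih (fun w' hw' => hws w' (List.mem_cons_of_mem _ hw')))
      have heq : (fun x => (fun v : Fin 2 → X =>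
          stp e d0 (fun c => G ((bsf e)^[ws.length] c)) (v 0) (v 1))
            ![w x, enc e d0 G (ws.map (fun w => w x)) (b x)]) =
          (fun x => enc e d0 G (((w :: ws)).map (fun w => w x)) (b x)) := by
        funext x
        simp only [List.map_cons, enc_cons, List.length_map]
        rfl
      rwa [heq] at h1

/-- key lemma: every almost unary function belongs to the clone -/
lemma au_mem (hreg : (#X).IsRegular) (hbdd : ∀ s : Set X, BddAbove s ↔ #s < #X)
    {C : ∀ m : ℕ, Set ((Fin m → X) → X)} (hC : IsClone C)
    (hT1 : ∀ h : (Fin 2 → X) → X, AlmostUnary h → h ∈ C 2)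
    {n : ℕ} (h : (Fin n → X) → X) (hau : AlmostUnary h) : h ∈ C n := by
  classical
  obtain ⟨k, F, hF⟩ := hau
  -- a default element
  have hne : Nonempty X :=
    Cardinal.mk_ne_zero_iff.mp (Cardinal.aleph0_pos.trans_le hreg.aleph0_le).ne'
  obtain ⟨d0⟩ := hne
  -- a coding equivalence
  have h2le : (2 : Cardinal) ≤ #X := by
    refine le_trans ?_ hreg.aleph0_le
    exact_mod_cast (Cardinal.nat_lt_aleph0 2).le
  have hcard : #(X × X × Bool) = #X := by
    rw [Cardinal.mk_prod, Cardinal.mk_prod, Cardinal.mk_bool,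
      Cardinal.lift_id, Cardinal.lift_uzero, Cardinal.lift_id', Cardinal.lift_ofNat]
    rw [Cardinal.mul_eq_left hreg.aleph0_le h2le (by norm_num)]
    exact Cardinal.mul_eq_self hreg.aleph0_le
  obtain ⟨e⟩ := Cardinal.eq.mp hcard.symm
  -- existence of the minimal-index argmax
  have hQex : ∀ x : Fin n → X, ∃ m, Qpred x m := by
    intro x
    obtain ⟨i0, -, hi0⟩ := Finset.exists_max_image Finset.univ x ⟨k, Finset.mem_univ k⟩
    set T : Finset (Fin n) := Finset.univ.filter (fun i => ∀ j, x j ≤ x i) with hT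
    have hTne : T.Nonempty := ⟨i0, by
      simp only [hT, Finset.mem_filter, Finset.mem_univ, true_and]
      exact fun j => hi0 j (Finset.mem_univ j)⟩
    refine ⟨T.min' hTne, ?_, ?_⟩
    · have := T.min'_mem hTne
      simp only [hT, Finset.mem_filter, Finset.mem_univ, true_and] at this
      exact this
    · intro i hi
      exact T.min'_le i (by
        simp only [hT, Finset.mem_filter, Finset.mem_univ, true_and]
        exact hi)
  -- list facts
  have hget : ∀ (x : Fin n → X) (i : Fin n),
      ((List.finRange n).map (fun i => x i))[(i : ℕ)]'(by simp [i.isLt]) = x i := by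
    intro x i
    simp
  -- decoding of chain 1
  have hdec1pk : ∀ (m : Fin n) (x : Fin n → X) (i : Fin n), x i ≤ x m →
      pkf e ((bsf e)^[(i : ℕ)] (chain1 e d0 m x)) = x i := by
    intro m x i hle
    unfold chain1
    have := pkf_enc e d0 id ((List.finRange n).map (fun i => x i)) (x m) (i : ℕ)
      (by simp [i.isLt]) (by rw [hget]; exact hle)
    rw [this, hget]
  have hdec1fl : ∀ (m : Fin n) (x : Fin n → X) (i : Fin n),
      flf e ((bsf e)^[(i : ℕ)] (chain1 e d0 m x)) = decide (x i ≤ x m) := by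
    intro m x i
    unfold chain1
    have := flf_enc e d0 id ((List.finRange n).map (fun i => x i)) (x m) (i : ℕ)
      (by simp [i.isLt])
    rw [this, hget]
    rfl
  -- correctness of candidates
  have hvm_true : ∀ (m : Fin n) (x : Fin n → X), Qpred x m →
      vmf e d0 h m x = e.symm (h x, d0, true) := by
    intro m x hQ
    have hflags : ∀ i : Fin n, flf e ((bsf e)^[(i : ℕ)] (chain1 e d0 m x)) = true := by
      intro i
      rw [hdec1fl m x i]
      simpa using hQ.1 i
    have hrec : reconf e n (chain1 e d0 m x) = x := by
      funext i
      exact hdec1pk m x i (hQ.1 i)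
    unfold vmf umf
    rw [if_pos (by rw [hrec]; exact ⟨hflags, hQ⟩), hrec]
  have hvm_false : ∀ (m : Fin n) (x : Fin n → X), ¬ Qpred x m →
      vmf e d0 h m x = e.symm (d0, d0, false) := by
    intro m x hQ
    unfold vmf umf
    rw [if_neg]
    rintro ⟨hflags, hQ'⟩
    have hle : ∀ i : Fin n, x i ≤ x m := by
      intro i
      have := hflags i
      rw [hdec1fl m x i] at this
      simpa using this
    have hrec : reconf e n (chain1 e d0 m x) = x := by
      funext i
      exact hdec1pk m x i (hle i)
    rw [hrec] at hQ'
    exact hQ hQ'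
  -- bound for the candidates in terms of coordinate k
  have hBBex : ∀ z : X, ∃ c : X, ∀ p ∈ Set.Iic (max (F z) d0), ∀ t : Bool,
      e.symm (p, d0, t) < c := by
    intro z
    obtain ⟨c, hc⟩ := exists_sub hbdd
      ((fun p => e.symm (p, d0, true)) '' Set.Iic (max (F z) d0) ∪
        (fun p => e.symm (p, d0, false)) '' Set.Iic (max (F z) d0))
      (small_union_images hreg _ (small_Iic hbdd _) _ _)
    refine ⟨c, fun p hp t => ?_⟩
    cases t
    · exact hc _ (Or.inr ⟨p, hp, rfl⟩)
    · exact hc _ (Or.inl ⟨p, hp, rfl⟩)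
  choose BB hBB using hBBex
  have hvm_bdd : ∀ (m : Fin n) (x : Fin n → X), vmf e d0 h m x < BB (x k) := by
    intro m x
    by_cases hQ : Qpred x m
    · rw [hvm_true m x hQ]
      exact hBB (x k) (h x) (le_trans (hF x).le (le_max_left _ _)) true
    · rw [hvm_false m x hQ]
      exact hBB (x k) d0 (le_max_right _ _) false
  -- decoding of chain 2
  have hget2 : ∀ (x : Fin n → X) (i : Fin n),
      ((List.finRange n).map (fun m => vmf e d0 h m x))[(i : ℕ)]'(by simp [i.isLt]) =
        vmf e d0 h i x := by
    intro x i
    simp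
  have hdec2pk : ∀ (x : Fin n → X) (i : Fin n),
      pkf e ((bsf e)^[(i : ℕ)] (chain2 e d0 BB h k x)) = vmf e d0 h i x := by
    intro x i
    unfold chain2
    have := pkf_enc e d0 BB ((List.finRange n).map (fun m => vmf e d0 h m x)) (x k) (i : ℕ)
      (by simp [i.isLt]) (by rw [hget2]; exact (hvm_bdd i x).le)
    rw [this, hget2]
  -- h agrees with Uf ∘ chain2
  have hfinal : h = fun x => Uf e d0 n (chain2 e d0 BB h k x) := by
    funext x
    obtain ⟨m, hm⟩ := hQex x
    have hEx : ∃ i : Fin n,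
        flf e (pkf e ((bsf e)^[(i : ℕ)] (chain2 e d0 BB h k x))) = true := by
      refine ⟨m, ?_⟩
      rw [hdec2pk x m, hvm_true m x hm]
      simp
    unfold Uf
    rw [dif_pos hEx]
    have hflag := hEx.choose_spec
    rw [hdec2pk x hEx.choose] at hflag
    rw [hdec2pk x hEx.choose]
    by_cases hQ' : Qpred x hEx.choose
    · rw [hvm_true _ _ hQ']
      simp
    · rw [hvm_false _ _ hQ'] at hflag
      simp at hflag
  -- memberships
  have hc1mem : ∀ m : Fin n, (fun x => chain1 e d0 m x) ∈ C n := by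
    intro m
    have hmem := enc_mem hreg hbdd hC hT1 e d0 id
      ((List.finRange n).map (fun i => fun x : Fin n → X => x i))
      (by
        intro w hw
        obtain ⟨i, -, rfl⟩ := List.mem_map.mp hw
        exact hC.proj n i)
      (hC.proj n m)
    have heq : (fun x => enc e d0 id
        (((List.finRange n).map (fun i => fun x : Fin n → X => x i)).map (fun w => w x))
        (x m)) = (fun x => chain1 e d0 m x) := by
      funext x
      unfold chain1
      rw [List.map_map]
      rfl
    rwa [heq] at hmem
  have hvmmem : ∀ m : Fin n, (fun x => vmf e d0 h m x) ∈ C n := by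
    intro m
    exact comp1 hbdd hC hT1 (umf e d0 h m) (hc1mem m)
  have hc2mem : (fun x => chain2 e d0 BB h k x) ∈ C n := by
    have hmem := enc_mem hreg hbdd hC hT1 e d0 BB
      ((List.finRange n).map (fun m => fun x => vmf e d0 h m x))
      (by
        intro w hw
        obtain ⟨i, -, rfl⟩ := List.mem_map.mp hw
        exact hvmmem i)
      (hC.proj n k)
    have heq : (fun x => enc e d0 BB
        (((List.finRange n).map (fun m => fun x => vmf e d0 h m x)).map (fun w => w x))
        (x k)) = (fun x => chain2 e d0 BB h k x) := by
      funext x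
      unfold chain2
      rw [List.map_map]
      rfl
    rwa [heq] at hmem
  rw [hfinal]
  exact comp1 hbdd hC hT1 (Uf e d0 n) hc2mem

end CloneAux

/-- Every clone containing all binary almost unary functions is downward closed. -/
theorem clone_downward_closed {X : Type*} [LinearOrder X] [WellFoundedLT X]
    (hreg : (#X).IsRegular) (hbdd : ∀ s : Set X, BddAbove s ↔ #s < #X)
    (C : ∀ m : ℕ, Set ((Fin m → X) → X)) (hC : IsClone C)
    (hT1 : ∀ h : (Fin 2 → X) → X, AlmostUnary h → h ∈ C 2)
    {n : ℕ} (f g : (Fin n → X) → X) (hf : f ∈ C n) (hle : ∀ x, g x ≤ f x) :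
    g ∈ C n := by
  classical
  -- a successor-like bound
  have hsucc : ∀ a : X, ∃ c : X, a < c := by
    intro a
    obtain ⟨c, hc⟩ := exists_sub hbdd (Set.Iic a) (small_Iic hbdd a)
    exact ⟨c, hc a le_rfl⟩
  choose sc hsc using hsucc
  -- the (n+1)-ary min function
  have hmau : AlmostUnary (fun y : Fin (n + 1) → X => min (g (Fin.init y)) (y (Fin.last n))) := by
    refine ⟨Fin.last n, sc, fun y => ?_⟩
    exact lt_of_le_of_lt (min_le_right _ _) (hsc _)
  have hmmem : (fun y : Fin (n + 1) → X => min (g (Fin.init y)) (y (Fin.last n))) ∈ C (n + 1) :=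
    au_mem hreg hbdd hC hT1 _ hmau
  -- compose with (projections, f)
  have hgsmem : ∀ i : Fin (n + 1),
      (Fin.lastCases f (fun j => fun x => x j) i : (Fin n → X) → X) ∈ C n := by
    intro i
    refine Fin.lastCases ?_ ?_ i
    · simpa using hf
    · intro j
      simpa using hC.proj n j
  have hcomp := hC.comp (n + 1) n _ (fun i => Fin.lastCases f (fun j => fun x => x j) i)
    hmmem hgsmem
  have heq : (fun x => (fun y : Fin (n + 1) → X => min (g (Fin.init y)) (y (Fin.last n)))
      (fun i => Fin.lastCases f (fun j => fun x => x j) i x)) = g := by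
    funext x
    have harg : (fun i => (Fin.lastCases f (fun j => fun x => x j) i : (Fin n → X) → X) x) =
        Fin.snoc x (f x) := by
      funext i
      refine Fin.lastCases ?_ ?_ i
      · simp
      · intro j
        simp
    rw [harg]
    simp only [Fin.init_snoc, Fin.snoc_last]
    exact min_eq_left (hle x)
  rwa [heq] at hcomp
end

section
/- The binary almost unary functions generate all almost unary functions: for every n, every almost unary f : X^n → X lies in the clone generated by the binary almost unary functions. -/
open Cardinal

private lemma au_strict_bound {X : Type*} [LinearOrder X]
    (hbdd : ∀ s : Set X, BddAbove s ↔ #s < #X)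
    (s : Set X) (hs : #s < #X) : ∃ b : X, ∀ t ∈ s, t < b := by
  obtain ⟨b, hb⟩ := (hbdd s).2 hs
  have huniv : ¬ BddAbove (Set.univ : Set X) := by
    rw [hbdd]; simp
  rw [not_bddAbove_iff] at huniv
  obtain ⟨c, -, hc⟩ := huniv b
  exact ⟨c, fun t ht => lt_of_le_of_lt (hb ht) hc⟩

private lemma au_small_Iic {X : Type*} [LinearOrder X]
    (hbdd : ∀ s : Set X, BddAbove s ↔ #s < #X) (a : X) : #(Set.Iic a) < #X :=
  (hbdd _).1 ⟨a, fun _ ht => ht⟩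

private lemma au_small_Iio {X : Type*} [LinearOrder X]
    (hbdd : ∀ s : Set X, BddAbove s ↔ #s < #X) (a : X) : #(Set.Iio a) < #X :=
  (hbdd _).1 ⟨a, fun _ ht => le_of_lt ht⟩

private lemma au_small_insert {X : Type*} [LinearOrder X]
    (hreg : (#X).IsRegular) (a : X) (s : Set X) (hs : #s < #X) :
    #(insert a s : Set X) < #X :=
  lt_of_le_of_lt Cardinal.mk_insert_le
    (Cardinal.add_lt_of_lt hreg.aleph0_le hs
      (lt_of_lt_of_le Cardinal.one_lt_aleph0 hreg.aleph0_le))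

private lemma au_of_mem {X : Type*} [LinearOrder X]
    (hbdd : ∀ s : Set X, BddAbove s ↔ #s < #X) {m : ℕ}
    (g : (Fin m → X) → X) (k : Fin m) (S : X → Set X)
    (hS : ∀ a, #(S a) < #X) (hg : ∀ x, g x ∈ S (x k)) : AlmostUnary g := by
  choose Fb hFb using fun a => au_strict_bound hbdd (S a) (hS a)
  exact ⟨k, Fb, fun x => hFb (x k) (g x) (hg x)⟩

private lemma snoc_zero {X : Type*} {m : ℕ} (u : Fin (m + 1) → X) (a : X) :
    (Fin.snoc u a : Fin (m + 2) → X) 0 = u 0 := by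
  have h : (0 : Fin (m + 2)) = Fin.castSucc 0 := by simp
  rw [h, Fin.snoc_castSucc]

private lemma snoc_snoc_eq {X : Type*} {m : ℕ} (x : Fin (m + 2) → X) :
    (Fin.snoc (Fin.snoc (fun s : Fin m => x (Fin.castSucc (Fin.castSucc s)))
      (x (Fin.castSucc (Fin.last m)))) (x (Fin.last (m + 1))) : Fin (m + 2) → X) = x := by
  have h1 : (fun s : Fin m => x (Fin.castSucc (Fin.castSucc s))) = Fin.init (Fin.init x) := by
    funext s; simp [Fin.init]
  have h2 : x (Fin.castSucc (Fin.last m)) = Fin.init x (Fin.last m) := by simp [Fin.init]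
  rw [h1, h2, Fin.snoc_init_self, Fin.snoc_init_self]

/-- The binary almost unary functions generate all almost unary functions. -/
theorem almostUnary_generated_by_binary {X : Type*} [LinearOrder X] [WellFoundedLT X]
    (hreg : (#X).IsRegular) (hbdd : ∀ s : Set X, BddAbove s ↔ #s < #X)
    {n : ℕ} (f : (Fin n → X) → X) (hf : AlmostUnary f) :
    ∀ C : ∀ m : ℕ, Set ((Fin m → X) → X), IsClone C →
      (∀ h : (Fin 2 → X) → X, AlmostUnary h → h ∈ C 2) → f ∈ C n := by
  classical
  intro C hC hT1
  have haleph := hreg.aleph0_le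
  have hX : Infinite X := Cardinal.infinite_iff.2 haleph
  -- master embedding providing pairing functions / tags
  obtain ⟨e⟩ : Nonempty ((Option (X × X) ⊕ ((X × X) ⊕ X)) ↪ X) := by
    rw [← Cardinal.le_def]
    have h2 : #(X × X) = #X := by
      rw [Cardinal.mk_prod, Cardinal.lift_id, Cardinal.mul_eq_self haleph]
    have h1le : (1 : Cardinal) ≤ #X := le_trans (le_of_lt Cardinal.one_lt_aleph0) haleph
    have hxx : #X + #X = #X := Cardinal.add_eq_self haleph
    simp only [Cardinal.mk_sum, Cardinal.mk_option, Cardinal.lift_id, h2]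
    calc #X + 1 + (#X + #X) ≤ #X + #X + (#X + #X) :=
          add_le_add (add_le_add le_rfl h1le) le_rfl
      _ = #X := by rw [hxx, hxx]
  set pp : X × X → X := fun ab => e (Sum.inl (some ab)) with hppdef
  set w0 : X := e (Sum.inl none) with hw0def
  set sv : X × X → X := fun xv => e (Sum.inr (Sum.inl xv)) with hsvdef
  set si : X → X := fun x => e (Sum.inr (Sum.inr x)) with hsidef
  have hppinj : Function.Injective pp := by
    intro a b h
    simp only [hppdef] at h
    simpa using e.injective h
  have hsvinj : Function.Injective sv := by
    intro a b h
    simp only [hsvdef] at h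
    simpa using e.injective h
  have hsiinj : Function.Injective si := by
    intro a b h
    simp only [hsidef] at h
    simpa using e.injective h
  have hppw0 : ∀ ab, pp ab ≠ w0 := by
    intro ab h
    simp only [hppdef, hw0def] at h
    simpa using e.injective h
  have hsvsi : ∀ xv x0, sv xv ≠ si x0 := by
    intro xv x0 h
    simp only [hsvdef, hsidef] at h
    simpa using e.injective h
  suffices H : ∀ (m : ℕ) (g : (Fin m → X) → X), AlmostUnary g → g ∈ C m from H n f hf
  intro m
  induction m using Nat.strong_induction_on with
  | _ m ih =>
  rcases m with _ | _ | _ | l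
  · -- arity 0 : impossible
    intro g hg
    obtain ⟨k, -, -⟩ := hg
    exact k.elim0
  · -- arity 1
    intro g hg
    have hau : AlmostUnary (fun v : Fin 2 → X => g (fun _ => v 0)) := by
      refine au_of_mem hbdd _ 0 (fun a => {g (fun _ => a)}) (fun a => ?_) (fun v => rfl)
      simpa using lt_of_lt_of_le Cardinal.one_lt_aleph0 haleph
    have hmem := hC.comp 2 1 (fun v : Fin 2 → X => g (fun _ => v 0))
      (fun _ => fun x : Fin 1 → X => x 0) (hT1 _ hau) (fun _ => hC.proj 1 0)
    have hfe : g = fun x : Fin 1 → X =>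
        (fun v : Fin 2 → X => g (fun _ => v 0))
          (fun i => (fun _ : Fin 2 => fun x : Fin 1 → X => x 0) i x) := by
      funext x
      show g x = g (fun _ => x 0)
      exact (congrArg g (funext fun j => congrArg x (Fin.fin_one_eq_zero j).symm)).symm
    rw [hfe]
    exact hmem
  · -- arity 2
    intro g hg
    exact hT1 g hg
  · -- arity l + 3
    intro g hg
    obtain ⟨k, F0, hF0⟩ := hg
    suffices H0 : ∀ (f : (Fin (l+3) → X) → X) (F : X → X),
        (∀ x, f x < F (x 0)) → f ∈ C (l+3) by
      have hswap : ∀ y : Fin (l+3) → X,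
          g (fun i => y (Equiv.swap 0 k i)) < F0 (y 0) := by
        intro y
        have h := hF0 (fun i => y (Equiv.swap 0 k i))
        simpa [Equiv.swap_apply_right] using h
      have hmem := H0 (fun y => g (fun i => y (Equiv.swap 0 k i))) F0 hswap
      have hcomp := hC.comp (l+3) (l+3) _
        (fun i => fun x => x (Equiv.swap 0 k i)) hmem (fun i => hC.proj _ _)
      have hfe : g = fun x : Fin (l+3) → X =>
          (fun y => g (fun i => y (Equiv.swap 0 k i)))
            (fun i => (fun i => fun x : Fin (l+3) → X => x (Equiv.swap 0 k i)) i x) := by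
        funext x
        show g x = g (fun i => x (Equiv.swap 0 k (Equiv.swap 0 k i)))
        congr 1
        funext i
        rw [Equiv.swap_apply_self]
      rw [hfe]
      exact hcomp
    intro f F hF
    have ihN := ih (l+2) (by omega)
    -- indices
    set i2 : Fin (l+3) := Fin.castSucc (Fin.last (l+1)) with hi2
    set i3 : Fin (l+3) := Fin.last (l+2) with hi3
    set base : (Fin (l+3) → X) → Fin (l+1) → X :=
      fun x s => x (Fin.castSucc (Fin.castSucc s)) with hbase
    have hbase0 : ∀ x : Fin (l+3) → X, base x 0 = x 0 := by
      intro x; simp [hbase]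
    -- binary coding functions
    set q : (Fin 2 → X) → X := fun v => if v 1 < v 0 then pp (v 0, v 1) else w0 with hqdef
    set q' : (Fin 2 → X) → X := fun v => if v 0 ≤ v 1 then pp (v 0, v 1) else w0 with hq'def
    have hqau : AlmostUnary q := by
      refine au_of_mem hbdd q 0
        (fun a => insert w0 ((fun t => pp (a, t)) '' Set.Iic a)) (fun a => ?_) (fun v => ?_)
      · exact au_small_insert hreg _ _
          (lt_of_le_of_lt Cardinal.mk_image_le (au_small_Iic hbdd a))
      · simp only [hqdef]
        split_ifs with h
        · exact Set.mem_insert_of_mem _ ⟨v 1, le_of_lt h, rfl⟩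
        · exact Set.mem_insert _ _
    have hq'au : AlmostUnary q' := by
      refine au_of_mem hbdd q' 1
        (fun a => insert w0 ((fun t => pp (t, a)) '' Set.Iic a)) (fun a => ?_) (fun v => ?_)
      · exact au_small_insert hreg _ _
          (lt_of_le_of_lt Cardinal.mk_image_le (au_small_Iic hbdd a))
      · simp only [hq'def]
        split_ifs with h
        · exact Set.mem_insert_of_mem _ ⟨v 0, h, rfl⟩
        · exact Set.mem_insert _ _
    -- the (l+2)-ary decoding function
    set dp : X → X × X := Function.invFun pp with hdpdef
    set G : (Fin (l+2) → X) → X := fun y =>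
      if h : ∃ ab : X × X, pp ab = y (Fin.last (l+1)) then
        sv (y 0, f (Fin.snoc (Fin.snoc (Fin.init y) (dp (y (Fin.last (l+1)))).1)
          (dp (y (Fin.last (l+1)))).2))
      else si (y 0) with hGdef
    have hGau : AlmostUnary G := by
      refine au_of_mem hbdd G 0
        (fun a => insert (si a) ((fun v => sv (a, v)) '' Set.Iio (F a)))
        (fun a => ?_) (fun y => ?_)
      · exact au_small_insert hreg _ _
          (lt_of_le_of_lt Cardinal.mk_image_le (au_small_Iio hbdd _))
      · simp only [hGdef]
        split_ifs with h
        · refine Set.mem_insert_of_mem _ ⟨_, ?_, rfl⟩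
          refine Set.mem_Iio.2 ?_
          have h1 := hF (Fin.snoc (Fin.snoc (Fin.init y) (dp (y (Fin.last (l+1)))).1)
            (dp (y (Fin.last (l+1)))).2)
          rwa [snoc_zero, snoc_zero, show Fin.init y 0 = y 0 from by simp [Fin.init]] at h1
        · exact Set.mem_insert _ _
    have hGmem : G ∈ C (l+2) := ihN G hGau
    -- the binary selector
    set dv : X → X × X := Function.invFun sv with hdvdef
    set ds : X → X := Function.invFun si with hdsdef
    set E : (Fin 2 → X) → X := fun v =>
      if h1 : ∃ xv : X × X, sv xv = v 0 then (dv (v 0)).2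
      else if h2 : ∃ x0 : X, si x0 = v 0 then
        (if h3 : ∃ v', sv (ds (v 0), v') = v 1 ∧ v' < F (ds (v 0)) then h3.choose
         else f (fun _ => ds (v 0)))
      else v 0 with hEdef
    have hEau : AlmostUnary E := by
      refine au_of_mem hbdd E 0
        (fun a => insert a (insert ((dv a).2) (Set.Iio (F (ds a)))))
        (fun a => ?_) (fun v => ?_)
      · exact au_small_insert hreg _ _
          (au_small_insert hreg _ _ (au_small_Iio hbdd _))
      · simp only [hEdef]
        split_ifs with h1 h2 h3
        · exact Set.mem_insert_of_mem _ (Set.mem_insert _ _)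
        · exact Set.mem_insert_of_mem _
            (Set.mem_insert_of_mem _ (Set.mem_Iio.2 h3.choose_spec.2))
        · exact Set.mem_insert_of_mem _
            (Set.mem_insert_of_mem _ (Set.mem_Iio.2 (hF (fun _ => ds (v 0)))))
        · exact Set.mem_insert _ _
    have hEmem : E ∈ C 2 := hT1 E hEau
    -- projection families
    have hfamProj : ∀ t : Fin 2,
        (![fun x : Fin (l+3) → X => x i2, fun x : Fin (l+3) → X => x i3]) t ∈ C (l+3) := by
      intro t
      refine Fin.cases ?_ ?_ t
      · simp only [Matrix.cons_val_zero]
        exact hC.proj _ i2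
      · intro j
        simp only [Matrix.cons_val_succ, Matrix.cons_val_fin_one]
        exact hC.proj _ i3
    have hqproj : (fun x : Fin (l+3) → X => q ![x i2, x i3]) ∈ C (l+3) := by
      have hmem := hC.comp 2 (l+3) q
        ![fun x : Fin (l+3) → X => x i2, fun x : Fin (l+3) → X => x i3]
        (hT1 q hqau) hfamProj
      have he : (fun x : Fin (l+3) → X => q ![x i2, x i3]) =
          (fun x : Fin (l+3) → X => q (fun i =>
            (![fun x : Fin (l+3) → X => x i2, fun x : Fin (l+3) → X => x i3]) i x)) := by
        funext x
        congr 1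
      rw [he]
      exact hmem
    have hq'proj : (fun x : Fin (l+3) → X => q' ![x i2, x i3]) ∈ C (l+3) := by
      have hmem := hC.comp 2 (l+3) q'
        ![fun x : Fin (l+3) → X => x i2, fun x : Fin (l+3) → X => x i3]
        (hT1 q' hq'au) hfamProj
      have he : (fun x : Fin (l+3) → X => q' ![x i2, x i3]) =
          (fun x : Fin (l+3) → X => q' (fun i =>
            (![fun x : Fin (l+3) → X => x i2, fun x : Fin (l+3) → X => x i3]) i x)) := by
        funext x
        congr 1
      rw [he]
      exact hmem
    -- the two coordinate families
    set gA : Fin (l+2) → ((Fin (l+3) → X) → X) :=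
      Fin.lastCases (fun x => q ![x i2, x i3]) (fun s => fun x => base x s) with hgA
    set gB : Fin (l+2) → ((Fin (l+3) → X) → X) :=
      Fin.lastCases (fun x => q' ![x i2, x i3]) (fun s => fun x => base x s) with hgB
    have hgAmem : ∀ s, gA s ∈ C (l+3) := by
      intro s
      induction s using Fin.lastCases with
      | last =>
        simp only [hgA, Fin.lastCases_last]
        exact hqproj
      | cast s' =>
        simp only [hgA, Fin.lastCases_castSucc, hbase]
        exact hC.proj _ _
    have hgBmem : ∀ s, gB s ∈ C (l+3) := by
      intro s
      induction s using Fin.lastCases with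
      | last =>
        simp only [hgB, Fin.lastCases_last]
        exact hq'proj
      | cast s' =>
        simp only [hgB, Fin.lastCases_castSucc, hbase]
        exact hC.proj _ _
    have hGA_eval : ∀ x : Fin (l+3) → X,
        (fun s => gA s x) = Fin.snoc (base x) (q ![x i2, x i3]) := by
      intro x
      funext s
      induction s using Fin.lastCases with
      | last => simp only [hgA, Fin.lastCases_last, Fin.snoc_last]
      | cast s' => simp only [hgA, Fin.lastCases_castSucc, Fin.snoc_castSucc]
    have hGB_eval : ∀ x : Fin (l+3) → X,
        (fun s => gB s x) = Fin.snoc (base x) (q' ![x i2, x i3]) := by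
      intro x
      funext s
      induction s using Fin.lastCases with
      | last => simp only [hgB, Fin.lastCases_last, Fin.snoc_last]
      | cast s' => simp only [hgB, Fin.lastCases_castSucc, Fin.snoc_castSucc]
    -- evaluation of G on coded inputs
    have hGcode : ∀ x : Fin (l+3) → X,
        G (Fin.snoc (base x) (pp (x i2, x i3))) = sv (x 0, f x) := by
      intro x
      have hx : Fin.snoc (Fin.snoc (base x) (x i2)) (x i3) = x := by
        simp only [hbase, hi2, hi3]
        exact snoc_snoc_eq x
      have h00 : (Fin.snoc (base x) (pp (x i2, x i3)) : Fin (l+2) → X) 0 = x 0 := by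
        rw [snoc_zero]
        exact hbase0 x
      have hdp : dp (pp (x i2, x i3)) = (x i2, x i3) := by
        rw [hdpdef]
        exact Function.leftInverse_invFun hppinj _
      simp only [hGdef, Fin.snoc_last]
      rw [dif_pos ⟨(x i2, x i3), rfl⟩]
      rw [Fin.init_snoc, hdp]
      rw [h00]
      congr 1
      rw [hx]
    have hGw0 : ∀ x : Fin (l+3) → X,
        G (Fin.snoc (base x) w0) = si (x 0) := by
      intro x
      simp only [hGdef, Fin.snoc_last]
      rw [dif_neg]
      · rw [snoc_zero]
        rw [hbase0 x]
      · rintro ⟨ab, hab⟩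
        exact hppw0 ab hab
    -- evaluation of codes
    have hqeval1 : ∀ x : Fin (l+3) → X, x i3 < x i2 → q ![x i2, x i3] = pp (x i2, x i3) := by
      intro x h
      simp only [hqdef, Matrix.cons_val_one, Matrix.head_cons, Matrix.cons_val_zero]
      exact if_pos h
    have hqeval2 : ∀ x : Fin (l+3) → X, ¬ x i3 < x i2 → q ![x i2, x i3] = w0 := by
      intro x h
      simp only [hqdef, Matrix.cons_val_one, Matrix.head_cons, Matrix.cons_val_zero]
      exact if_neg h
    have hq'eval1 : ∀ x : Fin (l+3) → X, x i2 ≤ x i3 → q' ![x i2, x i3] = pp (x i2, x i3) := by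
      intro x h
      simp only [hq'def, Matrix.cons_val_one, Matrix.head_cons, Matrix.cons_val_zero]
      exact if_pos h
    have hq'eval2 : ∀ x : Fin (l+3) → X, ¬ x i2 ≤ x i3 → q' ![x i2, x i3] = w0 := by
      intro x h
      simp only [hq'def, Matrix.cons_val_one, Matrix.head_cons, Matrix.cons_val_zero]
      exact if_neg h
    -- assemble
    set fA : (Fin (l+3) → X) → X := fun x => G (fun s => gA s x) with hfA
    set fB : (Fin (l+3) → X) → X := fun x => G (fun s => gB s x) with hfB
    have hA : fA ∈ C (l+3) := by
      rw [hfA]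
      exact hC.comp (l+2) (l+3) G gA hGmem hgAmem
    have hB : fB ∈ C (l+3) := by
      rw [hfB]
      exact hC.comp (l+2) (l+3) G gB hGmem hgBmem
    have hfampair : ∀ t : Fin 2, (![fA, fB]) t ∈ C (l+3) := by
      intro t
      refine Fin.cases ?_ ?_ t
      · simp only [Matrix.cons_val_zero]
        exact hA
      · intro j
        simp only [Matrix.cons_val_succ, Matrix.cons_val_fin_one]
        exact hB
    have hfinal := hC.comp 2 (l+3) E ![fA, fB] hEmem hfampair
    have hdvsv : ∀ z : X × X, dv (sv z) = z := by
      intro z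
      rw [hdvdef]
      exact Function.leftInverse_invFun hsvinj _
    have hdssi : ∀ z : X, ds (si z) = z := by
      intro z
      rw [hdsdef]
      exact Function.leftInverse_invFun hsiinj _
    have hfe : f = fun x => E (fun i => (![fA, fB]) i x) := by
      funext x
      by_cases hcase : x i3 < x i2
      · have harg : (fun t : Fin 2 => (![fA, fB]) t x) = ![sv (x 0, f x), si (x 0)] := by
          funext t
          refine Fin.cases ?_ ?_ t
          · simp only [Matrix.cons_val_zero, hfA]
            show G (fun s => gA s x) = _
            rw [hGA_eval x, hqeval1 x hcase]
            exact hGcode x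
          · intro j
            simp only [Matrix.cons_val_succ, Matrix.cons_val_fin_one, hfB]
            show G (fun s => gB s x) = _
            rw [hGB_eval x, hq'eval2 x (not_le.2 hcase)]
            exact hGw0 x
        rw [harg]
        simp only [hEdef, Matrix.cons_val_zero, Matrix.cons_val_one, Matrix.head_cons]
        erw [dif_pos ⟨(x 0, f x), rfl⟩]
        rw [hdvsv]
      · have hle : x i2 ≤ x i3 := le_of_not_gt hcase
        have harg : (fun t : Fin 2 => (![fA, fB]) t x) = ![si (x 0), sv (x 0, f x)] := by
          funext t
          refine Fin.cases ?_ ?_ t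
          · simp only [Matrix.cons_val_zero, hfA]
            show G (fun s => gA s x) = _
            rw [hGA_eval x, hqeval2 x hcase]
            exact hGw0 x
          · intro j
            simp only [Matrix.cons_val_succ, Matrix.cons_val_fin_one, hfB]
            show G (fun s => gB s x) = _
            rw [hGB_eval x, hq'eval1 x hle]
            exact hGcode x
        rw [harg]
        simp only [hEdef, Matrix.cons_val_zero, Matrix.cons_val_one, Matrix.head_cons]
        have hne1 : ¬ ∃ xv : X × X, sv xv = si (x 0) := by
          rintro ⟨xv, hxv⟩
          exact hsvsi xv (x 0) hxv
        erw [dif_neg hne1]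
        simp only [hdssi]
        erw [dif_pos ⟨x 0, rfl⟩]
        have hex3 : ∃ v', sv (x 0, v') = sv (x 0, f x) ∧ v' < F (x 0) := ⟨f x, rfl, hF x⟩
        erw [dif_pos hex3]
        exact ((Prod.ext_iff.1 (hsvinj hex3.choose_spec.1)).2).symm
    rw [hfe]
    exact hfinal
end

section
/- Let p : X² → X be an injection with 0 ∉ range(p), and let p_Δ agree with p on Δ = {(x_1,x_2) : x_2 < x_1} and equal 0 elsewhere. Then the clone generated by p_Δ together with all unary functions equals the clone generated by all binary almost unary functions (equivalently, the clone of all almost unary functions). -/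
open Cardinal

set_option linter.unusedSectionVars false
set_option linter.unusedVariables false

section Aux
variable {X : Type*} [LinearOrder X] [OrderBot X] [WellFoundedLT X]

lemma myExistsGt (hbdd : ∀ s : Set X, BddAbove s ↔ #s < #X) (M : X) : ∃ w, M < w := by
  by_contra h
  push_neg at h
  have hb : BddAbove (Set.univ : Set X) := ⟨M, fun w _ => h w⟩
  rw [hbdd] at hb
  simp at hb

lemma myExistsSUB (hbdd : ∀ s : Set X, BddAbove s ↔ #s < #X) (s : Set X)
    (hs : #s < #X) : ∃ M, ∀ z ∈ s, z < M := by
  obtain ⟨M, hM⟩ := (hbdd s).mpr hs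
  obtain ⟨w, hw⟩ := myExistsGt hbdd M
  exact ⟨w, fun z hz => lt_of_le_of_lt (hM hz) hw⟩

lemma myIioCard (hbdd : ∀ s : Set X, BddAbove s ↔ #s < #X) (z : X) :
    #(Set.Iio z) < #X :=
  (hbdd _).mp ⟨z, fun w hw => le_of_lt hw⟩

lemma myInsertCard (hreg : (#X).IsRegular) {a : X} {s : Set X} (hs : #s < #X) :
    #(insert a s : Set X) < #X :=
  lt_of_le_of_lt (Cardinal.mk_insert_le)
    (Cardinal.add_lt_of_lt hreg.aleph0_le hs (one_lt_aleph0.trans_le hreg.aleph0_le))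

open Classical in
noncomputable def myPick (s : Set X) : X :=
  if h : ∃ M, ∀ z ∈ s, z < M then h.choose else ⊥

lemma myPick_spec (hbdd : ∀ s : Set X, BddAbove s ↔ #s < #X) (s : Set X)
    (hs : #s < #X) : ∀ z ∈ s, z < myPick s := by
  have h : ∃ M, ∀ z ∈ s, z < M := myExistsSUB hbdd s hs
  classical
  rw [myPick]
  rw [dif_pos h]
  exact h.choose_spec

noncomputable def myDom (β : X → X) : X → X :=
  WellFounded.fix wellFounded_lt (fun z rec =>
    myPick (insert (β z) (Set.range (fun w : Set.Iio z => rec w.1 w.2))))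

lemma myDom_eq (β : X → X) (z : X) :
    myDom β z = myPick (insert (β z) (Set.range (fun w : Set.Iio z => myDom β w.1))) := by
  rw [myDom, WellFounded.fix_eq]

lemma myDom_spec (hreg : (#X).IsRegular) (hbdd : ∀ s : Set X, BddAbove s ↔ #s < #X)
    (β : X → X) : StrictMono (myDom β) ∧ ∀ z, β z < myDom β z := by
  have key : ∀ z : X, (∀ w < z, myDom β w < myDom β z) ∧ β z < myDom β z := by
    intro z
    have hcard : #(insert (β z) (Set.range (fun w : Set.Iio z => myDom β w.1)) : Set X) < #X :=
      myInsertCard hreg (lt_of_le_of_lt Cardinal.mk_range_le (myIioCard hbdd z))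
    have hspec := myPick_spec hbdd _ hcard
    constructor
    · intro w hw
      rw [myDom_eq β z]
      exact hspec _ (Set.mem_insert_of_mem _ ⟨⟨w, hw⟩, rfl⟩)
    · rw [myDom_eq β z]
      exact hspec _ (Set.mem_insert _ _)
  exact ⟨fun w z hwz => (key z).1 w hwz, fun z => (key z).2⟩

lemma myDomEx (hreg : (#X).IsRegular) (hbdd : ∀ s : Set X, BddAbove s ↔ #s < #X)
    (β : X → X) : ∃ A : X → X, StrictMono A ∧ ∀ z, β z < A z :=
  ⟨myDom β, (myDom_spec hreg hbdd β).1, (myDom_spec hreg hbdd β).2⟩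

end Aux

section Key
variable {X : Type*} [LinearOrder X] [OrderBot X] [WellFoundedLT X]

/-- restriction of `p` to the region below the diagonal -/
noncomputable def pdf (p : X → X → X) : X → X → X := fun u v => if v < u then p u v else ⊥

lemma pdf_pos (p : X → X → X) {u v : X} (h : v < u) : pdf p u v = p u v := if_pos h

lemma pdf_neg (p : X → X → X) {u v : X} (h : ¬ v < u) : pdf p u v = ⊥ := if_neg h

/-- coding lemma: invariant functions factor through a code -/
lemma myCode {X : Type*} [Bot X] (e g : X × X → X)
    (hg : ∀ q q', e q = e q' → g q = g q') :
    ∃ u : X → X, (∀ q, u (e q) = g q) ∧ ((∀ q, e q ≠ ⊥) → u ⊥ = ⊥) := by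
  classical
  refine ⟨fun z => if h : ∃ q, e q = z then g h.choose else ⊥, fun q => ?_, fun hne => ?_⟩
  · have hex : ∃ q', e q' = e q := ⟨q, rfl⟩
    dsimp only
    rw [dif_pos hex]
    exact hg _ _ hex.choose_spec
  · dsimp only
    rw [dif_neg]
    rintro ⟨q, hq⟩
    exact hne q hq

theorem myKey (hreg : (#X).IsRegular) (hbdd : ∀ s : Set X, BddAbove s ↔ #s < #X)
    (p : X → X → X) (hinj : Function.Injective (fun q : X × X => p q.1 q.2))
    (hzero : ∀ a b : X, p a b ≠ ⊥)
    (f : X → X → X) (F : X → X) (hf : ∀ a b, f a b < F a)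
    (C : ∀ m : ℕ, Set ((Fin m → X) → X)) (hC : IsClone C)
    (hP : (fun x : Fin 2 → X => if x 1 < x 0 then p (x 0) (x 1) else ⊥) ∈ C 2)
    (hU1 : ∀ u : X → X, (fun x : Fin 1 → X => u (x 0)) ∈ C 1) :
    (fun x : Fin 2 → X => f (x 0) (x 1)) ∈ C 2 := by
  classical
  -- pair injectivity in convenient form
  have hpinj : ∀ {a b a' b' : X}, p a b = p a' b' → a = a' ∧ b = b' := by
    intro a b a' b' h
    have := hinj (a₁ := (a, b)) (a₂ := (a', b')) h
    exact ⟨congrArg Prod.fst this, congrArg Prod.snd this⟩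
  -- successor-like strictly monotone S
  obtain ⟨S, hSmono, hSgt⟩ := myDomEx hreg hbdd (id : X → X)
  have hSne : ∀ z : X, S z ≠ ⊥ := fun z => (bot_le.trans_lt (hSgt z)).ne'
  -- F2 bounds S-images of values below F
  have hcard : ∀ a : X, #(insert (⊥ : X) (S '' Set.Iio (F a)) : Set X) < #X := fun a =>
    myInsertCard hreg (lt_of_le_of_lt Cardinal.mk_image_le (myIioCard hbdd (F a)))
  choose F2 hF2 using fun a => myExistsSUB hbdd _ (hcard a)
  have hF2bot : ∀ a : X, (⊥ : X) < F2 a := fun a => hF2 a ⊥ (Set.mem_insert _ _)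
  have hF2S : ∀ a z : X, z < F a → S z < F2 a := fun a z hz =>
    hF2 a _ (Set.mem_insert_of_mem _ ⟨z, hz, rfl⟩)
  -- G dominates F2, strictly monotone
  obtain ⟨G, hGmono, hGgt⟩ := myDomEx hreg hbdd F2
  -- U : decoder for region b < a
  obtain ⟨U, hUspec, hUbot'⟩ := myCode (fun q : X × X => p q.1 q.2)
    (fun q => S (f q.1 q.2)) (by
      intro q q' h
      have := hinj h
      rw [this])
  have hUbot : U ⊥ = ⊥ := hUbot' (fun q => hzero q.1 q.2)
  -- V : decoder for region a ≤ b (coded via p (S b) a)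
  obtain ⟨V, hVspec, hVbot'⟩ := myCode (fun q : X × X => p (S q.2) q.1)
    (fun q => if q.1 ≤ q.2 then S (f q.1 q.2) else ⊥) (by
      intro q q' h
      obtain ⟨h1, h2⟩ := hpinj h
      have : q = q' := Prod.ext h2 (hSmono.injective h1)
      rw [this])
  have hVbot : V ⊥ = ⊥ := hVbot' (fun q => hzero _ _)
  -- βA : bound extractor from t1-codes
  obtain ⟨βA, hβspec, -⟩ := myCode (fun q : X × X => p (G q.1) q.2)
    (fun q => F2 q.1) (by
      intro q q' h
      obtain ⟨h1, -⟩ := hpinj h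
      rw [hGmono.injective h1])
  -- A dominates βA, strictly monotone
  obtain ⟨A, hAmono, hAgt⟩ := myDomEx hreg hbdd βA
  -- basic value computations
  have hM1 : ∀ a b : X, U (pdf p a b) = if b < a then S (f a b) else ⊥ := by
    intro a b
    by_cases hba : b < a
    · rw [if_pos hba, pdf_pos p hba, hUspec (a, b)]
    · rw [if_neg hba, pdf_neg p hba, hUbot]
  have hM1lt : ∀ a b : X, U (pdf p a b) < F2 a := by
    intro a b
    rw [hM1]
    split
    · exact hF2S a _ (hf a b)
    · exact hF2bot a
  have hM2 : ∀ a b : X, V (pdf p (S b) a) = if a ≤ b then S (f a b) else ⊥ := by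
    intro a b
    by_cases hab : a < S b
    · rw [pdf_pos p hab, hVspec (a, b)]
    · rw [pdf_neg p hab, hVbot, if_neg]
      intro hle
      exact hab (lt_of_le_of_lt hle (hSgt b))
  have hM2lt : ∀ a b : X, V (pdf p (S b) a) < F2 a := by
    intro a b
    rw [hM2]
    split
    · exact hF2S a _ (hf a b)
    · exact hF2bot a
  -- the inner code t1 and full code T
  have ht1 : ∀ a b : X, pdf p (G a) (U (pdf p a b)) = p (G a) (U (pdf p a b)) :=
    fun a b => pdf_pos p ((hM1lt a b).trans (hGgt a))
  have hT : ∀ a b : X,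
      pdf p (A (pdf p (G a) (U (pdf p a b)))) (V (pdf p (S b) a)) =
      p (A (p (G a) (U (pdf p a b)))) (V (pdf p (S b) a)) := by
    intro a b
    rw [ht1 a b]
    refine pdf_pos p ?_
    have h1 : βA (p (G a) (U (pdf p a b))) = F2 a := hβspec (a, U (pdf p a b))
    have h2 : F2 a < A (p (G a) (U (pdf p a b))) := h1 ▸ hAgt _
    exact (hM2lt a b).trans h2
  -- invariance: equal codes give equal f-values
  have hTf : ∀ q q' : X × X,
      pdf p (A (pdf p (G q.1) (U (pdf p q.1 q.2)))) (V (pdf p (S q.2) q.1)) =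
      pdf p (A (pdf p (G q'.1) (U (pdf p q'.1 q'.2)))) (V (pdf p (S q'.2) q'.1)) →
      f q.1 q.2 = f q'.1 q'.2 := by
    rintro ⟨a, b⟩ ⟨a', b'⟩ h
    simp only at h ⊢
    rw [hT a b, hT a' b'] at h
    obtain ⟨hA1, hV1⟩ := hpinj h
    obtain ⟨hG1, hU1'⟩ := hpinj (hAmono.injective hA1)
    have haa : a = a' := hGmono.injective hG1
    subst haa
    by_cases hba : b < a
    · rw [hM1 a b, if_pos hba, hM1 a b'] at hU1'
      by_cases hba' : b' < a
      · rw [if_pos hba'] at hU1'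
        exact hSmono.injective hU1'
      · rw [if_neg hba'] at hU1'
        exact absurd hU1' (hSne _)
    · have hab : a ≤ b := le_of_not_gt hba
      rw [hM2 a b, if_pos hab, hM2 a b'] at hV1
      by_cases hab' : a ≤ b'
      · rw [if_pos hab'] at hV1
        exact hSmono.injective hV1
      · rw [if_neg hab'] at hV1
        exact absurd hV1 (hSne _)
  -- final decoder W
  obtain ⟨W, hWspec, -⟩ := myCode
    (fun q : X × X => pdf p (A (pdf p (G q.1) (U (pdf p q.1 q.2)))) (V (pdf p (S q.2) q.1)))
    (fun q => f q.1 q.2) hTf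
  -- the target function as a term
  have hfun : (fun x : Fin 2 → X => f (x 0) (x 1)) =
      fun x : Fin 2 → X =>
        W (pdf p (A (pdf p (G (x 0)) (U (pdf p (x 0) (x 1))))) (V (pdf p (S (x 1)) (x 0)))) := by
    funext x
    rw [hWspec (x 0, x 1)]
  rw [hfun]
  -- clone membership machinery
  have happ1 : ∀ (u : X → X) (g : (Fin 2 → X) → X), g ∈ C 2 →
      (fun x : Fin 2 → X => u (g x)) ∈ C 2 := by
    intro u g hg
    exact hC.comp 1 2 (fun v => u (v 0)) (fun _ => g) (hU1 u) (fun _ => hg)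
  have happ2 : ∀ (g1 g2 : (Fin 2 → X) → X), g1 ∈ C 2 → g2 ∈ C 2 →
      (fun x : Fin 2 → X => pdf p (g1 x) (g2 x)) ∈ C 2 := by
    intro g1 g2 hg1 hg2
    have hcomp := hC.comp 2 2 _ ![g1, g2] hP (by
      intro i
      fin_cases i <;> assumption)
    have heq : (fun x : Fin 2 → X =>
        (fun y : Fin 2 → X => if y 1 < y 0 then p (y 0) (y 1) else ⊥)
          (fun i => ![g1, g2] i x)) = fun x : Fin 2 → X => pdf p (g1 x) (g2 x) := by
      funext x
      simp [pdf, Matrix.cons_val_zero, Matrix.cons_val_one, Matrix.head_cons]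
    rwa [heq] at hcomp
  have m0 : (fun x : Fin 2 → X => x 0) ∈ C 2 := hC.proj 2 0
  have m1 : (fun x : Fin 2 → X => x 1) ∈ C 2 := hC.proj 2 1
  have d1 := happ2 _ _ m0 m1
  have mU := happ1 U _ d1
  have mG := happ1 G _ m0
  have mt1 := happ2 _ _ mG mU
  have mA := happ1 A _ mt1
  have mS := happ1 S _ m1
  have mE := happ2 _ _ mS m0
  have mV := happ1 V _ mE
  have mT := happ2 _ _ mA mV
  exact happ1 W _ mT

end Key

/-- `⟨{p_Δ} ∪ O⁽¹⁾⟩ = ⟨T₁⟩`: the clone generated by `p_Δ` together with all unary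
functions equals the clone generated by all binary almost unary functions. -/
theorem clone_pDelta_unary_eq_clone_T1 {X : Type*} [LinearOrder X] [OrderBot X]
    [WellFoundedLT X] (hreg : (#X).IsRegular) (hbdd : ∀ s : Set X, BddAbove s ↔ #s < #X)
    (p : X → X → X) (hinj : Function.Injective (fun q : X × X => p q.1 q.2))
    (hzero : ∀ a b : X, p a b ≠ ⊥) :
    ∀ (k : ℕ) (f : (Fin k → X) → X),
      (∀ C : ∀ m : ℕ, Set ((Fin m → X) → X), IsClone C →
        (fun x : Fin 2 → X => if x 1 < x 0 then p (x 0) (x 1) else ⊥) ∈ C 2 →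
        (∀ u : X → X, (fun x : Fin 1 → X => u (x 0)) ∈ C 1) → f ∈ C k) ↔
      (∀ C : ∀ m : ℕ, Set ((Fin m → X) → X), IsClone C →
        (∀ h : (Fin 2 → X) → X, AlmostUnary h → h ∈ C 2) → f ∈ C k) := by
  intro k f
  constructor
  · -- from ⟨p_Δ, unaries⟩ to ⟨T1⟩
    intro h1 C hC hAU
    apply h1 C hC
    · -- p_Δ is almost unary
      apply hAU
      refine ⟨0, ?_⟩
      have hcard : ∀ a : X, #(insert (⊥ : X) (p a '' Set.Iio a) : Set X) < #X := fun a =>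
        myInsertCard hreg (lt_of_le_of_lt Cardinal.mk_image_le (myIioCard hbdd a))
      choose FP hFP using fun a => myExistsSUB hbdd _ (hcard a)
      refine ⟨FP, fun x => ?_⟩
      dsimp only
      split
      · exact hFP _ _ (Set.mem_insert_of_mem _ ⟨x 1, by assumption, rfl⟩)
      · exact hFP _ _ (Set.mem_insert _ _)
    · -- each unary is generated by a binary almost unary function
      intro u
      choose Fu hFu using fun a => myExistsGt hbdd (u a)
      have h2 : (fun x : Fin 2 → X => u (x 0)) ∈ C 2 :=
        hAU _ ⟨0, Fu, fun x => hFu (x 0)⟩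
      exact hC.comp 2 1 (fun x : Fin 2 → X => u (x 0))
        (fun _ => fun x : Fin 1 → X => x 0) h2 (fun _ => hC.proj 1 0)
  · -- from ⟨T1⟩ to ⟨p_Δ, unaries⟩ : every binary almost unary is generated
    intro h1 C hC hP hU1
    apply h1 C hC
    intro h hh
    obtain ⟨j, F, hF⟩ := hh
    have hvec : ∀ x : Fin 2 → X, ![x 0, x 1] = x := by
      intro x
      funext i
      fin_cases i <;> rfl
    fin_cases j
    · have hkey := myKey hreg hbdd p hinj hzero (fun a b => h ![a, b]) F
        (fun a b => by simpa using hF ![a, b]) C hC hP hU1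
      have heq : (fun x : Fin 2 → X => (fun a b => h ![a, b]) (x 0) (x 1)) = h := by
        funext x
        simp only
        rw [hvec]
      rwa [heq] at hkey
    · have hkey := myKey hreg hbdd p hinj hzero (fun a b => h ![b, a]) F
        (fun a b => by simpa using hF ![b, a]) C hC hP hU1
      have hswap := hC.comp 2 2 _ ![fun x : Fin 2 → X => x 1, fun x : Fin 2 → X => x 0]
        hkey (by
          intro i
          fin_cases i
          · exact hC.proj 2 1
          · exact hC.proj 2 0)
      have heq : (fun x : Fin 2 → X =>
          (fun y : Fin 2 → X => (fun a b => h ![b, a]) (y 0) (y 1))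
            (fun i => ![fun x : Fin 2 → X => x 1, fun x : Fin 2 → X => x 0] i x)) = h := by
        funext x
        simp only [Matrix.cons_val_zero, Matrix.cons_val_one, Matrix.head_cons]
        rw [hvec]
      rwa [heq] at hswap
end

section
/- Let n ≥ 1 and let A_1,...,A_k ⊆ {1,...,n} be pairwise intersecting. Then there exists a monotone n-ary term function t in the clone generated by the ternary median med_3 (and projections) such that every A_i is t-insane. -/
open Cardinal

/-- The ternary median. -/
def med3 {X : Type*} [LinearOrder X] (x : Fin 3 → X) : X :=
  max (min (x 0) (x 1)) (min (max (x 0) (x 1)) (x 2))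

/-!
Monotone self-dual Boolean functions are exactly the Boolean median terms: two points are
interpolated by a projection (by monotonicity and self-duality), and the median of three
interpolants, each missing one point, glues them on any finite set. An intersecting family
`A` extends to such a function `g` with `g b = 1` whenever `b` is `1` on some `A i`. Median
terms commute with the monotone threshold maps `X → Bool`, so the term `t` realising `g`
satisfies `t x = y` whenever `x` is constantly `y` on `A i`; hence `t` attains every value on
each `A i`, whatever the other coordinates.
-/

theorem Finset.exists_forall_eq_or_eq_of_card_le_two {α : Type*} {s : Finset α}
    (hs : s.Nonempty) (h : s.card ≤ 2) : ∃ u w : α, ∀ x ∈ s, x = u ∨ x = w := by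
  obtain ⟨u, hu⟩ := hs
  by_contra! H
  obtain ⟨x, hx, hxu, -⟩ := H u u
  obtain ⟨y, hy, hyu, hyx⟩ := H u x
  exact h.not_gt (Finset.two_lt_card.2 ⟨u, hu, x, hx, y, hy, hxu.symm, hyu.symm, hyx.symm⟩)

theorem monotone_decide_of_imp {α : Type*} [Preorder α] {p : α → Prop} [DecidablePred p]
    (hp : ∀ a b, a ≤ b → p a → p b) : Monotone fun a => decide (p a) := fun a b hab =>
  Bool.le_iff_imp.2 fun h => decide_eq_true (hp a b hab (of_decide_eq_true h))

section Median
variable {X Y : Type*} [LinearOrder X] [LinearOrder Y]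

theorem monotone_med3 : Monotone (med3 : (Fin 3 → X) → X) := fun _ _ h =>
  max_le_max (min_le_min (h 0) (h 1)) (min_le_min (max_le_max (h 0) (h 1)) (h 2))

theorem Monotone.map_med3 {φ : X → Y} (hφ : Monotone φ) (x : Fin 3 → X) :
    φ (med3 x) = med3 (φ ∘ x) := by
  simp only [med3, hφ.map_max, hφ.map_min, Function.comp_apply]

theorem med3_eq_of_majority {x : Fin 3 → X} {v : X}
    (h : x 0 = v ∧ x 1 = v ∨ x 0 = v ∧ x 2 = v ∨ x 1 = v ∧ x 2 = v) : med3 x = v := by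
  rcases h with ⟨h₀, h₁⟩ | ⟨h₀, h₂⟩ | ⟨h₁, h₂⟩ <;> simp only [med3, *] <;> grind

end Median

def IsSelfDual {ι : Type*} (g : (ι → Bool) → Bool) : Prop :=
  ∀ b, g (fun j => !b j) = !g b

theorem Monotone.exists_apply_eq_and_apply_eq {ι : Type*} {g : (ι → Bool) → Bool}
    (hg : Monotone g) (hsd : IsSelfDual g) (u w : ι → Bool) : ∃ j, u j = g u ∧ w j = g w := by
  by_contra! h
  have hxor : ∀ (b : ι → Bool) (c : Bool), g (fun j => xor (b j) c) = xor (g b) c := by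
    intro b c; cases c <;> simp [hsd b]
  have hbool : ∀ a c b d : Bool, (a = c → b ≠ d) → xor a (!c) ≤ !xor b (!d) := by decide
  -- `fun j => xor (u j) (!g u)` is `true` exactly where `u` agrees with `g u`
  have hle : (fun j => xor (u j) (!g u)) ≤ fun j => !xor (w j) (!g w) := fun j =>
    hbool _ _ _ _ (h j)
  have := hg hle
  rw [hsd, hxor, hxor] at this
  simp only [Bool.xor_not_self, Bool.not_true] at this
  exact absurd this (by decide)

inductive MedTerm (ι : Type*) where
  | var : ι → MedTerm ι
  | med : MedTerm ι → MedTerm ι → MedTerm ι → MedTerm ι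

namespace MedTerm

variable {ι X Y : Type*} [LinearOrder X] [LinearOrder Y]

def eval : MedTerm ι → (ι → X) → X
  | var i, x => x i
  | med p q r, x => med3 ![p.eval x, q.eval x, r.eval x]

theorem monotone_eval (t : MedTerm ι) : Monotone (t.eval : (ι → X) → X) := by
  induction t with
  | var i => exact fun _ _ h => h i
  | med p q r hp hq hr =>
    refine fun _ _ h => monotone_med3 fun i => ?_
    fin_cases i
    exacts [hp h, hq h, hr h]

theorem eval_mem_of_isClone {n : ℕ} (t : MedTerm (Fin n)) {C : ∀ m : ℕ, Set ((Fin m → X) → X)}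
    (hC : IsClone C) (hmed : med3 ∈ C 3) : t.eval ∈ C n := by
  induction t with
  | var i => exact hC.proj n i
  | med p q r hp hq hr =>
    exact hC.comp 3 n med3 ![p.eval, q.eval, r.eval] hmed fun i => by fin_cases i <;> assumption

theorem eval_comp {φ : X → Y} (hφ : Monotone φ) (t : MedTerm ι) (x : ι → X) :
    φ (t.eval x) = t.eval (φ ∘ x) := by
  induction t with
  | var i => rfl
  | med p q r hp hq hr =>
    simp only [eval, hφ.map_med3]
    congr 1
    ext i
    fin_cases i
    exacts [hp, hq, hr]

/-- Baker–Pixley for the median. -/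
theorem exists_eval_eq_on_finset (g : (ι → X) → X) (S : Finset (ι → X)) (hS : S.Nonempty)
    (h₂ : ∀ u w : ι → X, ∃ t : MedTerm ι, t.eval u = g u ∧ t.eval w = g w) :
    ∃ t : MedTerm ι, ∀ x ∈ S, t.eval x = g x := by
  classical
  induction S using Finset.strongInduction with
  | H S ih =>
  by_cases h₃ : 2 < S.card
  · have hsub : ∀ d ∈ S, ∃ t : MedTerm ι, ∀ x ∈ S.erase d, t.eval x = g x := fun d hd =>
      ih _ (S.erase_ssubset hd) (by rw [← Finset.card_pos, Finset.card_erase_of_mem hd]; omega)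
    obtain ⟨a, ha, b, hb, c, hc, hab, hac, hbc⟩ := Finset.two_lt_card.1 h₃
    obtain ⟨t₁, ht₁⟩ := hsub a ha
    obtain ⟨t₂, ht₂⟩ := hsub b hb
    obtain ⟨t₃, ht₃⟩ := hsub c hc
    refine ⟨med t₁ t₂ t₃, fun x hx => med3_eq_of_majority ?_⟩
    simp only [Finset.mem_erase] at ht₁ ht₂ ht₃
    by_cases hxa : x = a
    · subst hxa
      exact .inr <| .inr ⟨ht₂ x ⟨hab, hx⟩, ht₃ x ⟨hac, hx⟩⟩
    by_cases hxb : x = b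
    · subst hxb
      exact .inr <| .inl ⟨ht₁ x ⟨hxa, hx⟩, ht₃ x ⟨hbc, hx⟩⟩
    exact .inl ⟨ht₁ x ⟨hxa, hx⟩, ht₂ x ⟨hxb, hx⟩⟩
  · obtain ⟨u, w, huw⟩ := Finset.exists_forall_eq_or_eq_of_card_le_two hS (not_lt.1 h₃)
    obtain ⟨t, htu, htw⟩ := h₂ u w
    exact ⟨t, fun x hx => by rcases huw x hx with rfl | rfl <;> assumption⟩

theorem exists_eval_eq_of_isSelfDual [Finite ι] {g : (ι → Bool) → Bool} (hg : Monotone g)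
    (hsd : IsSelfDual g) : ∃ t : MedTerm ι, t.eval = g := by
  have := Fintype.ofFinite ι
  classical
  obtain ⟨t, ht⟩ := exists_eval_eq_on_finset g Finset.univ Finset.univ_nonempty fun u w => by
    obtain ⟨j, hu, hw⟩ := hg.exists_apply_eq_and_apply_eq hsd u w
    exact ⟨var j, hu, hw⟩
  exact ⟨t, funext fun b => ht b (Finset.mem_univ b)⟩

theorem eval_eq_of_forall_mem {t : MedTerm ι} {A : Set ι}
    (htrue : ∀ b : ι → Bool, (∀ j ∈ A, b j = true) → t.eval b = true)
    (hfalse : ∀ b : ι → Bool, (∀ j ∈ A, b j = false) → t.eval b = false)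
    {x : ι → X} {y : X} (hx : ∀ j ∈ A, x j = y) : t.eval x = y := by
  have hle := monotone_decide_of_imp fun a b (hab : a ≤ b) (h : y ≤ a) => h.trans hab
  have hlt := monotone_decide_of_imp fun a b (hab : a ≤ b) (h : y < a) => h.trans_le hab
  refine le_antisymm (not_lt.1 fun h => ?_) ?_
  · have := eval_comp hlt t x
    rw [hfalse _ fun j hj => by simp [hx j hj]] at this
    simp [h] at this
  · have := eval_comp hle t x
    rw [htrue _ fun j hj => by simp [hx j hj]] at this
    simpa using this

end MedTerm

section Vote
variable {ι κ : Type*}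

open Classical in
/-- Reading `b` as the set where it is `true`: `b` wins if it contains some `A i`, or meets every `A i` and contains `i₀`. When `A` is
intersecting, the winning sets form a maximal intersecting family, i.e. the function is monotone
and self-dual. -/
noncomputable def intersectingVote (A : κ → Set ι) (i₀ : ι) (b : ι → Bool) : Bool :=
  decide ((∃ i, ∀ j ∈ A i, b j) ∨ (∀ i, ∃ j ∈ A i, b j) ∧ b i₀)

variable (A : κ → Set ι) (i₀ : ι)

theorem monotone_intersectingVote : Monotone (intersectingVote A i₀) := by
  classical
  intro b b' h
  have h' : ∀ j, b j = true → b' j = true := fun j => Bool.le_iff_imp.1 (h j)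
  refine Bool.le_iff_imp.2 fun hb => decide_eq_true ?_
  rcases of_decide_eq_true hb with ⟨i, hi⟩ | ⟨hall, h₀⟩
  · exact .inl ⟨i, fun j hj => h' j (hi j hj)⟩
  · exact .inr ⟨fun i => (hall i).imp fun j => .imp_right (h' j), h' i₀ h₀⟩

theorem isSelfDual_intersectingVote (hA : ∀ i j, (A i ∩ A j).Nonempty) :
    IsSelfDual (intersectingVote A i₀) := by
  classical
  intro b
  have hdisj : (∃ i, ∀ j ∈ A i, b j = true) → ¬∃ i, ∀ j ∈ A i, b j = false :=
    fun ⟨i, hi⟩ ⟨i', hi'⟩ => by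
      obtain ⟨j, hj, hj'⟩ := hA i i'
      simpa [hi j hj] using hi' j hj'
  have hmeet : ∀ c : Bool, (∀ i, ∃ j ∈ A i, b j = c) ↔ ¬∃ i, ∀ j ∈ A i, b j = !c := by
    intro c; cases c <;> simp
  have h₀ : b i₀ = false ↔ ¬b i₀ = true := by simp
  simp only [intersectingVote, Bool.not_eq_eq_eq_not, Bool.not_true, hmeet, Bool.not_false]
  rw [← decide_not, decide_eq_decide]
  tauto

theorem intersectingVote_eq_true {b : ι → Bool} (i : κ) (hb : ∀ j ∈ A i, b j = true) :
    intersectingVote A i₀ b = true := by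
  simpa [intersectingVote] using .inl ⟨i, hb⟩

theorem intersectingVote_eq_false (hA : ∀ i j, (A i ∩ A j).Nonempty) {b : ι → Bool} (i : κ)
    (hb : ∀ j ∈ A i, b j = false) : intersectingVote A i₀ b = false := by
  have := intersectingVote_eq_true A i₀ (b := fun j => !b j) i (by simpa using hb)
  rwa [isSelfDual_intersectingVote A i₀ hA, Bool.not_eq_true'] at this

end Vote

theorem insane_of_forall_eq_of_forall_mem_eq {X : Type*} {n : ℕ} {f : (Fin n → X) → X}
    {A : Set (Fin n)} (h : ∀ x y, (∀ j ∈ A, x j = y) → f x = y) : Insane f A := by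
  classical
  intro a
  have hrange : {y : X | ∃ x : Fin n → X, (∀ j, j ∉ A → x j = a j) ∧ f x = y} = Set.univ :=
    Set.eq_univ_of_forall fun y =>
      ⟨fun j => if j ∈ A then y else a j, fun j hj => if_neg hj, h _ _ fun j hj => if_pos hj⟩
  rw [WildFor, hrange, Cardinal.mk_univ]

theorem exists_median_term_insane_general {X : Type*} [LinearOrder X]
    {n k : ℕ} (hn : 1 ≤ n) (A : Fin k → Set (Fin n))
    (hA : ∀ i j, (A i ∩ A j).Nonempty) :
    ∃ t : (Fin n → X) → X,
      (∀ C : ∀ m : ℕ, Set ((Fin m → X) → X), IsClone C → med3 ∈ C 3 → t ∈ C n) ∧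
      Monotone t ∧ ∀ i, Insane t (A i) := by
  let i₀ : Fin n := ⟨0, hn⟩
  obtain ⟨t, ht⟩ := MedTerm.exists_eval_eq_of_isSelfDual (monotone_intersectingVote A i₀)
    (isSelfDual_intersectingVote A i₀ hA)
  refine ⟨t.eval, fun C hC hmed => t.eval_mem_of_isClone hC hmed, t.monotone_eval, fun i => ?_⟩
  refine insane_of_forall_eq_of_forall_mem_eq fun x y hx => t.eval_eq_of_forall_mem ?_ ?_ hx
  · exact fun b hb => ht ▸ intersectingVote_eq_true A i₀ i hb
  · exact fun b hb => ht ▸ intersectingVote_eq_false A i₀ hA i hb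

/-- For pairwise intersecting `A₁,...,A_k ⊆ {1,...,n}` there is a monotone term function
in the clone generated by `med₃` making every `Aᵢ` insane. -/
theorem exists_median_term_insane {X : Type*} [LinearOrder X] [WellFoundedLT X]
    (hreg : (#X).IsRegular) (hbdd : ∀ s : Set X, BddAbove s ↔ #s < #X)
    {n k : ℕ} (hn : 1 ≤ n) (A : Fin k → Set (Fin n))
    (hA : ∀ i j, (A i ∩ A j).Nonempty) :
    ∃ t : (Fin n → X) → X,
      (∀ C : ∀ m : ℕ, Set ((Fin m → X) → X), IsClone C → med3 ∈ C 3 → t ∈ C n) ∧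
      Monotone t ∧ ∀ i, Insane t (A i) :=
  exists_median_term_insane_general hn A hA
end

section
/- Every n-ary function in the clone generated by m^n_2 (the second-smallest-of-n function) together with all binary almost unary functions, of arity k < n, is almost unary. Equivalently, M_n^(k) = U^(k) for 1 ≤ k < n. -/
open Cardinal

/-- `kthSmallest k x` is the `k`-th smallest of the values `x 0, ..., x (n-1)`
(counted with multiplicity, ties broken by index); `m^n_k` in the paper. -/
def kthSmallest {X : Type*} [LinearOrder X] [OrderBot X] {n : ℕ} (k : ℕ)
    (x : Fin n → X) : X :=
  (List.insertionSort (· ≤ ·) (List.ofFn x)).getD (k - 1) ⊥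
/-- Membership of the `k`-ary `f` in the clone `M_m = ⟨{m^m_2} ∪ T₁⟩` generated by the
second-smallest-of-`m` function together with all binary almost unary functions. -/
def MnMem {X : Type*} [LinearOrder X] [OrderBot X] (m : ℕ) {k : ℕ}
    (f : (Fin k → X) → X) : Prop :=
  ∀ C : ∀ j : ℕ, Set ((Fin j → X) → X), IsClone C →
    (kthSmallest 2 : (Fin m → X) → X) ∈ C m →
    (∀ h : (Fin 2 → X) → X, AlmostUnary h → h ∈ C 2) → f ∈ C k

/-! ### Preliminaries on the order -/

section Prelim
variable {X : Type*} [LinearOrder X] [OrderBot X] [WellFoundedLT X]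

set_option linter.unusedSectionVars false

lemma exists_gt_of_hbdd (hbdd : ∀ s : Set X, BddAbove s ↔ #s < #X) (u : X) :
    ∃ v, u < v := by
  have h1 : BddAbove (Set.Iic u) := ⟨u, fun y hy => hy⟩
  have h2 : #(Set.Iic u) < #X := (hbdd _).1 h1
  have h3 : (Set.Iic u) ≠ Set.univ := by
    intro h
    rw [h, Cardinal.mk_univ] at h2
    exact lt_irrefl _ h2
  obtain ⟨v, hv⟩ := Set.ne_univ_iff_exists_notMem _ |>.1 h3
  exact ⟨v, not_le.mp hv⟩

lemma exists_strict_bound (hbdd : ∀ s : Set X, BddAbove s ↔ #s < #X)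
    (s : Set X) (hs : #s < #X) : ∃ b, ∀ y ∈ s, y < b := by
  obtain ⟨u, hu⟩ := (hbdd s).2 hs
  obtain ⟨v, hv⟩ := exists_gt_of_hbdd hbdd u
  exact ⟨v, fun y hy => lt_of_le_of_lt (hu hy) hv⟩

lemma exists_succ_fn (hbdd : ∀ s : Set X, BddAbove s ↔ #s < #X) :
    ∃ S : X → X, ∀ a, a < S a := by
  choose S hS using exists_gt_of_hbdd hbdd
  exact ⟨S, hS⟩

lemma card_Iic_lt (hbdd : ∀ s : Set X, BddAbove s ↔ #s < #X) (a : X) :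
    #(Set.Iic a) < #X := (hbdd _).1 ⟨a, fun y hy => hy⟩

lemma exists_mono_dominator (hbdd : ∀ s : Set X, BddAbove s ↔ #s < #X) (F : X → X) :
    ∃ F' : X → X, Monotone F' ∧ ∀ a, F a < F' a := by
  have wf : WellFounded ((· < ·) : X → X → Prop) := IsWellFounded.wf
  have hne : ∀ a : X, {b | ∀ c ≤ a, F c < b}.Nonempty := by
    intro a
    have : #(F '' Set.Iic a) < #X := lt_of_le_of_lt Cardinal.mk_image_le (card_Iic_lt hbdd a)
    obtain ⟨b, hb⟩ := exists_strict_bound hbdd _ this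
    exact ⟨b, fun c hc => hb _ ⟨c, hc, rfl⟩⟩
  refine ⟨fun a => wf.min _ (hne a), ?_, ?_⟩
  · intro a₁ a₂ h
    have hmem : wf.min _ (hne a₂) ∈ {b | ∀ c ≤ a₁, F c < b} := by
      have := wf.min_mem _ (hne a₂)
      exact fun c hc => this c (le_trans hc h)
    exact not_lt.mp (wf.not_lt_min _ hmem)
  · intro a
    exact wf.min_mem {b | ∀ c ≤ a, F c < b} (hne a) a le_rfl

end Prelim

/-! ### Facts about the second smallest -/

section SS
variable {X : Type*} [LinearOrder X] [OrderBot X] {n : ℕ}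

set_option linter.unusedSectionVars false

lemma two_le_countP_iff (x : Fin n → X) (p : X → Bool) :
    2 ≤ (List.ofFn x).countP p ↔ ∃ i j, i ≠ j ∧ p (x i) ∧ p (x j) := by
  classical
  have key : (List.ofFn x).countP p
      = (Finset.univ.filter (fun i => p (x i) = true)).card := by
    have h2 : (List.ofFn x).countP p
        = Multiset.countP (fun y => p y = true) (↑(List.ofFn x)) := by
      rw [Multiset.coe_countP]
      refine (List.countP_congr ?_).symm
      intro y _; simp
    rw [h2, ← Fin.univ_val_map x, Multiset.countP_map]
    rw [Finset.card, Finset.filter_val]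
  rw [key]
  constructor
  · intro h
    have h1 : 1 < (Finset.univ.filter (fun i => p (x i) = true)).card := by omega
    obtain ⟨a, ha, b, hb, hab⟩ := Finset.one_lt_card.mp h1
    exact ⟨a, b, hab, (Finset.mem_filter.mp ha).2, (Finset.mem_filter.mp hb).2⟩
  · rintro ⟨i, j, hij, hi, hj⟩
    have : 1 < (Finset.univ.filter (fun i => p (x i) = true)).card :=
      Finset.one_lt_card.mpr ⟨i, Finset.mem_filter.mpr ⟨Finset.mem_univ _, hi⟩,
        j, Finset.mem_filter.mpr ⟨Finset.mem_univ _, hj⟩, hij⟩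
    omega

/-- decomposition of the sorted list -/
lemma ss_spec (hn : 2 ≤ n) (x : Fin n → X) :
    ∃ a b t, List.insertionSort (· ≤ ·) (List.ofFn x) = a :: b :: t ∧
      kthSmallest 2 x = b ∧ a ≤ b ∧ (∀ y ∈ t, b ≤ y) := by
  have hlen : (List.insertionSort (· ≤ ·) (List.ofFn x)).length = n := by
    rw [(List.perm_insertionSort _ _).length_eq, List.length_ofFn]
  have hs := List.pairwise_insertionSort (· ≤ ·) (List.ofFn x)
  rcases hne : List.insertionSort (· ≤ ·) (List.ofFn x) with _ | ⟨a, _ | ⟨b, t⟩⟩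
  · rw [hne] at hlen; simp at hlen; omega
  · rw [hne] at hlen; simp at hlen; omega
  · rw [hne] at hs
    refine ⟨a, b, t, rfl, ?_, ?_, ?_⟩
    · unfold kthSmallest; rw [hne]; rfl
    · exact (List.pairwise_cons.mp hs).1 b List.mem_cons_self
    · exact fun y hy => ((List.pairwise_cons.mp (List.pairwise_cons.mp hs).2).1) y hy

lemma ss_le_max (x : Fin n → X) {i j : Fin n} (hij : i ≠ j) :
    kthSmallest 2 x ≤ max (x i) (x j) := by
  have hn : 2 ≤ n := by
    by_contra h
    push_neg at h
    interval_cases n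
    · exact i.elim0
    · exact hij (Subsingleton.elim i j)
  obtain ⟨a, b, t, hne, hkb, hab, ht⟩ := ss_spec hn x
  rw [hkb]
  by_contra h
  push_neg at h
  have hxi : x i < b := lt_of_le_of_lt (le_max_left _ _) h
  have hxj : x j < b := lt_of_le_of_lt (le_max_right _ _) h
  have h2 : 2 ≤ (List.ofFn x).countP (fun y => decide (y < b)) :=
    (two_le_countP_iff x _).mpr ⟨i, j, hij, by simpa using hxi, by simpa using hxj⟩
  have hperm := (List.perm_insertionSort (· ≤ ·) (List.ofFn x)).countP_eq
    (fun y => decide (y < b))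
  rw [← hperm, hne] at h2
  have h3 : (b :: t).countP (fun y => decide (y < b)) = 0 := by
    rw [List.countP_eq_zero]
    intro y hy
    simp only [List.mem_cons] at hy
    rcases hy with rfl | hy
    · simp
    · simpa using not_lt.mpr (ht y hy)
  rw [List.countP_cons, h3] at h2
  by_cases hab' : a < b <;> simp [hab'] at h2

lemma exists_pair_le (hn : 2 ≤ n) (x : Fin n → X) :
    ∃ i j, i ≠ j ∧ x i ≤ kthSmallest 2 x ∧ x j ≤ kthSmallest 2 x := by
  obtain ⟨a, b, t, hne, hkb, hab, ht⟩ := ss_spec hn x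
  have h2 : 2 ≤ (List.ofFn x).countP (fun y => decide (y ≤ b)) := by
    have hperm := (List.perm_insertionSort (· ≤ ·) (List.ofFn x)).countP_eq
      (fun y => decide (y ≤ b))
    rw [← hperm, hne, List.countP_cons, List.countP_cons]
    simp [hab]
  obtain ⟨i, j, hij, hi, hj⟩ := (two_le_countP_iff x _).mp h2
  rw [hkb]
  exact ⟨i, j, hij, by simpa using hi, by simpa using hj⟩

/-- the min gadget -/
lemma ss_min_gadget (hn : 4 ≤ n) (A B : X) (y : Fin n → X)
    (hy : ∀ i : Fin n, y i = if i.val ≤ 1 then B else A) :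
    kthSmallest 2 y = min A B := by
  have h0 : y ⟨0, by omega⟩ = B := by rw [hy]; simp
  have h1 : y ⟨1, by omega⟩ = B := by rw [hy]; simp
  have h2 : y ⟨2, by omega⟩ = A := by rw [hy]; simp
  have h3 : y ⟨3, by omega⟩ = A := by rw [hy]; simp
  apply le_antisymm
  · apply le_min
    · have := ss_le_max y (i := ⟨2, by omega⟩) (j := ⟨3, by omega⟩) (by simp [Fin.ext_iff])
      rwa [h2, h3, max_self] at this
    · have := ss_le_max y (i := ⟨0, by omega⟩) (j := ⟨1, by omega⟩) (by simp [Fin.ext_iff])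
      rwa [h0, h1, max_self] at this
  · obtain ⟨i, j, hij, hi, hj⟩ := exists_pair_le (by omega) y
    refine le_trans ?_ hi
    rw [hy i]
    by_cases h : i.val ≤ 1 <;> simp [h, min_le_left, min_le_right]
end SS

/-! ### The separating clone (forward direction) -/

section Fwd
variable {X : Type*} [LinearOrder X] [OrderBot X] [WellFoundedLT X]

set_option linter.unusedSectionVars false

/-- certified functions: the clone used to separate -/
def DD (n : ℕ) {j : ℕ} (f : (Fin j → X) → X) : Prop :=
  ∃ (F : X → X) (E : Set (Set (Fin j))),
    (∀ x, ∀ e ∈ E, ∃ p ∈ e, f x < F (x p)) ∧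
    (∀ c : Fin j → Fin (n-1), ∃ e ∈ E, ∃ t, ∀ p ∈ e, c p = t)

lemma almostUnary_DD {n j : ℕ} {f : (Fin j → X) → X} (h : AlmostUnary f) : DD n f := by
  obtain ⟨l, F, hF⟩ := h
  refine ⟨F, {{l}}, ?_, ?_⟩
  · rintro x e rfl
    exact ⟨l, rfl, hF x⟩
  · intro c
    exact ⟨{l}, rfl, c l, by rintro p rfl; rfl⟩

lemma DD_almostUnary {n j : ℕ} (hjn : j < n) {f : (Fin j → X) → X}
    (h : DD n f) : AlmostUnary f := by
  obtain ⟨F, E, hb, hc⟩ := h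
  set c : Fin j → Fin (n-1) := fun p => ⟨p.val, by omega⟩ with hcdef
  have hinj : Function.Injective c := by
    intro p q hpq
    simpa [hcdef, Fin.ext_iff] using hpq
  obtain ⟨e, he, t, ht⟩ := hc c
  obtain ⟨p0, hp0, _⟩ := hb (fun _ => ⊥) e he
  refine ⟨p0, F, fun x => ?_⟩
  obtain ⟨p, hp, hlt⟩ := hb x e he
  have : p = p0 := hinj (by rw [ht p hp, ht p0 hp0])
  rwa [this] at hlt

lemma DD_isClone (hbdd : ∀ s : Set X, BddAbove s ↔ #s < #X) (n : ℕ) :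
    IsClone (fun j => {f : (Fin j → X) → X | DD n f}) := by
  obtain ⟨S, hS⟩ := exists_succ_fn hbdd
  constructor
  · intro m i
    exact almostUnary_DD ⟨i, S, fun x => hS (x i)⟩
  · intro m k f g hf hg
    obtain ⟨F, Ef, hbf, hcf⟩ := hf
    choose G E hb hc using hg
    obtain ⟨A, hAmono, hA⟩ := exists_mono_dominator hbdd F
    set Gmax : X → X := fun a => Finset.univ.sup (fun i => G i a) with hGmax
    refine ⟨A ∘ Gmax,
      {h | ∃ e ∈ Ef, ∃ σ : Fin m → Set (Fin k), (∀ i ∈ e, σ i ∈ E i) ∧ h = ⋃ i ∈ e, σ i},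
      ?_, ?_⟩
    · rintro x h ⟨e, he, σ, hσ, rfl⟩
      obtain ⟨i, hi, hlt⟩ := hbf (fun i => g i x) e he
      obtain ⟨p, hp, hlt2⟩ := hb i x (σ i) (hσ i hi)
      refine ⟨p, Set.mem_biUnion hi hp, ?_⟩
      calc f (fun i => g i x) < F (g i x) := hlt
        _ < A (g i x) := hA _
        _ ≤ A (G i (x p)) := hAmono hlt2.le
        _ ≤ A (Gmax (x p)) :=
          hAmono (Finset.le_sup (f := fun i => G i (x p)) (Finset.mem_univ i))
    · intro c
      choose e' he' t' ht' using fun i => hc i c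
      obtain ⟨e, he, t, ht⟩ := hcf t'
      refine ⟨⋃ i ∈ e, e' i, ⟨e, he, e', fun i _ => he' i, rfl⟩, t, ?_⟩
      intro p hp
      simp only [Set.mem_iUnion] at hp
      obtain ⟨i, hi, hpi⟩ := hp
      rw [ht' i p hpi, ht i hi]

lemma mn2_DD (hbdd : ∀ s : Set X, BddAbove s ↔ #s < #X) {n : ℕ} (hn : 2 ≤ n) :
    DD n (kthSmallest 2 : (Fin n → X) → X) := by
  obtain ⟨S, hS⟩ := exists_succ_fn hbdd
  refine ⟨S, {e | ∃ i j : Fin n, i ≠ j ∧ e = {i, j}}, ?_, ?_⟩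
  · rintro x e ⟨i, j, hij, rfl⟩
    have hle := ss_le_max x hij
    rcases le_total (x i) (x j) with h | h
    · refine ⟨j, by simp, ?_⟩
      calc kthSmallest 2 x ≤ max (x i) (x j) := hle
        _ = x j := max_eq_right h
        _ < S (x j) := hS _
    · refine ⟨i, by simp, ?_⟩
      calc kthSmallest 2 x ≤ max (x i) (x j) := hle
        _ = x i := max_eq_left h
        _ < S (x i) := hS _
  · intro c
    have hcard : Fintype.card (Fin (n-1)) < Fintype.card (Fin n) := by
      simp only [Fintype.card_fin]; omega
    obtain ⟨i, j, hij, hcij⟩ := Fintype.exists_ne_map_eq_of_card_lt c hcard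
    refine ⟨{i, j}, ⟨i, j, hij, rfl⟩, c i, ?_⟩
    rintro p hp
    rcases hp with rfl | rfl
    · rfl
    · exact hcij.symm

end Fwd


/-! ### The coding gadgets (backward direction) -/

section Bwd
variable {X : Type*} [LinearOrder X] [OrderBot X] [WellFoundedLT X]

set_option linter.unusedSectionVars false

open Classical in
/-- binary gadget starting a coding chain -/
noncomputable def initG (τ : List X → X) : (Fin 2 → X) → X := fun y => τ [y 0]

open Classical in
/-- binary gadget extending a coding chain -/
noncomputable def extG (τ : List X → X) : (Fin 2 → X) → X := fun y =>
  if h : ∃ p : X × List X, y 0 = τ (p.1 :: p.2) then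
    (if y 1 ≤ h.choose.1 then τ (h.choose.1 :: h.choose.2 ++ [y 1]) else τ [])
  else τ []

open Classical in
/-- binary gadget decoding a chain and applying `f` -/
noncomputable def outG {k : ℕ} (τ : List X → X) (f : (Fin k → X) → X) (F : X → X)
    (l : Fin k) : (Fin 2 → X) → X := fun y =>
  if h : ∃ z : Fin k → X, (∃ u : X, y 1 = τ (u :: List.ofFn z)) ∧ z l = y 0
  then f h.choose else F (y 0)

lemma initG_val (τ : List X → X) (y : Fin 2 → X) : initG τ y = τ [y 0] := rfl

lemma extG_code {τ : List X → X} (hτ : Function.Injective τ) {y : Fin 2 → X}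
    {u : X} {t : List X} (hy0 : y 0 = τ (u :: t)) :
    extG τ y = if y 1 ≤ u then τ (u :: t ++ [y 1]) else τ [] := by
  have h : ∃ p : X × List X, y 0 = τ (p.1 :: p.2) := ⟨(u, t), hy0⟩
  rw [extG]
  rw [dif_pos h]
  have hsp := h.choose_spec
  have hinj := hτ (hy0.symm.trans hsp)
  have hc1 : h.choose.1 = u := (List.cons.inj hinj).1.symm
  have hc2 : h.choose.2 = t := (List.cons.inj hinj).2.symm
  simp only [hc1, hc2]

lemma extG_nil {τ : List X → X} (hτ : Function.Injective τ) {y : Fin 2 → X}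
    (hy0 : y 0 = τ []) : extG τ y = τ [] := by
  rw [extG]
  have h : ¬ ∃ p : X × List X, y 0 = τ (p.1 :: p.2) := by
    rintro ⟨p, hp⟩
    rw [hy0] at hp
    exact absurd (hτ hp) (by simp)
  rw [dif_neg h]

lemma outG_code {k : ℕ} {τ : List X → X} (hτ : Function.Injective τ)
    (f : (Fin k → X) → X) (F : X → X) (l : Fin k) {y : Fin 2 → X} {u : X}
    {z : Fin k → X} (hy1 : y 1 = τ (u :: List.ofFn z)) (hyl : z l = y 0) :
    outG τ f F l y = f z := by
  have h : ∃ z : Fin k → X, (∃ u : X, y 1 = τ (u :: List.ofFn z)) ∧ z l = y 0 :=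
    ⟨z, ⟨u, hy1⟩, hyl⟩
  rw [outG, dif_pos h]
  obtain ⟨⟨u', hu'⟩, hl'⟩ := h.choose_spec
  have := hτ (hy1.symm.trans hu')
  have h2 : List.ofFn z = List.ofFn h.choose := (List.cons.inj this).2
  exact congrArg f (List.ofFn_inj.mp h2.symm)

lemma outG_nil {k : ℕ} {τ : List X → X} (hτ : Function.Injective τ)
    (f : (Fin k → X) → X) (F : X → X) (l : Fin k) {y : Fin 2 → X}
    (hy1 : y 1 = τ []) : outG τ f F l y = F (y 0) := by
  rw [outG]
  have h : ¬ ∃ z : Fin k → X, (∃ u : X, y 1 = τ (u :: List.ofFn z)) ∧ z l = y 0 := by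
    rintro ⟨z, ⟨u, hu⟩, -⟩
    rw [hy1] at hu
    exact absurd (hτ hu) (by simp)
  rw [dif_neg h]

lemma initG_au (hbdd : ∀ s : Set X, BddAbove s ↔ #s < #X) (τ : List X → X) :
    AlmostUnary (initG τ) := by
  obtain ⟨S, hS⟩ := exists_succ_fn hbdd
  exact ⟨0, fun a => S (τ [a]), fun y => hS _⟩

lemma outG_au (hbdd : ∀ s : Set X, BddAbove s ↔ #s < #X) {k : ℕ} (τ : List X → X)
    (f : (Fin k → X) → X) (F : X → X) (l : Fin k) (hF : ∀ x, f x < F (x l)) :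
    AlmostUnary (outG τ f F l) := by
  obtain ⟨S, hS⟩ := exists_succ_fn hbdd
  refine ⟨0, fun a => S (F a), fun y => ?_⟩
  rw [outG]
  split
  · next h =>
    obtain ⟨⟨u, hu⟩, hl⟩ := h.choose_spec
    calc f h.choose < F (h.choose l) := hF _
      _ = F (y 0) := by rw [hl]
      _ < S (F (y 0)) := hS _
  · exact hS _

lemma extG_au (hbdd : ∀ s : Set X, BddAbove s ↔ #s < #X) (hX : ℵ₀ ≤ #X)
    {τ : List X → X} (hτ : Function.Injective τ) : AlmostUnary (extG τ) := by
  classical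
  set V : X → Set X := fun w =>
    {τ []} ∪ {v | ∃ p : X × List X, w = τ (p.1 :: p.2) ∧ ∃ c ≤ p.1, v = τ (p.1 :: p.2 ++ [c])}
    with hV
  have hVcard : ∀ w, #(V w) < #X := by
    intro w
    by_cases hw : ∃ p : X × List X, w = τ (p.1 :: p.2)
    · obtain ⟨p, hp⟩ := hw
      have hsub : V w ⊆ {τ []} ∪ (fun c => τ (p.1 :: p.2 ++ [c])) '' Set.Iic p.1 := by
        rintro v (hv | ⟨q, hq, c, hc, rfl⟩)
        · exact Or.inl hv
        · have : q = p := by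
            have := hτ (hq.symm.trans hp)
            obtain ⟨h1, h2⟩ := List.cons.inj this
            exact Prod.ext h1 h2
          subst this
          exact Or.inr ⟨c, hc, rfl⟩
      refine lt_of_le_of_lt (Cardinal.mk_le_mk_of_subset hsub) ?_
      refine lt_of_le_of_lt (Cardinal.mk_union_le _ _) ?_
      have h1 : #({τ []} : Set X) < #X := by
        simp only [Cardinal.mk_singleton]
        exact lt_of_lt_of_le Cardinal.one_lt_aleph0 hX
      have h2 : #((fun c => τ (p.1 :: p.2 ++ [c])) '' Set.Iic p.1) < #X :=
        lt_of_le_of_lt Cardinal.mk_image_le (card_Iic_lt hbdd p.1)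
      exact Cardinal.add_lt_of_lt hX h1 h2
    · have hsub : V w ⊆ {τ []} := by
        rintro v (hv | ⟨q, hq, -⟩)
        · exact hv
        · exact absurd ⟨q, hq⟩ hw
      refine lt_of_le_of_lt (Cardinal.mk_le_mk_of_subset hsub) ?_
      simp only [Cardinal.mk_singleton]
      exact lt_of_lt_of_le Cardinal.one_lt_aleph0 hX
  choose Be hBe using fun w => exists_strict_bound hbdd (V w) (hVcard w)
  refine ⟨0, Be, fun y => ?_⟩
  apply hBe
  rw [extG]
  split
  · next h =>
    split
    · next hle =>
      exact Or.inr ⟨h.choose, h.choose_spec, y 1, hle, rfl⟩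
    · exact Or.inl rfl
  · exact Or.inl rfl

end Bwd

section Main
variable {X : Type*} [LinearOrder X] [OrderBot X] [WellFoundedLT X]
set_option linter.unusedSectionVars false
set_option maxHeartbeats 1000000

lemma mn_backward (hreg : (#X).IsRegular) (hbdd : ∀ s : Set X, BddAbove s ↔ #s < #X)
    {n k : ℕ} (hk1 : 1 ≤ k) (hkn : k < n) (f : (Fin k → X) → X)
    (hau : AlmostUnary f) (C : ∀ j : ℕ, Set ((Fin j → X) → X)) (hC : IsClone C)
    (hm2 : (kthSmallest 2 : (Fin n → X) → X) ∈ C n)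
    (hT1 : ∀ h : (Fin 2 → X) → X, AlmostUnary h → h ∈ C 2) : f ∈ C k := by
  obtain ⟨S, hS⟩ := exists_succ_fn hbdd
  rcases Nat.lt_or_ge k 2 with hk | hk2
  · -- k = 1
    have hk1' : k = 1 := by omega
    subst hk1'
    have hb : AlmostUnary (fun y : Fin 2 → X => f (fun _ => y 0)) :=
      ⟨0, fun a => S (f (fun _ => a)), fun y => hS _⟩
    have hcomp := hC.comp 2 1 _ (fun _ => fun x : Fin 1 → X => x 0) (hT1 _ hb)
      (fun _ => hC.proj 1 0)
    have heq : (fun x : Fin 1 → X =>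
        (fun y : Fin 2 → X => f (fun _ => y 0))
          (fun i => (fun _ : Fin 2 => (fun x' : Fin 1 → X => x' 0)) i x)) = f := by
      funext x
      show f (fun _ => x 0) = f x
      exact congrArg f (funext fun i => (congrArg x (Fin.eq_zero i)).symm)
    exact heq ▸ hcomp
  rcases Nat.lt_or_ge k 3 with hk | hk3
  · have hk2' : k = 2 := by omega
    subst hk2'
    exact hT1 f hau
  · -- main construction
    have hn4 : 4 ≤ n := by omega
    obtain ⟨l, F, hF⟩ := hau
    have hinf : ℵ₀ ≤ #X := hreg.aleph0_le
    haveI : Infinite X := Cardinal.infinite_iff.mpr hinf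
    obtain ⟨τe⟩ : Nonempty (List X ↪ X) :=
      Cardinal.le_def (List X) X |>.1 (le_of_eq (Cardinal.mk_list_eq_mk X))
    set τ : List X → X := ⇑τe with hτdef
    have hτ : Function.Injective τ := τe.injective
    have hIc : initG τ ∈ C 2 := hT1 _ (initG_au hbdd τ)
    have hEc : extG τ ∈ C 2 := hT1 _ (extG_au hbdd hinf hτ)
    have hOc : outG τ f F l ∈ C 2 := hT1 _ (outG_au hbdd τ f F l hF)
    -- the coding chains
    set step : Fin k → ((Fin k → X) → X) → ((Fin k → X) → X) :=
      fun i prev => fun x => extG τ (fun i2 => ![prev, fun x' => x' i] i2 x) with hstepd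
    set chainF : Fin k → ((Fin k → X) → X) := fun j =>
      (List.finRange k).foldl (fun prev i => step i prev)
        (fun x => initG τ (fun i2 => ![fun x' => x' j, fun x' => x' j] i2 x)) with hchaind
    have hstep_mem : ∀ (i : Fin k) (prev), prev ∈ C k → step i prev ∈ C k := by
      intro i prev hp
      have h2 := hC.comp 2 k (extG τ) ![prev, fun x' => x' i] hEc ?_
      · exact h2
      · intro i2
        fin_cases i2
        · exact hp
        · exact hC.proj k i
    have hchain_mem : ∀ j, chainF j ∈ C k := by
      intro j
      have hstart : (fun x : Fin k → X =>
          initG τ (fun i2 => ![fun x' : Fin k → X => x' j, fun x' : Fin k → X => x' j] i2 x))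
          ∈ C k := by
        have h2 := hC.comp 2 k (initG τ)
          ![fun x' : Fin k → X => x' j, fun x' : Fin k → X => x' j] hIc ?_
        · exact h2
        · intro i2
          fin_cases i2 <;> exact hC.proj k j
      have hgen : ∀ (L : List (Fin k)) (prev), prev ∈ C k →
          (L.foldl (fun prev i => step i prev) prev) ∈ C k := by
        intro L
        induction L with
        | nil => exact fun prev h => h
        | cons a L ih =>
          intro prev hp
          rw [List.foldl_cons]
          exact ih _ (hstep_mem a prev hp)
      exact hgen _ _ hstart
    -- chain values
    have hstep_nil : ∀ (i : Fin k) prev (x : Fin k → X),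
        prev x = τ [] → step i prev x = τ [] := by
      intro i prev x hp
      refine extG_nil hτ ?_
      simpa using hp
    have hfold_nil : ∀ (L : List (Fin k)) prev (x : Fin k → X), prev x = τ [] →
        (L.foldl (fun prev i => step i prev) prev) x = τ [] := by
      intro L
      induction L with
      | nil => exact fun prev x h => h
      | cons a L ih =>
        intro prev x hp
        rw [List.foldl_cons]
        exact ih _ x (hstep_nil a prev x hp)
    have hfold_code : ∀ (L : List (Fin k)) prev (x : Fin k → X) (j : Fin k) (t : List X),
        prev x = τ (x j :: t) →
        (L.foldl (fun prev i => step i prev) prev) x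
          = if ∀ i ∈ L, x i ≤ x j then τ (x j :: (t ++ L.map x)) else τ [] := by
      intro L
      induction L with
      | nil => intro prev x j t hp; simpa using hp
      | cons a L ih =>
        intro prev x j t hp
        rw [List.foldl_cons]
        have hstepv : step a prev x = if x a ≤ x j then τ (x j :: (t ++ [x a])) else τ [] := by
          have h2 := extG_code hτ (y := fun i2 => ![prev, fun x' => x' a] i2 x)
            (u := x j) (t := t) (by simpa using hp)
          simpa [hstepd] using h2
        by_cases hax : x a ≤ x j
        · rw [if_pos hax] at hstepv
          rw [ih (step a prev) x j (t ++ [x a]) hstepv]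
          by_cases hall : ∀ i ∈ L, x i ≤ x j
          · rw [if_pos hall, if_pos (by simpa [List.forall_mem_cons] using ⟨hax, hall⟩)]
            simp
          · rw [if_neg hall]
            rw [if_neg (show ¬ ∀ i ∈ a :: L, x i ≤ x j by
              intro hcon; exact hall (fun i hi => hcon i (List.mem_cons_of_mem a hi)))]
        · rw [if_neg hax] at hstepv
          rw [hfold_nil L _ x hstepv]
          rw [if_neg (by intro hcon; exact hax (hcon a (by simp)))]
    have hchain_val : ∀ (j : Fin k) (x : Fin k → X), chainF j x
        = if ∀ i, x i ≤ x j then τ (x j :: List.ofFn x) else τ [] := by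
      intro j x
      have hstart : (fun x : Fin k → X =>
          initG τ (fun i2 => ![fun x' : Fin k → X => x' j, fun x' : Fin k → X => x' j] i2 x)) x
          = τ (x j :: []) := rfl
      show (List.finRange k).foldl (fun prev i => step i prev)
          (fun x : Fin k → X =>
            initG τ (fun i2 => ![fun x' : Fin k → X => x' j, fun x' : Fin k → X => x' j] i2 x)) x
          = _
      rw [hfold_code (List.finRange k) _ x j [] hstart]
      rw [List.nil_append, ← List.ofFn_eq_map]
      by_cases hall : ∀ i, x i ≤ x j
      · rw [if_pos hall, if_pos (fun i _ => hall i)]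
      · rw [if_neg hall, if_neg (fun hcon => hall (fun i => hcon i (List.mem_finRange i)))]
    -- the selector terms
    set Tj : Fin k → ((Fin k → X) → X) := fun j =>
      fun x => outG τ f F l (fun i2 => ![fun x' => x' l, chainF j] i2 x) with hTjd
    have hTj_mem : ∀ j, Tj j ∈ C k := by
      intro j
      have h2 := hC.comp 2 k (outG τ f F l) ![fun x' => x' l, chainF j] hOc ?_
      · exact h2
      · intro i2
        fin_cases i2
        · exact hC.proj k l
        · exact hchain_mem j
    have hTj_good : ∀ (j : Fin k) (x : Fin k → X), (∀ i, x i ≤ x j) → Tj j x = f x := by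
      intro j x hmax
      refine outG_code hτ f F l (u := x j) (z := x) ?_ ?_
      · show chainF j x = τ (x j :: List.ofFn x)
        rw [hchain_val j x, if_pos hmax]
      · rfl
    have hTj_bad : ∀ (j : Fin k) (x : Fin k → X), ¬ (∀ i, x i ≤ x j) → Tj j x = F (x l) := by
      intro j x hmax
      have h2 := outG_nil hτ f F l (y := fun i2 => ![fun x' => x' l, chainF j] i2 x)
        (by show chainF j x = τ []; rw [hchain_val j x, if_neg hmax])
      simpa [hTjd] using h2
    -- the min-fold combining the selectors
    set gv : ((Fin k → X) → X) → Fin k → Fin n → ((Fin k → X) → X) :=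
      fun p jj i => if i.val ≤ 1 then Tj jj else p with hgvd
    set mstep : ((Fin k → X) → X) → Fin k → ((Fin k → X) → X) :=
      fun p jj => fun x => kthSmallest 2 (fun i : Fin n => gv p jj i x) with hmstepd
    have hmstep_mem : ∀ p jj, p ∈ C k → mstep p jj ∈ C k := by
      intro p jj hp
      refine hC.comp n k _ (gv p jj) hm2 ?_
      intro i
      rw [hgvd]
      dsimp only
      split
      · exact hTj_mem jj
      · exact hp
    have hmstep_val : ∀ p jj (x : Fin k → X), mstep p jj x = min (p x) (Tj jj x) := by
      intro p jj x
      refine ss_min_gadget hn4 (p x) (Tj jj x) _ ?_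
      intro i
      rw [hgvd]
      dsimp only
      by_cases h : (i : Fin n).val ≤ 1
      · rw [if_pos h, if_pos h]
      · rw [if_neg h, if_neg h]
    set final : (Fin k → X) → X := (List.finRange k).foldl mstep (Tj ⟨0, by omega⟩)
      with hfinald
    have hfinal_mem : final ∈ C k := by
      have hgen : ∀ (L : List (Fin k)) (prev), prev ∈ C k → (L.foldl mstep prev) ∈ C k := by
        intro L
        induction L with
        | nil => exact fun prev h => h
        | cons a L ih =>
          intro prev hp
          rw [List.foldl_cons]
          exact ih _ (hmstep_mem prev a hp)
      exact hgen _ _ (hTj_mem _)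
    have hfold_val : ∀ (L : List (Fin k)) prev (x : Fin k → X),
        (L.foldl mstep prev) x = L.foldl (fun v jj => min v (Tj jj x)) (prev x) := by
      intro L
      induction L with
      | nil => exact fun prev x => rfl
      | cons a L ih =>
        intro prev x
        rw [List.foldl_cons, List.foldl_cons, ih, hmstep_val]
    have hfx : ∀ x : Fin k → X, final x = f x := by
      intro x
      obtain ⟨jm, hjm⟩ : ∃ jm : Fin k, ∀ i, x i ≤ x jm := by
        haveI : Nonempty (Fin k) := ⟨⟨0, by omega⟩⟩
        exact Finite.exists_max x
      have hge : ∀ jj, f x ≤ Tj jj x := by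
        intro jj
        by_cases h : ∀ i, x i ≤ x jj
        · rw [hTj_good jj x h]
        · rw [hTj_bad jj x h]
          exact (hF x).le
      rw [hfinald, hfold_val]
      have hub : ∀ (L : List (Fin k)) (v : X), f x ≤ v →
          f x ≤ L.foldl (fun v jj => min v (Tj jj x)) v := by
        intro L
        induction L with
        | nil => exact fun v h => h
        | cons a L ih =>
          intro v hv
          rw [List.foldl_cons]
          exact ih _ (le_min hv (hge a))
      have hle_all : ∀ (L : List (Fin k)) (v : X),
          L.foldl (fun v jj => min v (Tj jj x)) v ≤ v := by
        intro L
        induction L with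
        | nil => exact fun v => le_rfl
        | cons a L ih =>
          intro v
          rw [List.foldl_cons]
          exact le_trans (ih _) (min_le_left _ _)
      have hlb : ∀ (L : List (Fin k)) (v : X), jm ∈ L →
          L.foldl (fun v jj => min v (Tj jj x)) v ≤ Tj jm x := by
        intro L
        induction L with
        | nil => intro v h; exact absurd h List.not_mem_nil
        | cons a L ih =>
          intro v hmem
          rw [List.foldl_cons]
          rcases List.mem_cons.mp hmem with rfl | hmem'
          · exact le_trans (hle_all _ _) (min_le_right _ _)
          · exact ih _ hmem'
      refine le_antisymm ?_ (hub _ _ (hge _))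
      exact le_trans (hlb _ _ (List.mem_finRange jm)) (le_of_eq (hTj_good jm x hjm))
    have hfeq : f = final := funext fun x => (hfx x).symm
    rw [hfeq]
    exact hfinal_mem
end Main

/-- For `1 ≤ k < n`, the `k`-ary part of `M_n` is exactly the set of `k`-ary almost
unary functions: `M_n^(k) = U^(k)`. -/
theorem Mn_kary_eq_almostUnary {X : Type*} [LinearOrder X] [OrderBot X] [WellFoundedLT X]
    (hreg : (#X).IsRegular) (hbdd : ∀ s : Set X, BddAbove s ↔ #s < #X)
    {n k : ℕ} (hk1 : 1 ≤ k) (hkn : k < n) (f : (Fin k → X) → X) :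
    MnMem n f ↔ AlmostUnary f := by
  constructor
  · intro hm
    have hmem := hm (fun j => {f : (Fin j → X) → X | DD n f}) (DD_isClone hbdd n)
      (mn2_DD hbdd (by omega)) (fun h hh => almostUnary_DD hh)
    exact DD_almostUnary hkn hmem
  · intro hau C hC hm2 hT1
    exact mn_backward hreg hbdd hk1 hkn f hau C hC hm2 hT1
end

section
/- Let f : X^n → X be monotone, with all f-wild sets f-insane, and for i ≠ j let f^(i,j) be obtained from f by replacing the i-th argument by the j-th. Then for every f-wild A ⊆ {1,...,n}: if i ∉ A then A is f^(i,j)-insane, and if j ∈ A then A is f^(i,j)-insane. -/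
open Cardinal

/-! Being wild for `a` is unboundedness of the values of `f` on the fibre over `a`, so it
passes from `f` to `g` as soon as every such value of `f` lies below one of `g`. To make
`f^(i,j)` dominate `f` on a fibre we either raise the free coordinate `j` to `max (x i) (x j)`
(when `j ∈ A`), or, when `i, j ∉ A`, read the fibre of `f` over `a` with `a i` replaced by `a j`. -/

open Function

section Dominance

variable {X : Type*} [Preorder X] (hbdd : ∀ s : Set X, BddAbove s ↔ #s < #X) {n : ℕ}
include hbdd

theorem mk_eq_iff_not_bddAbove (s : Set X) : #s = #X ↔ ¬ BddAbove s := by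
  rw [hbdd, not_lt]
  exact ⟨ge_of_eq, (mk_set_le s).antisymm⟩

theorem WildFor.of_dominated {f g : (Fin n → X) → X} {A B : Set (Fin n)} {a b : Fin n → X}
    (h : WildFor f A a)
    (hdom : ∀ x : Fin n → X, (∀ k, k ∉ A → x k = a k) →
      ∃ x' : Fin n → X, (∀ k, k ∉ B → x' k = b k) ∧ f x ≤ g x') :
    WildFor g B b := by
  unfold WildFor at h ⊢
  rw [mk_eq_iff_not_bddAbove hbdd] at h ⊢
  rintro ⟨c, hc⟩
  refine h ⟨c, ?_⟩
  rintro _ ⟨x, hx, rfl⟩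
  obtain ⟨x', hx', hle⟩ := hdom x hx
  exact hle.trans (hc ⟨x', hx', rfl⟩)

end Dominance

section ReplaceArg

variable {X : Type*} [LinearOrder X] (hbdd : ∀ s : Set X, BddAbove s ↔ #s < #X) {n : ℕ}
  {f : (Fin n → X) → X} {A : Set (Fin n)} {a : Fin n → X} {i j : Fin n}
include hbdd

theorem WildFor.replaceArg_of_mem (hmono : Monotone f) (hj : j ∈ A) (h : WildFor f A a) :
    WildFor (fun x => f (update x i (x j))) A a := by
  refine h.of_dominated hbdd fun x hx => ⟨update x j (max (x i) (x j)), fun k hk => ?_, hmono ?_⟩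
  · rw [update_of_ne (ne_of_mem_of_not_mem hj hk).symm, hx k hk]
  · intro k
    rcases eq_or_ne k i with rfl | hki
    · simp
    · rw [update_of_ne hki]
      rcases eq_or_ne k j with rfl | hkj
      · simp
      · rw [update_of_ne hkj]

theorem WildFor.replaceArg_of_not_mem (hi : i ∉ A) (hj : j ∉ A)
    (h : WildFor f A (update a i (a j))) :
    WildFor (fun x => f (update x i (x j))) A a := by
  refine h.of_dominated hbdd fun x hx => ⟨update x i (a i), fun k hk => ?_, le_of_eq ?_⟩
  · rcases eq_or_ne k i with rfl | hki
    · simp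
    · rw [update_of_ne hki, hx k hk, update_of_ne hki]
  · congr 1
    funext k
    rcases eq_or_ne k i with rfl | hki
    · rcases eq_or_ne j k with rfl | hjk
      · simpa using hx j hj
      · have hxj := hx j hj
        rw [update_of_ne hjk] at hxj
        simpa [update_of_ne hjk, hxj] using hx k hi
    · simp [update_of_ne hki]

end ReplaceArg

theorem replace_arg_insane_general {X : Type*} [LinearOrder X]
    (hbdd : ∀ s : Set X, BddAbove s ↔ #s < #X)
    {n : ℕ} (f : (Fin n → X) → X) (hmono : Monotone f)
    (hins : ∀ A : Set (Fin n), Wild f A → Insane f A)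
    (i j : Fin n) (A : Set (Fin n)) (hA : Wild f A) :
    (i ∉ A → Insane (fun x => f (Function.update x i (x j))) A) ∧
    (j ∈ A → Insane (fun x => f (Function.update x i (x j))) A) := by
  have of_mem : j ∈ A → Insane (fun x => f (Function.update x i (x j))) A :=
    fun hj a => (hins A hA a).replaceArg_of_mem hbdd hmono hj
  refine ⟨fun hi a => ?_, of_mem⟩
  by_cases hj : j ∈ A
  · exact of_mem hj a
  · exact (hins A hA _).replaceArg_of_not_mem hbdd hi hj

/-- For monotone `f` all of whose wild sets are insane, and `f^(i,j)` obtained by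
replacing the `i`-th argument by the `j`-th: every `f`-wild `A` is `f^(i,j)`-insane
provided `i ∉ A` or `j ∈ A`. -/
theorem replace_arg_insane {X : Type*} [LinearOrder X] [WellFoundedLT X]
    (hreg : (#X).IsRegular) (hbdd : ∀ s : Set X, BddAbove s ↔ #s < #X)
    {n : ℕ} (f : (Fin n → X) → X) (hmono : Monotone f)
    (hins : ∀ A : Set (Fin n), Wild f A → Insane f A)
    (i j : Fin n) (hij : i ≠ j) (A : Set (Fin n)) (hA : Wild f A) :
    (i ∉ A → Insane (fun x => f (Function.update x i (x j))) A) ∧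
    (j ∈ A → Insane (fun x => f (Function.update x i (x j))) A) :=
  replace_arg_insane_general hbdd f hmono hins i j A hA
end
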